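/- arXiv:1405.1714 — 14 statements merged into one kernel-verified Lean document; each statement's English description precedes it below -/
import Mathlib

section
/- Let M be a commutative, cancellative, atomic monoid and x ∈ M a non-unit. Then ω(x) = sup{ r : u₁⋯u_r is a bullet for x with each u_i irreducible }, where the supremum in ℕ ∪ {∞} is taken over all bullets for x. -/
open Finset

/-- A bullet for `x`: a tuple of irreducible elements whose product is divisible
by `x`, but such that omitting any single entry yields a product no longer
divisible by `x`. -/
def IsBullet {M : Type*} [CommMonoid M] (x : M) {r : ℕ} (u : Fin r → M) : Prop :=
  (∀ i, Irreducible (u i)) ∧ (x ∣ ∏ i, u i) ∧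
    ∀ i : Fin r, ¬ x ∣ ∏ j ∈ Finset.univ.erase i, u j

/-- The set of positive integers `m` such that whenever `x` divides a product of
more than `m` irreducibles, `x` already divides a subproduct of at most `m` of them. -/
def OmegaSet {M : Type*} [CommMonoid M] (x : M) : Set ℕ :=
  {m | 0 < m ∧ ∀ (r : ℕ) (q : Fin r → M), (∀ i, Irreducible (q i)) → m < r →
    x ∣ ∏ i, q i →
    ∃ T : Finset (Fin r), T.card ≤ m ∧ x ∣ ∏ i ∈ T, q i}

/-- The ω-primality of `x`: the smallest such `m`, or `∞` if none exists. -/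
noncomputable def omegaVal {M : Type*} [CommMonoid M] (x : M) : ℕ∞ :=
  sInf ((fun m : ℕ => (m : ℕ∞)) '' OmegaSet x)

lemma bullet_le_of_mem_omegaSet {M : Type*} [CancelCommMonoid M] {x : M} {m : ℕ}
    (hm : m ∈ OmegaSet x) {r : ℕ} {u : Fin r → M} (hu : IsBullet x u) : r ≤ m := by
  by_contra h
  push_neg at h
  obtain ⟨T, hTcard, hTdvd⟩ := hm.2 r u hu.1 h hu.2.1
  have hne : T ≠ univ := by
    intro he
    rw [he, card_univ, Fintype.card_fin] at hTcard
    omega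
  obtain ⟨i, hi⟩ : ∃ i, i ∉ T := by
    by_contra hc
    push_neg at hc
    exact hne (eq_univ_of_forall hc)
  refine hu.2.2 i (hTdvd.trans (Finset.prod_dvd_prod_of_subset _ _ _ ?_))
  intro j hj
  exact mem_erase.mpr ⟨fun he => hi (he ▸ hj), mem_univ j⟩

lemma exists_bullet {M : Type*} [CancelCommMonoid M] {x : M} (hx : ¬IsUnit x)
    {r : ℕ} {q : Fin r → M} (hq : ∀ i, Irreducible (q i)) (hd : x ∣ ∏ i, q i) :
    ∃ T : Finset (Fin r), 0 < T.card ∧ x ∣ ∏ i ∈ T, q i ∧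
      ∃ u : Fin T.card → M, IsBullet x u := by
  set N : Set ℕ := {n | ∃ T : Finset (Fin r), T.card = n ∧ x ∣ ∏ i ∈ T, q i} with hNdef
  have hN : (Finset.univ : Finset (Fin r)).card ∈ N := ⟨univ, rfl, hd⟩
  obtain ⟨T, hTcard, hTdvd⟩ := Nat.sInf_mem ⟨_, hN⟩
  have hmin : ∀ T' : Finset (Fin r), x ∣ ∏ i ∈ T', q i → sInf N ≤ T'.card :=
    fun T' h => Nat.sInf_le ⟨T', rfl, h⟩
  have hpos : 0 < T.card := by
    rcases Nat.eq_zero_or_pos T.card with h0 | h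
    · exfalso
      rw [Finset.card_eq_zero] at h0
      rw [h0, Finset.prod_empty] at hTdvd
      exact hx (isUnit_of_dvd_one hTdvd)
    · exact h
  set u : Fin T.card → M := fun j => q ((T.equivFin.symm j : T) : Fin r) with hu
  have hprod : ∏ j, u j = ∏ i ∈ T, q i := by
    rw [← Finset.prod_coe_sort T q]
    exact Equiv.prod_comp T.equivFin.symm (fun i : T => q (i : Fin r))
  refine ⟨T, hpos, hTdvd, u, fun j => hq _, hprod ▸ hTdvd, fun j hdvd => ?_⟩
  set i0 : T := T.equivFin.symm j with hi0
  have h1 : u j * ∏ k ∈ univ.erase j, u k = ∏ k, u k :=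
    Finset.mul_prod_erase univ u (mem_univ j)
  have h2 : q (i0 : Fin r) * ∏ k ∈ T.erase (i0 : Fin r), q k = ∏ k ∈ T, q k :=
    Finset.mul_prod_erase T q i0.2
  have key : ∏ k ∈ univ.erase j, u k = ∏ k ∈ T.erase (i0 : Fin r), q k := by
    have : u j * ∏ k ∈ univ.erase j, u k = u j * ∏ k ∈ T.erase (i0 : Fin r), q k := by
      rw [h1, hprod, ← h2]
    exact mul_left_cancel this
  rw [key] at hdvd
  have hle := hmin _ hdvd
  rw [Finset.card_erase_of_mem i0.2, hTcard] at hle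
  omega

/-- In a commutative, cancellative, atomic monoid, `ω(x)` is the supremum of the
lengths of the bullets for `x`. -/
theorem omega_eq_sup_bullet_lengths {M : Type*} [CancelCommMonoid M]
    (hatomic : ∀ y : M, ¬IsUnit y → ∃ (r : ℕ) (u : Fin r → M),
      (∀ i, Irreducible (u i)) ∧ y = ∏ i, u i)
    (x : M) (hx : ¬IsUnit x) :
    omegaVal x = ⨆ (r : ℕ) (_ : ∃ u : Fin r → M, IsBullet x u), (r : ℕ∞) := by
  set S := ⨆ (r : ℕ) (_ : ∃ u : Fin r → M, IsBullet x u), (r : ℕ∞) with hS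
  have h1 : S ≤ omegaVal x := by
    refine le_sInf ?_
    rintro b ⟨m, hm, rfl⟩
    refine iSup_le fun r => iSup_le fun hex => ?_
    obtain ⟨u, hu⟩ := hex
    show (r : ℕ∞) ≤ (m : ℕ∞)
    exact Nat.cast_le.mpr (bullet_le_of_mem_omegaSet hm hu)
  refine le_antisymm ?_ h1
  rcases eq_or_ne S ⊤ with htop | hfin
  · rw [htop]; exact le_top
  obtain ⟨s, hs⟩ := WithTop.ne_top_iff_exists.mp hfin
  have hbound : ∀ {r : ℕ} {u : Fin r → M}, IsBullet x u → r ≤ s := by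
    intro r u hu
    have hle : (r : ℕ∞) ≤ S :=
      le_iSup_of_le r (le_iSup_of_le ⟨u, hu⟩ le_rfl)
    rw [← hs] at hle
    exact Nat.cast_le.mp hle
  have hspos : 0 < s := by
    obtain ⟨r0, u0, hu0, hx0⟩ := hatomic x hx
    have hd0 : x ∣ ∏ i, u0 i := hx0 ▸ dvd_refl x
    obtain ⟨T0, hT0pos, hT0dvd, u0', hu0'⟩ := exists_bullet hx hu0 hd0
    have := hbound hu0'
    omega
  have hmem : s ∈ OmegaSet x := by
    refine ⟨hspos, fun r qf hqf hlt hd => ?_⟩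
    obtain ⟨T, hTpos, hTdvd, u, hu⟩ := exists_bullet hx hqf hd
    exact ⟨T, hbound hu, hTdvd⟩
  calc omegaVal x ≤ (s : ℕ∞) := sInf_le ⟨s, hmem, rfl⟩
    _ = S := hs
end

section
/- Let M be a commutative, cancellative, atomic monoid. The ω-function is subadditive: for all non-units x, y ∈ M, ω(xy) ≤ ω(x) + ω(y) (with the convention that the inequality holds trivially when either side is infinite). -/
open Finset

theorem mem_omegaSet_mul {M : Type*} [CancelCommMonoid M]
    (hatomic : ∀ y : M, ¬IsUnit y → ∃ (r : ℕ) (u : Fin r → M),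
      (∀ i, Irreducible (u i)) ∧ y = ∏ i, u i)
    {x y : M} {m n : ℕ} (hm : (0 < m ∧ ∀ (r : ℕ) (q : Fin r → M), (∀ i, Irreducible (q i)) → m < r →
    x ∣ ∏ i, q i → ∃ T : Finset (Fin r), T.card ≤ m ∧ x ∣ ∏ i ∈ T, q i))
    (hn : (0 < n ∧ ∀ (r : ℕ) (q : Fin r → M), (∀ i, Irreducible (q i)) → n < r →
    y ∣ ∏ i, q i → ∃ T : Finset (Fin r), T.card ≤ n ∧ y ∣ ∏ i ∈ T, q i)) :
    (0 < m + n ∧ ∀ (r : ℕ) (q : Fin r → M), (∀ i, Irreducible (q i)) → m + n < r →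
    x * y ∣ ∏ i, q i → ∃ T : Finset (Fin r), T.card ≤ m + n ∧ x * y ∣ ∏ i ∈ T, q i) := by
  obtain ⟨hm0, hmP⟩ := hm
  obtain ⟨hn0, hnP⟩ := hn
  refine ⟨by omega, ?_⟩
  intro r q hq hr hdvd
  have hxd : x ∣ ∏ i, q i := (dvd_mul_right x y).trans hdvd
  obtain ⟨T, hTc, a, ha⟩ := hmP r q hq (by omega) hxd
  have hsplit : (∏ i ∈ T, q i) * ∏ i ∈ Tᶜ, q i = ∏ i, q i :=
    Finset.prod_mul_prod_compl T q
  have hyd : y ∣ a * ∏ i ∈ Tᶜ, q i := by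
    obtain ⟨c, hc⟩ := hdvd
    refine ⟨c, mul_left_cancel (a := x) ?_⟩
    calc x * (a * ∏ i ∈ Tᶜ, q i) = (x * a) * ∏ i ∈ Tᶜ, q i := (mul_assoc _ _ _).symm
      _ = ∏ i, q i := by rw [← ha, hsplit]
      _ = x * (y * c) := by rw [hc, mul_assoc]
  set k := Tᶜ.card with hk
  have hkn : n < k := by
    have h1 : Tᶜ.card = r - T.card := by simp [Finset.card_compl]
    have h2 : T.card ≤ r := T.card_le_univ.trans_eq (by simp)
    omega
  set f : Fin k ↪o Fin r := Tᶜ.orderEmbOfFin rfl with hf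
  have hfmem : ∀ i, f i ∈ Tᶜ := fun i => Tᶜ.orderEmbOfFin_mem rfl i
  have hprodf : ∏ i : Fin k, q (f i) = ∏ i ∈ Tᶜ, q i := by
    rw [← Finset.prod_image (g := fun i : Fin k => f i) (f := q)
      (fun i _ j _ h => f.injective h)]
    congr 1
    apply Finset.eq_of_subset_of_card_le
    · intro j hj
      simp only [Finset.mem_image] at hj
      obtain ⟨i, _, rfl⟩ := hj
      exact hfmem i
    · rw [Finset.card_image_of_injective _ f.injective]
      simpa using hk.ge
  -- Key: find S ⊆ Tᶜ with card ≤ n and y ∣ a * ∏_S q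
  have key : ∃ S : Finset (Fin r), S ⊆ Tᶜ ∧ S.card ≤ n ∧ y ∣ a * ∏ i ∈ S, q i := by
    by_cases hua : IsUnit a
    · -- a is a unit: y ∣ ∏_{Tᶜ} q
      have hyd' : y ∣ ∏ i : Fin k, q (f i) := by
        rw [hprodf]; exact (hua.dvd_mul_left).mp hyd
      obtain ⟨S', hS'c, hS'd⟩ := hnP k (fun i => q (f i)) (fun i => hq (f i)) hkn hyd'
      refine ⟨S'.image (fun i => f i), ?_, ?_, ?_⟩
      · intro j hj
        simp only [Finset.mem_image] at hj
        obtain ⟨i, _, rfl⟩ := hj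
        exact hfmem i
      · rw [Finset.card_image_of_injective _ f.injective]; exact hS'c
      · exact Dvd.dvd.mul_left (by rwa [Finset.prod_image (fun i _ j _ h => f.injective h)]) a
    · obtain ⟨s, u, hu, hau⟩ := hatomic a hua
      set w : Fin (s + k) → M := Fin.append u (fun i => q (f i)) with hw
      have hwirr : ∀ i : Fin (s + k), Irreducible (w i) := by
        intro i
        induction i using Fin.addCases with
        | left j => rw [hw, Fin.append_left]; exact hu j
        | right j => rw [hw, Fin.append_right]; exact hq _
      have hwprod : ∏ i, w i = a * ∏ i ∈ Tᶜ, q i := by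
        rw [Fin.prod_univ_add]
        simp only [hw, Fin.append_left, Fin.append_right]
        rw [← hau, hprodf]
      obtain ⟨S', hS'c, hS'd⟩ := hnP (s + k) w hwirr (by omega) (by rw [hwprod]; exact hyd)
      set L := S'.filter (fun i : Fin (s + k) => (i : ℕ) < s) with hL
      set R := S'.filter (fun i : Fin (s + k) => ¬ (i : ℕ) < s) with hR
      have hLR : (∏ i ∈ L, w i) * ∏ i ∈ R, w i = ∏ i ∈ S', w i :=
        Finset.prod_filter_mul_prod_filter_not S' _ w
      -- the left part divides a
      have hLa : (∏ i ∈ L, w i) ∣ a := by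
        have hsub : L ⊆ Finset.univ.image (Fin.castAdd k) := by
          intro i hi
          rw [hL, Finset.mem_filter] at hi
          exact Finset.mem_image.mpr ⟨⟨(i : ℕ), hi.2⟩, Finset.mem_univ _, by ext; simp⟩
        refine (Finset.prod_dvd_prod_of_subset _ _ w hsub).trans ?_
        rw [Finset.prod_image (fun i _ j _ h =>
          Fin.ext (by simpa using congrArg Fin.val h))]
        rw [hau]
        apply dvd_of_eq
        exact Finset.prod_congr rfl fun j _ => by rw [hw, Fin.append_left]
      -- the right part is a product over a subset of Tᶜ
      set g : Fin (s + k) → Fin k := fun i => ⟨(i : ℕ) - s, by have := i.isLt; omega⟩ with hg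
      have hRg : ∀ i ∈ R, s ≤ (i : ℕ) := by
        intro i hi
        rw [hR, Finset.mem_filter] at hi
        omega
      have hginj : ∀ i₁ ∈ R, ∀ i₂ ∈ R, g i₁ = g i₂ → i₁ = i₂ := by
        intro i₁ h₁ i₂ h₂ h
        have := congrArg Fin.val h
        simp only [hg] at this
        have e₁ := hRg i₁ h₁; have e₂ := hRg i₂ h₂
        exact Fin.ext (by omega)
      set S : Finset (Fin r) := (R.image g).image (fun j => (f j : Fin r)) with hS
      have hprodR : ∏ i ∈ S, q i = ∏ i ∈ R, w i := by
        rw [hS, Finset.prod_image (fun i _ j _ h => f.injective h),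
          Finset.prod_image hginj]
        apply Finset.prod_congr rfl
        intro i hi
        have his := hRg i hi
        have h2 : i = Fin.natAdd s (g i) := Fin.ext (by simp [hg]; omega)
        conv_rhs => rw [h2, hw, Fin.append_right]
      refine ⟨S, ?_, ?_, ?_⟩
      · intro j hj
        rw [hS] at hj
        simp only [Finset.mem_image] at hj
        obtain ⟨i, _, rfl⟩ := hj
        exact hfmem i
      · calc S.card ≤ (R.image g).card := Finset.card_image_le
          _ ≤ R.card := Finset.card_image_le
          _ ≤ S'.card := Finset.card_le_card (Finset.filter_subset _ _)
          _ ≤ n := hS'c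
      · refine hS'd.trans ?_
        rw [← hLR, hprodR]
        exact mul_dvd_mul hLa dvd_rfl
  obtain ⟨S, hST, hSc, hSd⟩ := key
  refine ⟨T ∪ S, ?_, ?_⟩
  · calc (T ∪ S).card ≤ T.card + S.card := Finset.card_union_le T S
      _ ≤ m + n := Nat.add_le_add hTc hSc
  · have hdisj : Disjoint T S := Finset.disjoint_right.mpr fun i hi =>
      Finset.mem_compl.mp (hST hi)
    rw [Finset.prod_union hdisj, ha]
    obtain ⟨c, hc⟩ := hSd
    exact ⟨c, by rw [mul_assoc, hc, ← mul_assoc]⟩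

/-- The ω-function is subadditive: `ω(xy) ≤ ω(x) + ω(y)` for non-units `x, y`
in a commutative, cancellative, atomic monoid (in `ℕ∞`, so the inequality is
trivial when a side is infinite). -/
theorem omega_subadditive {M : Type*} [CancelCommMonoid M]
    (hatomic : ∀ y : M, ¬IsUnit y → ∃ (r : ℕ) (u : Fin r → M),
      (∀ i, Irreducible (u i)) ∧ y = ∏ i, u i)
    (x y : M) (hx : ¬IsUnit x) (hy : ¬IsUnit y) :
    omegaVal (x * y) ≤ omegaVal x + omegaVal y := by
  by_cases hX : (OmegaSet x).Nonempty
  · by_cases hY : (OmegaSet y).Nonempty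
    · set m := sInf (OmegaSet x) with hm
      have hmmem : m ∈ OmegaSet x := Nat.sInf_mem hX
      set n := sInf (OmegaSet y) with hn
      have hnmem : n ∈ OmegaSet y := Nat.sInf_mem hY
      have hmn : m + n ∈ OmegaSet (x * y) := mem_omegaSet_mul hatomic hmmem hnmem
      calc omegaVal (x * y) ≤ ((m + n : ℕ) : ℕ∞) := sInf_le ⟨m + n, hmn, rfl⟩
        _ = (m : ℕ∞) + (n : ℕ∞) := by push_cast; rfl
        _ ≤ omegaVal x + omegaVal y := by
            refine add_le_add (le_sInf ?_) (le_sInf ?_)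
            · rintro b ⟨a, haa, rfl⟩
              simpa using (Nat.cast_le (α := ℕ∞)).mpr (Nat.sInf_le haa)
            · rintro b ⟨a, haa, rfl⟩
              simpa using (Nat.cast_le (α := ℕ∞)).mpr (Nat.sInf_le haa)
    · have : omegaVal y = ⊤ := by
        rw [omegaVal, Set.not_nonempty_iff_eq_empty.mp hY]
        simp
      rw [this, add_top]
      exact le_top
  · have : omegaVal x = ⊤ := by
      rw [omegaVal, Set.not_nonempty_iff_eq_empty.mp hX]
      simp
    rw [this, top_add]
    exact le_top
end

section
/- Let M be a commutative, cancellative, atomic monoid, let p ∈ M be a prime element, and let x ∈ M be a non-unit. Then ω(px) = ω(x) + 1 (with the convention ∞ + 1 = ∞). -/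
open Finset

section Aux
variable {M : Type*} [CancelCommMonoid M]

theorem my_mul_dvd_left (a b c : M) : a * b ∣ a * c ↔ b ∣ c := by
  constructor
  · rintro ⟨d, hd⟩
    exact ⟨d, mul_left_cancel (by rw [hd, mul_assoc])⟩
  · rintro ⟨d, hd⟩
    exact ⟨d, by rw [hd, mul_assoc]⟩

theorem prime_two {p : M}
    (hp_prime : ∀ (r : ℕ) (q : Fin r → M), p ∣ ∏ i, q i → ∃ i, p ∣ q i)
    (a b : M) (h : p ∣ a * b) : p ∣ a ∨ p ∣ b := by
  obtain ⟨i, hi⟩ := hp_prime 2 ![a, b] (by rwa [Fin.prod_univ_two])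
  fin_cases i
  · exact Or.inl hi
  · exact Or.inr hi

theorem prime_finset {p : M} (hp_unit : ¬IsUnit p)
    (hp_prime : ∀ (r : ℕ) (q : Fin r → M), p ∣ ∏ i, q i → ∃ i, p ∣ q i)
    {ι : Type*} [DecidableEq ι] (S : Finset ι) (q : ι → M) (h : p ∣ ∏ i ∈ S, q i) :
    ∃ i ∈ S, p ∣ q i := by
  induction S using Finset.induction with
  | empty => exact absurd (isUnit_of_dvd_one (by simpa using h)) hp_unit
  | insert _ _ hnot ih =>
    rename_i a s
    rw [Finset.prod_insert hnot] at h
    rcases prime_two hp_prime _ _ h with h1 | h2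
    · exact ⟨a, Finset.mem_insert_self a s, h1⟩
    · obtain ⟨i, hi, hd⟩ := ih h2
      exact ⟨i, Finset.mem_insert_of_mem hi, hd⟩

theorem prime_irred {p : M} (hp_unit : ¬IsUnit p)
    (hp_prime : ∀ (r : ℕ) (q : Fin r → M), p ∣ ∏ i, q i → ∃ i, p ∣ q i) :
    Irreducible p := by
  refine ⟨hp_unit, fun a b hab => ?_⟩
  rcases prime_two hp_prime a b (hab ▸ dvd_refl p) with ⟨c, hc⟩ | ⟨c, hc⟩
  · right
    have h1 : p * 1 = p * (c * b) := by
      rw [mul_one, ← mul_assoc, ← hc, ← hab]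
    exact IsUnit.of_mul_eq_one (a := b) c (by rw [mul_comm]; exact (mul_left_cancel h1).symm)
  · left
    have h1 : p * 1 = p * (c * a) := by
      rw [mul_one]
      calc p = a * b := hab
        _ = a * (p * c) := by rw [hc]
        _ = p * (c * a) := by rw [mul_comm a, mul_assoc]
    exact IsUnit.of_mul_eq_one (a := a) c (by rw [mul_comm]; exact (mul_left_cancel h1).symm)

/-- A unit times the divisor can be dropped. -/
theorem unit_factor {p : M} (hp_unit : ¬IsUnit p) {y c : M}
    (hy : Irreducible y) (hc : y = p * c) : IsUnit c :=
  (hy.isUnit_or_isUnit hc).resolve_left hp_unit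

theorem not_pmul_dvd_irred {p x : M} (hp_unit : ¬IsUnit p) (hx : ¬IsUnit x)
    {y : M} (hy : Irreducible y) : ¬ p * x ∣ y := by
  rintro ⟨c, hc⟩
  rw [mul_assoc] at hc
  rcases hy.isUnit_or_isUnit hc with h | h
  · exact hp_unit h
  · exact hx (isUnit_of_mul_isUnit_left h)

theorem omega_subset {x : M} {m : ℕ} (hm : m ∈ OmegaSet x)
    {ι : Type*} [DecidableEq ι] (S : Finset ι) (q : ι → M)
    (hq : ∀ i ∈ S, Irreducible (q i)) (hcard : m < S.card)
    (hdvd : x ∣ ∏ i ∈ S, q i) :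
    ∃ T : Finset ι, T ⊆ S ∧ T.card ≤ m ∧ x ∣ ∏ i ∈ T, q i := by
  set e := S.equivFin
  set q' : Fin S.card → M := fun j => q (e.symm j) with hq'
  have hprod : ∏ j, q' j = ∏ i ∈ S, q i := by
    rw [hq']
    rw [Equiv.prod_comp e.symm (fun i : S => q i)]
    exact Finset.prod_coe_sort S q
  obtain ⟨T', hT'card, hT'dvd⟩ := hm.2 S.card q'
    (fun j => hq _ (e.symm j).2) hcard (hprod ▸ hdvd)
  refine ⟨T'.image (fun j => (e.symm j : ι)), ?_, ?_, ?_⟩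
  · intro i hi
    simp only [Finset.mem_image] at hi
    obtain ⟨j, _, rfl⟩ := hi
    exact (e.symm j).2
  · exact (Finset.card_image_le).trans hT'card
  · rwa [Finset.prod_image (fun a _ b _ h => by
      exact e.symm.injective (Subtype.coe_injective h))]

theorem shiftUp {p : M} (hp_unit : ¬IsUnit p)
    (hp_prime : ∀ (r : ℕ) (q : Fin r → M), p ∣ ∏ i, q i → ∃ i, p ∣ q i)
    {x : M} {m : ℕ} (hm : m ∈ OmegaSet x) : m + 1 ∈ OmegaSet (p * x) := by
  refine ⟨Nat.succ_pos m, fun r q hqirr hr hdvd => ?_⟩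
  obtain ⟨i, c, hc⟩ := hp_prime r q (dvd_trans (dvd_mul_right p x) hdvd)
  have hcu : IsUnit c := unit_factor hp_unit (hqirr i) hc
  have hsplit : ∏ j, q j = q i * ∏ j ∈ Finset.univ.erase i, q j :=
    (Finset.mul_prod_erase Finset.univ q (Finset.mem_univ i)).symm
  have hxdvd : x ∣ ∏ j ∈ Finset.univ.erase i, q j := by
    have : p * x ∣ p * (c * ∏ j ∈ Finset.univ.erase i, q j) := by
      rwa [← mul_assoc, ← hc, ← hsplit]
    exact (hcu.dvd_mul_left).mp ((my_mul_dvd_left p x _).mp this)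
  have hcard : m < (Finset.univ.erase i).card := by
    rw [Finset.card_erase_of_mem (Finset.mem_univ i), Finset.card_univ, Fintype.card_fin]
    omega
  obtain ⟨T, hTs, hTcard, hTdvd⟩ :=
    omega_subset hm (Finset.univ.erase i) q (fun j _ => hqirr j) hcard hxdvd
  have hiT : i ∉ T := fun h => (Finset.ne_of_mem_erase (hTs h)) rfl
  refine ⟨insert i T, ?_, ?_⟩
  · exact (Finset.card_insert_le i T).trans (Nat.succ_le_succ hTcard)
  · rw [Finset.prod_insert hiT, hc, mul_assoc]
    exact mul_dvd_mul_left p ((hcu.dvd_mul_left).mpr hTdvd)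

theorem one_notin {p x : M} (hp_unit : ¬IsUnit p)
    (hp_prime : ∀ (r : ℕ) (q : Fin r → M), p ∣ ∏ i, q i → ∃ i, p ∣ q i)
    (hatomic : ∀ y : M, ¬IsUnit y → ∃ (r : ℕ) (u : Fin r → M),
      (∀ i, Irreducible (u i)) ∧ y = ∏ i, u i)
    (hx : ¬IsUnit x) : 1 ∉ OmegaSet (p * x) := by
  obtain ⟨s, u, huirr, hu⟩ := hatomic x hx
  have hs : 0 < s := by
    rcases Nat.eq_zero_or_pos s with h | h
    · subst h
      exact absurd (show IsUnit x by rw [hu]; simp) hx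
    · exact h
  rintro ⟨-, h⟩
  have hpirr := prime_irred hp_unit hp_prime
  obtain ⟨T, hTcard, hTdvd⟩ := h (s + 1) (Fin.cons p u)
    (fun i => by
      refine Fin.cases ?_ ?_ i
      · simpa using hpirr
      · intro j; simpa using huirr j)
    (by omega)
    (by rw [Fin.prod_cons, ← hu])
  rcases T.eq_empty_or_nonempty with rfl | ⟨i, hi⟩
  · simp only [Finset.prod_empty] at hTdvd
    exact hp_unit (isUnit_of_mul_isUnit_left (isUnit_of_dvd_one hTdvd))
  · have h1 : T.card = 1 := le_antisymm hTcard (Finset.card_pos.mpr ⟨i, hi⟩)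
    obtain ⟨a, rfl⟩ := Finset.card_eq_one.mp h1
    rw [Finset.prod_singleton] at hTdvd
    refine not_pmul_dvd_irred hp_unit hx ?_ hTdvd
    refine Fin.cases ?_ ?_ a
    · simpa using hpirr
    · intro j; simpa using huirr j

theorem succ_image {r : ℕ} (T : Finset (Fin (r + 1))) :
    (Finset.univ.filter (fun j : Fin r => j.succ ∈ T)).image Fin.succ = T.erase 0 := by
  ext i
  simp only [Finset.mem_image, Finset.mem_filter, Finset.mem_univ, true_and,
    Finset.mem_erase]
  constructor
  · rintro ⟨j, hj, rfl⟩
    exact ⟨Fin.succ_ne_zero j, hj⟩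
  · rintro ⟨h0, hT⟩
    exact ⟨i.pred h0, by rwa [Fin.succ_pred], Fin.succ_pred i h0⟩

theorem shiftDown {p : M} (hp_unit : ¬IsUnit p)
    (hp_prime : ∀ (r : ℕ) (q : Fin r → M), p ∣ ∏ i, q i → ∃ i, p ∣ q i)
    {x : M} {k : ℕ} (hk2 : 2 ≤ k) (hk : k ∈ OmegaSet (p * x)) :
    k - 1 ∈ OmegaSet x := by
  refine ⟨by omega, fun r q hqirr hr hdvd => ?_⟩
  have hpirr := prime_irred hp_unit hp_prime
  set q' : Fin (r + 1) → M := Fin.cons p q with hq'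
  have hq'irr : ∀ i, Irreducible (q' i) := fun i => by
    refine Fin.cases ?_ ?_ i
    · simpa [hq'] using hpirr
    · intro j; simpa [hq'] using hqirr j
  obtain ⟨T, hTcard, hTdvd⟩ := hk.2 (r + 1) q' hq'irr (by omega)
    (by rw [hq', Fin.prod_cons]; exact mul_dvd_mul_left p hdvd)
  set T₁ : Finset (Fin r) := Finset.univ.filter (fun j => j.succ ∈ T) with hT₁
  have himg : T₁.image Fin.succ = T.erase 0 := succ_image T
  have hT₁card : T₁.card = (T.erase 0).card := by
    rw [← himg, Finset.card_image_of_injective _ (Fin.succ_injective r)]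
  have hT₁prod : ∏ j ∈ T₁, q j = ∏ i ∈ T.erase 0, q' i := by
    rw [← himg, Finset.prod_image (fun a _ b _ h => Fin.succ_injective r h)]
    exact Finset.prod_congr rfl (fun j _ => by simp [hq'])
  by_cases h0 : (0 : Fin (r + 1)) ∈ T
  · -- p is among the chosen factors
    have : ∏ i ∈ T, q' i = p * ∏ j ∈ T₁, q j := by
      rw [hT₁prod, ← Finset.mul_prod_erase T q' h0]
      simp [hq']
    rw [this] at hTdvd
    refine ⟨T₁, ?_, (my_mul_dvd_left p x _).mp hTdvd⟩
    rw [hT₁card, Finset.card_erase_of_mem h0]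
    omega
  · have hTe : T.erase 0 = T := Finset.erase_eq_of_notMem h0
    rw [hTe] at hT₁card hT₁prod
    rw [← hT₁prod] at hTdvd
    have hxT : x ∣ ∏ j ∈ T₁, q j := dvd_trans (dvd_mul_left x p) hTdvd
    by_cases hc : T₁.card ≤ k - 1
    · exact ⟨T₁, hc, hxT⟩
    · obtain ⟨j, hj, c, hjc⟩ := prime_finset hp_unit hp_prime T₁ q
        (dvd_trans (dvd_mul_right p x) hTdvd)
      have hcu : IsUnit c := unit_factor hp_unit (hqirr j) hjc
      have hsplit : ∏ i ∈ T₁, q i = p * (c * ∏ i ∈ T₁.erase j, q i) := by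
        rw [← Finset.mul_prod_erase T₁ q hj, hjc, mul_assoc]
      rw [hsplit] at hTdvd
      refine ⟨T₁.erase j, ?_, (hcu.dvd_mul_left).mp ((my_mul_dvd_left p x _).mp hTdvd)⟩
      rw [Finset.card_erase_of_mem hj]
      omega

end Aux

/-- If `p` is prime (a non-unit dividing some factor of any product it divides)
and `x` a non-unit in a commutative, cancellative, atomic monoid, then
`ω(px) = ω(x) + 1` (in `ℕ∞`, so `∞ + 1 = ∞`). -/
theorem omega_mul_prime {M : Type*} [CancelCommMonoid M]
    (hatomic : ∀ y : M, ¬IsUnit y → ∃ (r : ℕ) (u : Fin r → M),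
      (∀ i, Irreducible (u i)) ∧ y = ∏ i, u i)
    (p : M) (hp_unit : ¬IsUnit p)
    (hp_prime : ∀ (r : ℕ) (q : Fin r → M), p ∣ ∏ i, q i → ∃ i, p ∣ q i)
    (x : M) (hx : ¬IsUnit x) :
    omegaVal (p * x) = omegaVal x + 1 := by
  have hBA : ∀ k ∈ OmegaSet (p * x), 2 ≤ k ∧ k - 1 ∈ OmegaSet x := by
    intro k hk
    have hk2 : 2 ≤ k := by
      rcases Nat.lt_or_ge k 2 with h | h
      · interval_cases k
        · exact absurd hk.1 (lt_irrefl 0)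
        · exact absurd hk (one_notin hp_unit hp_prime hatomic hx)
      · exact h
    exact ⟨hk2, shiftDown hp_unit hp_prime hk2 hk⟩
  rcases Set.eq_empty_or_nonempty (OmegaSet x) with hA | hA
  · have hB : OmegaSet (p * x) = ∅ := by
      rw [Set.eq_empty_iff_forall_notMem]
      intro k hk
      exact Set.eq_empty_iff_forall_notMem.mp hA _ (hBA k hk).2
    rw [omegaVal, omegaVal, hA, hB]
    simp
  · set n := sInf (OmegaSet x) with hn
    have hnA : n ∈ OmegaSet x := Nat.sInf_mem hA
    have hx_eq : omegaVal x = (n : ℕ∞) := by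
      apply le_antisymm
      · exact sInf_le ⟨n, hnA, rfl⟩
      · refine le_sInf ?_
        rintro b ⟨a, ha, rfl⟩
        show (n : ℕ∞) ≤ (a : ℕ∞)
        exact_mod_cast Nat.sInf_le ha
    have hpx_eq : omegaVal (p * x) = ((n + 1 : ℕ) : ℕ∞) := by
      apply le_antisymm
      · exact sInf_le ⟨n + 1, shiftUp hp_unit hp_prime hnA, rfl⟩
      · refine le_sInf ?_
        rintro b ⟨k, hk, rfl⟩
        obtain ⟨hk2, hkA⟩ := hBA k hk
        have : n ≤ k - 1 := Nat.sInf_le hkA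
        show ((n + 1 : ℕ) : ℕ∞) ≤ (k : ℕ∞)
        exact_mod_cast by omega
    rw [hpx_eq, hx_eq]
    push_cast
    rfl
end

section
/- In the multiplicative monoid ℕ* of positive integers, the ω-value of any positive integer n > 1 equals the length of the prime factorization of n, i.e., ω(n) = Ω(n), the number of prime factors of n counted with multiplicity. -/
open Finset

lemma pnat_coe_prod {ι : Type*} (T : Finset ι) (q : ι → ℕ+) :
    ((∏ i ∈ T, q i : ℕ+) : ℕ) = ∏ i ∈ T, (q i : ℕ) := by
  simp [← PNat.coe_coeMonoidHom, map_prod]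

lemma pnat_isUnit_iff {x : ℕ+} : IsUnit x ↔ x = 1 := by
  constructor
  · intro h
    have h1 : x ∣ (1 : ℕ+) := h.dvd
    exact PNat.coe_eq_one_iff.mp (Nat.dvd_one.mp (PNat.dvd_iff.mp h1))
  · rintro rfl; exact isUnit_one

lemma pnat_irreducible_iff {u : ℕ+} : Irreducible u ↔ (u : ℕ).Prime := by
  constructor
  · intro h
    rw [← Nat.irreducible_iff_nat_prime]
    constructor
    · rw [Nat.isUnit_iff, PNat.coe_eq_one_iff]
      exact fun h1 => h.not_isUnit (h1 ▸ isUnit_one)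
    · intro a b hab
      have hab0 : a * b ≠ 0 := hab ▸ u.pos.ne'
      have ha : 0 < a := Nat.pos_of_ne_zero fun h0 => hab0 (by simp [h0])
      have hb : 0 < b := Nat.pos_of_ne_zero fun h0 => hab0 (by simp [h0])
      have hu : u = (⟨a, ha⟩ : ℕ+) * (⟨b, hb⟩ : ℕ+) := PNat.eq (by
        exact hab)
      rcases h.isUnit_or_isUnit hu with hA | hB
      · left
        rw [Nat.isUnit_iff]
        have := pnat_isUnit_iff.mp hA
        exact congrArg PNat.val this
      · right
        rw [Nat.isUnit_iff]
        have := pnat_isUnit_iff.mp hB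
        exact congrArg PNat.val this
  · intro hp
    constructor
    · rw [pnat_isUnit_iff]
      rintro rfl; simpa using hp.ne_one
    · intro a b hab
      rw [pnat_isUnit_iff, pnat_isUnit_iff, ← PNat.coe_eq_one_iff, ← PNat.coe_eq_one_iff]
      have h1 : (u : ℕ) = (a : ℕ) * (b : ℕ) := by rw [hab]; simp
      rcases hp.eq_one_or_self_of_dvd (a : ℕ) ⟨b, h1⟩ with h2 | h2
      · exact Or.inl h2
      · right
        have hb := b.pos
        have ha := a.pos
        nlinarith [h1, h2]

lemma pnat_omega_one {n : ℕ+} (h : (n : ℕ).primeFactorsList.length = 0) : n = 1 := by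
  have h2 := Nat.prod_primeFactorsList n.pos.ne'
  rw [List.length_eq_zero_iff.mp h] at h2
  exact PNat.coe_eq_one_iff.mp h2.symm

lemma upper_key (k : ℕ) : ∀ (n : ℕ+), (n : ℕ).primeFactorsList.length = k →
    ∀ (r : ℕ) (q : Fin r → ℕ+), (∀ i, ((q i : ℕ)).Prime) →
    ∀ S : Finset (Fin r), n ∣ ∏ i ∈ S, q i →
    ∃ T ⊆ S, T.card ≤ k ∧ n ∣ ∏ i ∈ T, q i := by
  induction k with
  | zero =>
    intro n hn r q hq S _
    exact ⟨∅, empty_subset _, by simp, by simp [pnat_omega_one hn]⟩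
  | succ k ih =>
    intro n hn r q hq S hdvd
    have hn1 : n ≠ 1 := by
      rintro rfl; simp at hn
    obtain ⟨p, hp, hpn⟩ := PNat.exists_prime_and_dvd hn1
    obtain ⟨m, rfl⟩ := hpn
    have hm : (m : ℕ).primeFactorsList.length = k := by
      have hperm := (Nat.perm_primeFactorsList_mul p.pos.ne' m.pos.ne').length_eq
      rw [List.length_append, Nat.primeFactorsList_prime hp] at hperm
      rw [PNat.mul_coe] at hn
      simp only [hperm, List.length_cons, List.length_nil] at hn
      omega
    have hcoe : (p : ℕ) ∣ ∏ i ∈ S, (q i : ℕ) := by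
      rw [← pnat_coe_prod]
      exact PNat.dvd_iff.mp (dvd_trans (dvd_mul_right p m) hdvd)
    obtain ⟨i₀, hi₀S, hpi⟩ := hp.prime.exists_mem_finset_dvd hcoe
    have hqp : q i₀ = p := PNat.eq ((Nat.prime_dvd_prime_iff_eq hp (hq i₀)).mp hpi).symm
    have hm' : m ∣ ∏ i ∈ S.erase i₀, q i := by
      rw [PNat.dvd_iff]
      have h1 : (∏ i ∈ S, q i) = q i₀ * ∏ i ∈ S.erase i₀, q i :=
        (Finset.mul_prod_erase S q hi₀S).symm
      rw [h1, hqp] at hdvd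
      have h2 : (p : ℕ) * (m : ℕ) ∣ (p : ℕ) * ((∏ i ∈ S.erase i₀, q i : ℕ+) : ℕ) := by
        have := PNat.dvd_iff.mp hdvd
        simpa using this
      exact (Nat.mul_dvd_mul_iff_left p.pos).mp h2
    obtain ⟨T, hTsub, hTcard, hTdvd⟩ := ih m hm r q hq (S.erase i₀) hm'
    have hnotT : i₀ ∉ T := fun h => (Finset.mem_erase.mp (hTsub h)).1 rfl
    refine ⟨insert i₀ T, ?_, ?_, ?_⟩
    · intro x hx
      rcases Finset.mem_insert.mp hx with rfl | hx
      · exact hi₀S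
      · exact (Finset.erase_subset _ _) (hTsub hx)
    · rw [Finset.card_insert_of_notMem hnotT]; omega
    · rw [Finset.prod_insert hnotT, hqp]
      exact mul_dvd_mul_left p hTdvd

lemma omega_prod {r : ℕ} (q : Fin r → ℕ+) (hq : ∀ i, ((q i : ℕ)).Prime)
    (T : Finset (Fin r)) :
    ((∏ i ∈ T, q i : ℕ+) : ℕ).primeFactorsList.length = T.card := by
  induction T using Finset.induction_on with
  | empty => simp
  | @insert a T hnot ih =>
    rw [Finset.prod_insert hnot, Finset.card_insert_of_notMem hnot, PNat.mul_coe]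
    have hperm := (Nat.perm_primeFactorsList_mul (q a).pos.ne'
      (∏ i ∈ T, q i : ℕ+).pos.ne').length_eq
    rw [hperm, List.length_append, Nat.primeFactorsList_prime (hq a), ih]
    simp [Nat.add_comm]

lemma lower_key (n : ℕ+) {m : ℕ} (hm : m ∈ OmegaSet n) :
    (n : ℕ).primeFactorsList.length ≤ m := by
  by_contra hcon
  push_neg at hcon
  set L := (n : ℕ).primeFactorsList with hL
  set k := L.length with hk
  have hqpos : ∀ i : Fin k, 0 < L.get i := fun i =>
    (Nat.prime_of_mem_primeFactorsList (L.get_mem i)).pos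
  set q : Fin k → ℕ+ := fun i => ⟨L.get i, hqpos i⟩ with hqdef
  have hq : ∀ i, ((q i : ℕ)).Prime := fun i =>
    Nat.prime_of_mem_primeFactorsList (L.get_mem i)
  have hprod : ∏ i, q i = n := by
    apply PNat.eq
    rw [pnat_coe_prod]
    have : ∏ i, (q i : ℕ) = L.prod := by
      rw [← Fin.prod_univ_getElem L]
      rfl
    rw [this, hL, Nat.prod_primeFactorsList n.pos.ne']
  obtain ⟨T, hTc, hTd⟩ := hm.2 k q (fun i => pnat_irreducible_iff.mpr (hq i)) hcon
    (by rw [hprod])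
  have hsub : (∏ i ∈ T, q i) ∣ n :=
    hprod ▸ Finset.prod_dvd_prod_of_subset T Finset.univ q (Finset.subset_univ T)
  have heq : (∏ i ∈ T, q i) = n :=
    PNat.eq (Nat.dvd_antisymm (PNat.dvd_iff.mp hsub) (PNat.dvd_iff.mp hTd))
  have hcard := omega_prod q hq T
  rw [heq] at hcard
  have : k = T.card := hcard
  omega

/-- In the multiplicative monoid `ℕ+` of positive integers, the ω-value of any
`n > 1` equals `Ω(n)`, the number of prime factors of `n` counted with
multiplicity. -/
theorem omega_pnat_eq_card_factors (n : ℕ+) (hn : 1 < n) :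
    omegaVal n = ((n : ℕ).primeFactorsList.length : ℕ∞) := by
  set k := (n : ℕ).primeFactorsList.length with hk
  have kpos : 0 < k := by
    by_contra h
    push_neg at h
    have h0 : (n : ℕ).primeFactorsList.length = 0 := by omega
    rw [pnat_omega_one h0] at hn
    exact lt_irrefl 1 hn
  have hkmem : k ∈ OmegaSet (n : ℕ+) := by
    refine ⟨kpos, fun r q hq _ hd => ?_⟩
    obtain ⟨T, _, hTc, hTd⟩ := upper_key k n rfl r q
      (fun i => pnat_irreducible_iff.mp (hq i)) Finset.univ hd
    exact ⟨T, hTc, hTd⟩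
  apply le_antisymm
  · exact sInf_le ⟨k, hkmem, rfl⟩
  · refine le_sInf ?_
    rintro b ⟨m, hm, rfl⟩
    have := lower_key n hm
    rw [← hk] at this
    show (k : ℕ∞) ≤ (m : ℕ∞)
    exact_mod_cast this
end

section
/- Let H = {x ∈ ℕ* : x ≡ 1 (mod 4)} be the Hilbert monoid under multiplication. Then ω_H(1225) = 4, where 1225 = 5²·7². -/
open Finset

/-- The Hilbert monoid: positive integers congruent to 1 mod 4, under
multiplication. -/
def Hilbert : Submonoid ℕ where
  carrier := {x | x % 4 = 1}
  one_mem' := by norm_num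
  mul_mem' := by
    intro a b ha hb
    simp only [Set.mem_setOf_eq] at *
    rw [Nat.mul_mod, ha, hb]

theorem mem_Hilbert_1225 : (1225 : ℕ) ∈ Hilbert := by
  show (1225 : ℕ) % 4 = 1
  norm_num

lemma hilbert_mod (x : Hilbert) : (x : ℕ) % 4 = 1 := x.2

lemma hilbert_isUnit_iff (x : Hilbert) : IsUnit x ↔ (x : ℕ) = 1 := by
  constructor
  · intro h
    exact Nat.isUnit_iff.mp (h.map Hilbert.subtype)
  · intro h
    have : x = 1 := Subtype.ext h
    rw [this]; exact isUnit_one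

lemma hilbert_dvd_iff (x y : Hilbert) : x ∣ y ↔ (x : ℕ) ∣ (y : ℕ) := by
  constructor
  · rintro ⟨c, rfl⟩; exact ⟨c, rfl⟩
  · rintro ⟨d, hd⟩
    have hx := hilbert_mod x
    have hy := hilbert_mod y
    have hmod : (y : ℕ) % 4 = ((x : ℕ) % 4 * (d % 4)) % 4 := by
      rw [hd, Nat.mul_mod]
    rw [hx, one_mul] at hmod
    have hd4 : d % 4 = 1 := by omega
    exact ⟨⟨d, hd4⟩, Subtype.ext hd⟩

lemma hilbert_coe_prod {r : ℕ} (s : Finset (Fin r)) (f : Fin r → Hilbert) :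
    ((∏ i ∈ s, f i : Hilbert) : ℕ) = ∏ i ∈ s, (f i : ℕ) :=
  map_prod Hilbert.subtype f s

lemma hilbert_irred (x : Hilbert)
    (h1 : (x : ℕ) ≠ 1)
    (h2 : ∀ d, d ∣ (x : ℕ) → d % 4 = 1 → d = 1 ∨ d = (x : ℕ)) :
    Irreducible x := by
  constructor
  · rw [hilbert_isUnit_iff]; exact h1
  · intro a b hab
    have hval : (x : ℕ) = (a : ℕ) * (b : ℕ) := congrArg Subtype.val hab
    rcases h2 (a : ℕ) ⟨(b : ℕ), hval⟩ (hilbert_mod a) with ha | ha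
    · left; rw [hilbert_isUnit_iff]; exact ha
    · right; rw [hilbert_isUnit_iff]
      have hxne : (x : ℕ) ≠ 0 := by
        intro h0
        have := hilbert_mod x
        rw [h0] at this; omega
      have : (a : ℕ) * (b : ℕ) = (a : ℕ) * 1 := by
        rw [mul_one, ← hval]; exact ha.symm
      exact Nat.eq_of_mul_eq_mul_left (by omega : 0 < (a : ℕ)) this

/-- If `p² ∣ ∏ aᵢ` with `p` prime, then `p²` divides a subproduct over at most
two indices. -/
lemma exists_sq_subset (p : ℕ) (hp : p.Prime) {r : ℕ} (a : Fin r → ℕ)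
    (h : p ^ 2 ∣ ∏ i, a i) :
    ∃ T : Finset (Fin r), T.card ≤ 2 ∧ p ^ 2 ∣ ∏ i ∈ T, a i := by
  by_cases h1 : ∃ i, p ^ 2 ∣ a i
  · obtain ⟨i, hi⟩ := h1
    exact ⟨{i}, by simp, by simpa using hi⟩
  push_neg at h1
  have hpdvd : p ∣ ∏ i, a i := (dvd_pow_self p two_ne_zero).trans h
  obtain ⟨i, -, hi⟩ := hp.prime.exists_mem_finset_dvd (by simpa using hpdvd)
  obtain ⟨m, hm⟩ := hi
  have hsplit : ∏ j, a j = a i * ∏ j ∈ Finset.univ.erase i, a j :=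
    (Finset.mul_prod_erase Finset.univ a (Finset.mem_univ i)).symm
  have h2 : p * p ∣ p * (m * ∏ j ∈ Finset.univ.erase i, a j) := by
    have : ∏ j, a j = p * (m * ∏ j ∈ Finset.univ.erase i, a j) := by
      rw [hsplit, hm]; ring
    rw [← this, ← sq]; exact h
  have h3 : p ∣ m * ∏ j ∈ Finset.univ.erase i, a j :=
    (mul_dvd_mul_iff_left hp.pos.ne').mp h2
  rcases hp.prime.dvd_mul.mp h3 with h4 | h4
  · exfalso
    apply h1 i
    rw [hm, sq]
    exact mul_dvd_mul_left p h4
  · obtain ⟨j, hj, hpj⟩ := hp.prime.exists_mem_finset_dvd h4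
    have hij : i ≠ j := fun h => (Finset.mem_erase.mp hj).1 h.symm
    refine ⟨{i, j}, ?_, ?_⟩
    · exact (Finset.card_insert_le _ _).trans (by simp)
    · rw [Finset.prod_pair hij, sq]
      exact mul_dvd_mul ⟨m, hm⟩ hpj

lemma four_mem : (4 : ℕ) ∈ OmegaSet (⟨1225, mem_Hilbert_1225⟩ : Hilbert) := by
  refine ⟨by norm_num, ?_⟩
  intro r q hq hr hdvd
  have hval : (1225 : ℕ) ∣ ∏ i, (q i : ℕ) := by
    have := (hilbert_dvd_iff _ _).mp hdvd
    rwa [hilbert_coe_prod] at this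
  have h5 : (5 : ℕ) ^ 2 ∣ ∏ i, (q i : ℕ) :=
    dvd_trans (by norm_num) hval
  have h7 : (7 : ℕ) ^ 2 ∣ ∏ i, (q i : ℕ) :=
    dvd_trans (by norm_num) hval
  obtain ⟨T5, hT5c, hT5⟩ := exists_sq_subset 5 (by norm_num) _ h5
  obtain ⟨T7, hT7c, hT7⟩ := exists_sq_subset 7 (by norm_num) _ h7
  refine ⟨T5 ∪ T7, ?_, ?_⟩
  · exact (Finset.card_union_le _ _).trans (by omega)
  · rw [hilbert_dvd_iff, hilbert_coe_prod]
    have h5' : (5 : ℕ) ^ 2 ∣ ∏ i ∈ T5 ∪ T7, (q i : ℕ) :=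
      hT5.trans (Finset.prod_dvd_prod_of_subset _ _ _ Finset.subset_union_left)
    have h7' : (7 : ℕ) ^ 2 ∣ ∏ i ∈ T5 ∪ T7, (q i : ℕ) :=
      hT7.trans (Finset.prod_dvd_prod_of_subset _ _ _ Finset.subset_union_right)
    have hcop : Nat.Coprime (5 ^ 2) (7 ^ 2) := by norm_num
    have := Nat.Coprime.mul_dvd_of_dvd_of_dvd hcop h5' h7'
    simpa using this

def five : Hilbert := ⟨5, by show 5 % 4 = 1; norm_num⟩
def twentyone : Hilbert := ⟨21, by show 21 % 4 = 1; norm_num⟩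

lemma irred_five : Irreducible five := by
  have hv : (five : ℕ) = 5 := rfl
  apply hilbert_irred
  · rw [hv]; norm_num
  · rw [hv]; intro d hd hd4
    have hle := Nat.le_of_dvd (by norm_num) hd
    have key : ∀ d < 6, d ∣ 5 → d % 4 = 1 → d = 1 ∨ d = 5 := by decide
    exact key d (by omega) hd hd4

lemma irred_twentyone : Irreducible twentyone := by
  have hv : (twentyone : ℕ) = 21 := rfl
  apply hilbert_irred
  · rw [hv]; norm_num
  · rw [hv]; intro d hd hd4
    have hle := Nat.le_of_dvd (by norm_num) hd
    have key : ∀ d < 22, d ∣ 21 → d % 4 = 1 → d = 1 ∨ d = 21 := by decide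
    exact key d (by omega) hd hd4

lemma no_small_subset :
    ∀ T : Finset (Fin 4), T.card ≤ 3 →
      ¬ (1225 : ℕ) ∣ ∏ i ∈ T, (![(5 : ℕ), 5, 21, 21]) i := by decide

lemma mem_ge_four : ∀ m ∈ OmegaSet (⟨1225, mem_Hilbert_1225⟩ : Hilbert), 4 ≤ m := by
  intro m ⟨hm0, hm⟩
  by_contra hlt
  push_neg at hlt
  set q : Fin 4 → Hilbert := ![five, five, twentyone, twentyone] with hqdef
  have hq : ∀ i, Irreducible (q i) := by
    intro i
    fin_cases i <;>
      simp only [hqdef, Matrix.cons_val_zero, Matrix.cons_val_one, Matrix.head_cons,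
        Matrix.cons_val_two, Matrix.tail_cons, Matrix.cons_val_three] <;>
      first | exact irred_five | exact irred_twentyone
  have hvals : ∀ i : Fin 4, (q i : ℕ) = (![(5 : ℕ), 5, 21, 21]) i := by
    intro i; fin_cases i <;> rfl
  have hdvd : (⟨1225, mem_Hilbert_1225⟩ : Hilbert) ∣ ∏ i, q i := by
    rw [hilbert_dvd_iff, hilbert_coe_prod]
    have : ∏ i, (q i : ℕ) = 11025 := by
      rw [Fin.prod_univ_four]
      simp only [hvals]
      rfl
    rw [this]
    norm_num
  obtain ⟨T, hTc, hTd⟩ := hm 4 q hq (by omega) hdvd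
  have : (1225 : ℕ) ∣ ∏ i ∈ T, (![(5 : ℕ), 5, 21, 21]) i := by
    have := (hilbert_dvd_iff _ _).mp hTd
    rw [hilbert_coe_prod] at this
    simpa only [hvals] using this
  exact no_small_subset T (by omega) this

/-- In the Hilbert monoid, `ω(1225) = 4`, where `1225 = 5² · 7²`. -/
theorem hilbert_omega_1225 :
    (1225 : ℕ) = 5 ^ 2 * 7 ^ 2 ∧
      omegaVal (⟨1225, mem_Hilbert_1225⟩ : Hilbert) = 4 := by
  refine ⟨by norm_num, ?_⟩
  apply le_antisymm
  · apply sInf_le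
    exact ⟨4, four_mem, by norm_cast⟩
  · apply le_sInf
    rintro _ ⟨m, hm, rfl⟩
    have := mem_ge_four m hm
    show (4 : ℕ∞) ≤ (m : ℕ∞)
    exact_mod_cast this
end

section
/- Let M = ⟨6, 9, 20⟩ = {6a + 9b + 20c : a, b, c ∈ ℕ} be the McNugget monoid under addition. Then ω_M(6) = 3. -/
open Finset

/-- The McNugget monoid: the additive submonoid of ℕ generated by 6, 9, 20. -/
def McN : Set ℕ := {x | ∃ a b c : ℕ, x = 6 * a + 9 * b + 20 * c}

/-- `n` divides `x` in the McNugget monoid, i.e. `x - n ∈ M`. -/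
def McNDvd (n x : ℕ) : Prop := ∃ d ∈ McN, x = n + d

/-- The ω-primality of `n` in the McNugget monoid: the smallest positive integer
`m` such that whenever `n` divides (in `M`) a sum of more than `m` irreducibles
(each from `{6, 9, 20}`), `n` divides the sum of some subcollection of at most
`m` of them; `∞` if no such `m` exists. -/
noncomputable def omegaMcN (n : ℕ) : ℕ∞ :=
  sInf ((fun m : ℕ => (m : ℕ∞)) ''
    {m | 0 < m ∧ ∀ (r : ℕ) (u : Fin r → ℕ),
      (∀ i, u i = 6 ∨ u i = 9 ∨ u i = 20) → m < r →
      McNDvd n (∑ i, u i) →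
      ∃ T : Finset (Fin r), T.card ≤ m ∧ McNDvd n (∑ i ∈ T, u i)})

lemma mcn_three_mem : 3 ∈ {m | 0 < m ∧ ∀ (r : ℕ) (u : Fin r → ℕ),
      (∀ i, u i = 6 ∨ u i = 9 ∨ u i = 20) → m < r →
      McNDvd 6 (∑ i, u i) →
      ∃ T : Finset (Fin r), T.card ≤ m ∧ McNDvd 6 (∑ i ∈ T, u i)} := by
  refine ⟨by norm_num, ?_⟩
  intro r u hu hr _
  by_cases h6 : ∃ i, u i = 6
  · obtain ⟨i, hi⟩ := h6
    exact ⟨{i}, by simp, by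
      rw [Finset.sum_singleton, hi]
      exact ⟨0, ⟨0, 0, 0, by norm_num⟩, by norm_num⟩⟩
  push_neg at h6
  set A : Finset (Fin r) := Finset.univ.filter (fun i => u i = 9) with hA
  set B : Finset (Fin r) := Finset.univ.filter (fun i => u i = 20) with hB
  by_cases h9 : 2 ≤ A.card
  · obtain ⟨T, hTA, hTc⟩ := Finset.exists_subset_card_eq h9
    refine ⟨T, by omega, ?_⟩
    have hsum : ∑ i ∈ T, u i = 18 := by
      have : ∀ i ∈ T, u i = 9 := fun i hi => (Finset.mem_filter.mp (hTA hi)).2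
      rw [Finset.sum_congr rfl this, Finset.sum_const, hTc]
      rfl
    rw [hsum]
    exact ⟨12, ⟨2, 0, 0, by norm_num⟩, by norm_num⟩
  by_cases h20 : 3 ≤ B.card
  · obtain ⟨T, hTB, hTc⟩ := Finset.exists_subset_card_eq h20
    refine ⟨T, by omega, ?_⟩
    have hsum : ∑ i ∈ T, u i = 60 := by
      have : ∀ i ∈ T, u i = 20 := fun i hi => (Finset.mem_filter.mp (hTB hi)).2
      rw [Finset.sum_congr rfl this, Finset.sum_const, hTc]
      rfl
    rw [hsum]
    exact ⟨54, ⟨9, 0, 0, by norm_num⟩, by norm_num⟩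
  · exfalso
    have hcover : (Finset.univ : Finset (Fin r)) ⊆ A ∪ B := by
      intro i _
      rcases hu i with h | h | h
      · exact absurd h (h6 i)
      · exact Finset.mem_union_left _ (Finset.mem_filter.mpr ⟨Finset.mem_univ i, h⟩)
      · exact Finset.mem_union_right _ (Finset.mem_filter.mpr ⟨Finset.mem_univ i, h⟩)
    have h1 := Finset.card_le_card hcover
    have h2 := Finset.card_union_le A B
    rw [Finset.card_univ, Fintype.card_fin] at h1
    omega

lemma mcn_lower : ∀ m ∈ {m | 0 < m ∧ ∀ (r : ℕ) (u : Fin r → ℕ),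
      (∀ i, u i = 6 ∨ u i = 9 ∨ u i = 20) → m < r →
      McNDvd 6 (∑ i, u i) →
      ∃ T : Finset (Fin r), T.card ≤ m ∧ McNDvd 6 (∑ i ∈ T, u i)}, 3 ≤ m := by
  rintro m ⟨hm, h⟩
  by_contra hlt
  push_neg at hlt
  obtain ⟨T, hTc, hTd⟩ := h 3 (fun _ => 20) (fun _ => by norm_num) (by omega)
    ⟨54, ⟨9, 0, 0, by norm_num⟩, by simp⟩
  obtain ⟨d, ⟨a, b, c, hd⟩, heq⟩ := hTd
  rw [Finset.sum_const, smul_eq_mul] at heq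
  have hT3 : T.card ≤ 3 := (Finset.card_le_card (Finset.subset_univ T)).trans (by simp)
  omega

/-- In the McNugget monoid `⟨6, 9, 20⟩`, one has `ω(6) = 3`. -/
theorem omega_six_mcnugget : omegaMcN 6 = 3 := by
  apply le_antisymm
  · exact sInf_le ⟨3, mcn_three_mem, rfl⟩
  · apply le_sInf
    rintro x ⟨m, hm, rfl⟩
    have := mcn_lower m hm
    simp only []
    exact_mod_cast this
end

section
/- Let G be an Abelian group with G ≇ ℤ₂, and let B(G) be its block monoid. Every irreducible element u = g₁^{a₁}⋯g_k^{a_k} ∈ B(G) (with g₁,…,g_k distinct) satisfies ω(u) = a₁ + ⋯ + a_k. -/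
open Finset

/-- The block monoid of an Abelian group `G`: the submonoid of the free
commutative monoid `F(G) = (G →₀ ℕ)` consisting of zero-sum sequences. -/
noncomputable def BlockMonoid (G : Type*) [AddCommGroup G] : AddSubmonoid (G →₀ ℕ) where
  carrier := {f | (f.sum fun g n => n • g) = 0}
  zero_mem' := by simp
  add_mem' := by
    intro f g hf hg
    simp only [Set.mem_setOf_eq] at *
    rw [Finsupp.sum_add_index' (by simp) (by intro a b₁ b₂; rw [add_nsmul]), hf, hg,
      add_zero]

section Aux

variable {G : Type*} [AddCommGroup G]

lemma sum_toMultiset' (f : G →₀ ℕ) :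
    (Finsupp.toMultiset f).sum = f.sum fun g n => n • g := by
  rw [Finsupp.toMultiset_apply, ← Multiset.coe_sumAddMonoidHom, map_finsuppSum]
  simp [Multiset.nsmul_singleton]

/-- The multiset of a block. -/
noncomputable def tmB (x : Multiplicative ↥(BlockMonoid G)) : Multiset G :=
  Finsupp.toMultiset ((Multiplicative.toAdd x : ↥(BlockMonoid G)) : G →₀ ℕ)

lemma tmB_mul (x y : Multiplicative ↥(BlockMonoid G)) : tmB (x * y) = tmB x + tmB y := by
  simp [tmB, map_add]

lemma tmB_one : tmB (1 : Multiplicative ↥(BlockMonoid G)) = 0 := by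
  simp [tmB]

lemma tmB_sum (x : Multiplicative ↥(BlockMonoid G)) : (tmB x).sum = 0 := by
  rw [tmB, sum_toMultiset']
  exact (Multiplicative.toAdd x).2

lemma tmB_inj : Function.Injective (tmB (G := G)) := by
  classical
  intro x y h
  have h2 : ((Multiplicative.toAdd x : ↥(BlockMonoid G)) : G →₀ ℕ) =
      ((Multiplicative.toAdd y : ↥(BlockMonoid G)) : G →₀ ℕ) := by
    have := congrArg Multiset.toFinsupp h
    simpa [tmB] using this
  have : (Multiplicative.toAdd x : ↥(BlockMonoid G)) = Multiplicative.toAdd y :=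
    Subtype.ext h2
  simpa using congrArg Multiplicative.ofAdd this

lemma tmB_prod {ι : Type*} (T : Finset ι) (q : ι → Multiplicative ↥(BlockMonoid G)) :
    tmB (∏ i ∈ T, q i) = ∑ i ∈ T, tmB (q i) := by
  classical
  induction T using Finset.cons_induction with
  | empty => simp [tmB_one]
  | cons a T ha ih => rw [Finset.prod_cons, Finset.sum_cons, tmB_mul, ih]

variable [DecidableEq G]

/-- Build a block from a zero-sum multiset. -/
noncomputable def mkB (s : Multiset G) (h : s.sum = 0) : Multiplicative ↥(BlockMonoid G) :=
  Multiplicative.ofAdd ⟨Multiset.toFinsupp s, by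
    show ((Multiset.toFinsupp s : G →₀ ℕ).sum fun g n => n • g) = 0
    rw [← sum_toMultiset', Multiset.toFinsupp_toMultiset, h]⟩

@[simp] lemma tmB_mkB (s : Multiset G) (h : s.sum = 0) : tmB (mkB s h) = s := by
  simp [tmB, mkB]

lemma dvd_iff_tmB_le {x y : Multiplicative ↥(BlockMonoid G)} :
    x ∣ y ↔ tmB x ≤ tmB y := by
  constructor
  · rintro ⟨z, rfl⟩
    rw [tmB_mul]
    exact Multiset.le_add_right _ _
  · intro h
    have hsum : (tmB y - tmB x).sum = 0 := by
      have := tmB_sum y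
      rw [← tsub_add_cancel_of_le h, Multiset.sum_add, tmB_sum x, add_zero] at this
      exact this
    refine ⟨mkB (tmB y - tmB x) hsum, tmB_inj ?_⟩
    rw [tmB_mul, tmB_mkB, add_comm, tsub_add_cancel_of_le h]

lemma isUnit_iff_tmB {x : Multiplicative ↥(BlockMonoid G)} :
    IsUnit x ↔ tmB x = 0 := by
  constructor
  · intro h
    rcases h.exists_right_inv with ⟨v, hv⟩
    have := congrArg tmB hv
    rw [tmB_mul, tmB_one] at this
    exact (add_eq_zero.1 this).1
  · intro h
    have : x = 1 := tmB_inj (by rw [h, tmB_one])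
    exact this ▸ isUnit_one

/-- Any zero-sum sequence of length 1, 2 or 3 avoiding 0 is irreducible. -/
lemma irreducible_of_small (x : Multiplicative ↥(BlockMonoid G))
    (h0 : (0 : G) ∉ tmB x) (h1 : tmB x ≠ 0) (h3 : Multiset.card (tmB x) ≤ 3) :
    Irreducible x := by
  constructor
  · rw [isUnit_iff_tmB]; exact h1
  · intro a b hab
    by_contra hcon
    push_neg at hcon
    obtain ⟨ha, hb⟩ := hcon
    rw [isUnit_iff_tmB] at ha hb
    have hadd : tmB x = tmB a + tmB b := by rw [hab, tmB_mul]
    have hca : 1 ≤ Multiset.card (tmB a) := Multiset.card_pos.2 ha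
    have hcb : 1 ≤ Multiset.card (tmB b) := Multiset.card_pos.2 hb
    have hcard : Multiset.card (tmB a) + Multiset.card (tmB b) ≤ 3 := by
      rw [← Multiset.card_add, ← hadd]; exact h3
    -- one of them is a singleton
    have key : ∀ y : Multiplicative ↥(BlockMonoid G), tmB y ≤ tmB x →
        Multiset.card (tmB y) = 1 → False := by
      intro y hle hcy
      obtain ⟨d, hd⟩ := Multiset.card_eq_one.1 hcy
      have : d = 0 := by
        have := tmB_sum y
        rw [hd, Multiset.sum_singleton] at this
        exact this
      apply h0
      exact Multiset.mem_of_le hle (by rw [hd, this]; exact Multiset.mem_singleton_self 0)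
    have hone : Multiset.card (tmB a) = 1 ∨ Multiset.card (tmB b) = 1 := by omega
    rcases hone with h | h
    · exact key a (hadd ▸ Multiset.le_add_right _ _) h
    · exact key b (hadd ▸ Multiset.le_add_left _ _) h

/-- Irreducibility forces sub-zero-sum-sequences to be trivial. -/
lemma sub_block {u : Multiplicative ↥(BlockMonoid G)} (hu : Irreducible u)
    (t : Multiset G) (ht : t ≤ tmB u) (hsum : t.sum = 0) : t = 0 ∨ t = tmB u := by
  have hsum' : (tmB u - t).sum = 0 := by
    have := tmB_sum u
    rw [← tsub_add_cancel_of_le ht, Multiset.sum_add, hsum, add_zero] at this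
    exact this
  have : u = mkB t hsum * mkB (tmB u - t) hsum' := by
    apply tmB_inj
    rw [tmB_mul, tmB_mkB, tmB_mkB, add_tsub_cancel_of_le ht]
  rcases hu.isUnit_or_isUnit this with h | h <;> rw [isUnit_iff_tmB, tmB_mkB] at h
  · exact Or.inl h
  · right
    have h2 := add_tsub_cancel_of_le ht
    rw [h, add_zero] at h2
    exact h2

end Aux

section Cover
variable {β ι : Type*}

lemma mem_finset_sum' {A : Finset ι} {t : ι → Multiset β} {a : β}
    (h : a ∈ ∑ i ∈ A, t i) : ∃ i ∈ A, a ∈ t i := by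
  classical
  induction A using Finset.cons_induction with
  | empty => simp at h
  | cons j A hj ih =>
    rw [Finset.sum_cons] at h
    rcases Multiset.mem_add.1 h with h | h
    · exact ⟨j, Finset.mem_cons_self _ _, h⟩
    · obtain ⟨i, hi, hit⟩ := ih h
      exact ⟨i, Finset.mem_cons.2 (Or.inr hi), hit⟩

lemma le_erase_of_cons_le [DecidableEq β] {a : β} {s u : Multiset β} (h : a ::ₘ s ≤ u) :
    s ≤ u.erase a := by
  rw [Multiset.le_iff_count] at h ⊢
  intro b
  have hb := h b
  rw [Multiset.count_cons] at hb
  rcases eq_or_ne b a with rfl | hne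
  · rw [Multiset.count_erase_self]; simp at hb; omega
  · rw [Multiset.count_erase_of_ne hne]; simp [hne] at hb; omega

lemma cover_lemma [DecidableEq β] [DecidableEq ι] (s : Multiset β) :
    ∀ (A : Finset ι) (t : ι → Multiset β), s ≤ ∑ i ∈ A, t i →
      ∃ T ⊆ A, T.card ≤ Multiset.card s ∧ s ≤ ∑ i ∈ T, t i := by
  induction s using Multiset.induction_on with
  | empty => intro A t _; exact ⟨∅, Finset.empty_subset _, by simp, by simp⟩
  | cons a s ih =>
    intro A t hle
    have ha : a ∈ ∑ i ∈ A, t i := Multiset.mem_of_le hle (Multiset.mem_cons_self a s)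
    obtain ⟨i₀, hi₀A, hai₀⟩ := mem_finset_sum' ha
    set t' : ι → Multiset β := Function.update t i₀ ((t i₀).erase a) with ht'
    have hsum' : ∑ i ∈ A, t' i = (∑ i ∈ A, t i).erase a := by
      rw [← Finset.add_sum_erase _ t hi₀A, ← Finset.add_sum_erase _ t' hi₀A,
        Multiset.erase_add_left_pos _ hai₀]
      congr 1
      · simp [ht']
      · exact Finset.sum_congr rfl fun x hx => by
          simp [ht', Function.update_of_ne (Finset.mem_erase.1 hx).1]
    have hs : s ≤ ∑ i ∈ A, t' i := by
      rw [hsum']; exact le_erase_of_cons_le hle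
    obtain ⟨T, hTA, hTcard, hTle⟩ := ih A t' hs
    refine ⟨insert i₀ T, Finset.insert_subset hi₀A hTA, ?_, ?_⟩
    · calc (insert i₀ T).card ≤ T.card + 1 := Finset.card_insert_le _ _
        _ ≤ _ := by rw [Multiset.card_cons]; omega
    · have h1 : s ≤ ∑ i ∈ insert i₀ T, t' i :=
        hTle.trans (Finset.sum_le_sum_of_subset (Finset.subset_insert _ _))
      have h2 : ∑ i ∈ insert i₀ T, t i = a ::ₘ ∑ i ∈ insert i₀ T, t' i := by
        rw [← Finset.add_sum_erase _ t (Finset.mem_insert_self i₀ T),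
          ← Finset.add_sum_erase _ t' (Finset.mem_insert_self i₀ T)]
        have h3 : ∑ x ∈ (insert i₀ T).erase i₀, t' x = ∑ x ∈ (insert i₀ T).erase i₀, t x :=
          Finset.sum_congr rfl fun x hx => by
            simp [ht', Function.update_of_ne (Finset.mem_erase.1 hx).1]
        rw [h3, ht']
        simp only [Function.update_self]
        rw [← Multiset.cons_add, Multiset.cons_erase hai₀]
      rw [h2]
      exact Multiset.cons_le_cons a h1

lemma ofFn_eq_sum : ∀ (n : ℕ) (f : Fin n → β), ((List.ofFn f : List β) : Multiset β) = ∑ i, {f i}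
  | 0, f => by simp
  | (n+1), f => by
    rw [List.ofFn_succ, Fin.sum_univ_succ, ← ofFn_eq_sum n (fun i => f i.succ),
      Multiset.singleton_add, Multiset.cons_coe]

lemma coe_list_eq_sum (L : List β) :
    (L : Multiset β) = ∑ i : Fin L.length, {L.get i} := by
  conv_lhs => rw [← List.ofFn_get L]
  rw [ofFn_eq_sum]

lemma count_finset_sum [DecidableEq β] (A : Finset ι) (t : ι → Multiset β) (b : β) :
    Multiset.count b (∑ i ∈ A, t i) = ∑ i ∈ A, Multiset.count b (t i) := by
  classical
  induction A using Finset.cons_induction with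
  | empty => simp
  | cons j A hj ih => rw [Finset.sum_cons, Finset.sum_cons, Multiset.count_add, ih]

end Cover

lemma equiv_zmod_two {G : Type*} [AddCommGroup G] (g : G) (hg : g ≠ 0)
    (hall : ∀ x : G, x = 0 ∨ x = g) : Nonempty (G ≃+ ZMod 2) := by
  have h2 : g + g = 0 := by
    rcases hall (g + g) with h | h
    · exact h
    · exact absurd (by rwa [add_eq_left] at h) hg
  classical
  have hone : (1 : ZMod 2) ≠ 0 := by decide
  refine ⟨{ toFun := fun x => if x = 0 then 0 else 1,
            invFun := fun y => if y = 0 then 0 else g,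
            left_inv := ?_, right_inv := ?_, map_add' := ?_ }⟩
  · intro x
    rcases hall x with rfl | rfl
    · simp
    · simp [hg, hone]
  · intro y
    have : ∀ y : ZMod 2, y = 0 ∨ y = 1 := by decide
    rcases this y with rfl | rfl
    · simp
    · simp [hg, hone]
  · intro x y
    rcases hall x with rfl | rfl <;> rcases hall y with rfl | rfl <;>
      simp [hg, h2] <;> decide
section Bullet

variable {G : Type*} [AddCommGroup G] [DecidableEq G]

lemma exists_bullet_s9 (hG : ¬Nonempty (G ≃+ ZMod 2))
    (u : Multiplicative ↥(BlockMonoid G)) (hu : Irreducible u)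
    (hn : 2 ≤ Multiset.card (tmB u)) :
    ∃ r, r = Multiset.card (tmB u) ∧
      ∃ q : Fin r → Multiplicative ↥(BlockMonoid G),
        (∀ i, Irreducible (q i)) ∧ (u ∣ ∏ i, q i) ∧
        ∀ j, ¬ u ∣ ∏ i ∈ Finset.univ.erase j, q i := by
  -- 0 does not occur in u
  have h0 : (0 : G) ∉ tmB u := by
    intro h0
    have hle : ({0} : Multiset G) ≤ tmB u := Multiset.singleton_le.2 h0
    rcases sub_block hu {0} hle (by simp) with h | h
    · simp at h
    · rw [← h] at hn; simp at hn
  have hne : ∀ g ∈ tmB u, g ≠ 0 := fun g hgs hg0 => h0 (hg0 ▸ hgs)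
  by_cases hP : ∃ g ∈ tmB u, (g + g = 0 ∧ 2 ≤ (tmB u).count g) ∨ (g + g ≠ 0 ∧ -g ∈ tmB u)
  · obtain ⟨g, hgs, hcase⟩ := hP
    have hg0 : g ≠ 0 := hne g hgs
    rcases hcase with ⟨h2, hc⟩ | ⟨h2, hngs⟩
    · -- Case (i): u = g·g with 2g = 0
      have hs2 : tmB u = {g, g} := by
        have hle : ({g, g} : Multiset G) ≤ tmB u := by
          rw [Multiset.le_iff_count]
          intro b
          rcases eq_or_ne b g with rfl | hbg
          · simpa [Multiset.insert_eq_cons, Multiset.count_cons] using hc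
          · simp [Multiset.insert_eq_cons, Multiset.count_cons, hbg]
        rcases sub_block hu _ hle (by simpa [Multiset.insert_eq_cons] using h2) with h | h
        · simp [Multiset.insert_eq_cons] at h
        · exact h.symm
      have hcard2 : Multiset.card (tmB u) = 2 := by
        rw [hs2]; simp [Multiset.insert_eq_cons]
      -- an element outside {0, g}
      obtain ⟨h, hh0, hhg⟩ : ∃ h : G, h ≠ 0 ∧ h ≠ g := by
        by_contra hcon
        push_neg at hcon
        exact hG (equiv_zmod_two g hg0 (fun x => by
          rcases eq_or_ne x 0 with h' | h'
          · exact Or.inl h'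
          · exact Or.inr (hcon x h')))
      have hneg : -g = g := by
        rw [add_eq_zero_iff_eq_neg] at h2; exact h2.symm
      have hk0 : -(g + h) ≠ 0 := by
        intro hk
        rw [neg_eq_zero] at hk
        have h' : h = -g := eq_neg_of_add_eq_zero_right hk
        rw [hneg] at h'
        exact hhg h'
      have hvsum : ({g, h, -(g + h)} : Multiset G).sum = 0 := by
        simp [Multiset.insert_eq_cons]
      have htv : tmB (mkB {g, h, -(g + h)} hvsum) = {g, h, -(g + h)} := tmB_mkB _ _
      have hirr : Irreducible (mkB {g, h, -(g + h)} hvsum) := by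
        apply irreducible_of_small
        · rw [htv]
          intro hmem
          simp only [Multiset.insert_eq_cons, Multiset.mem_cons, Multiset.mem_singleton] at hmem
          rcases hmem with h' | h' | h'
          · exact hg0 h'.symm
          · exact hh0 h'.symm
          · exact hk0 h'.symm
        · rw [htv]; simp [Multiset.insert_eq_cons]
        · rw [htv]; simp [Multiset.insert_eq_cons]
      refine ⟨2, hcard2.symm, fun _ => mkB {g, h, -(g + h)} hvsum, fun _ => hirr, ?_, ?_⟩
      · rw [dvd_iff_tmB_le, Fin.prod_univ_two, tmB_mul, hs2, htv, Multiset.le_iff_count]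
        intro b
        simp only [Multiset.insert_eq_cons, Multiset.count_cons, Multiset.count_singleton,
          Multiset.count_add]
        split_ifs <;> omega
      · intro j
        rw [Finset.prod_const, Finset.card_erase_of_mem (Finset.mem_univ j),
          Finset.card_univ, Fintype.card_fin]
        intro hdvd
        rw [show (2 - 1 : ℕ) = 1 from rfl, pow_one, dvd_iff_tmB_le, hs2, htv] at hdvd
        have hcnt := Multiset.le_iff_count.1 hdvd g
        have hgh : ¬ g = h := fun h' => hhg h'.symm
        have hgk : ¬ g = -(g + h) := by
          intro h'
          apply hh0
          have h'' : g + (g + h) = 0 := by nth_rewrite 1 [h']; exact neg_add_cancel _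
          rwa [← add_assoc, h2, zero_add] at h''
        have hgk2 : ¬ g = -h + -g := by rw [← neg_add, add_comm h g]; exact hgk
        simp [Multiset.insert_eq_cons, Multiset.count_cons, Multiset.count_singleton,
          hgh, hgk, hgk2] at hcnt
    · -- Case (ii): u = g·(-g) with 2g ≠ 0
      have hgneg : g ≠ -g := by
        intro h'
        apply h2
        nth_rewrite 2 [h']
        exact add_neg_cancel g
      have hs2 : tmB u = {g, -g} := by
        have hle : ({g, -g} : Multiset G) ≤ tmB u := by
          rw [Multiset.le_iff_count]
          intro b
          rcases eq_or_ne b g with rfl | hbg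
          · have : ¬ b = -b := hgneg
            simp only [Multiset.insert_eq_cons, Multiset.count_cons, Multiset.count_singleton]
            simp [this]
            exact Multiset.one_le_count_iff_mem.2 hgs
          · rcases eq_or_ne b (-g) with rfl | hbn
            · simp only [Multiset.insert_eq_cons, Multiset.count_cons, Multiset.count_singleton]
              simp [hbg]
              exact Multiset.one_le_count_iff_mem.2 hngs
            · simp [Multiset.insert_eq_cons, Multiset.count_cons, Multiset.count_singleton,
                hbg, hbn]
        rcases sub_block hu _ hle (by simp [Multiset.insert_eq_cons]) with h | h
        · simp [Multiset.insert_eq_cons] at h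
        · exact h.symm
      have hcard2 : Multiset.card (tmB u) = 2 := by
        rw [hs2]; simp [Multiset.insert_eq_cons]
      have hk2 : -(g + g) ≠ 0 := neg_ne_zero.2 h2
      have hv1sum : ({g, g, -(g + g)} : Multiset G).sum = 0 := by
        simp [Multiset.insert_eq_cons]
      have hv2sum : ({-g, -g, g + g} : Multiset G).sum = 0 := by
        simp [Multiset.insert_eq_cons]
      have htv1 : tmB (mkB _ hv1sum) = {g, g, -(g + g)} := tmB_mkB _ _
      have htv2 : tmB (mkB _ hv2sum) = {-g, -g, g + g} := tmB_mkB _ _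
      have hirr1 : Irreducible (mkB _ hv1sum) := by
        apply irreducible_of_small
        · rw [htv1]
          intro hmem
          simp only [Multiset.insert_eq_cons, Multiset.mem_cons, Multiset.mem_singleton] at hmem
          rcases hmem with h' | h' | h'
          · exact hg0 h'.symm
          · exact hg0 h'.symm
          · exact hk2 h'.symm
        · rw [htv1]; simp [Multiset.insert_eq_cons]
        · rw [htv1]; simp [Multiset.insert_eq_cons]
      have hirr2 : Irreducible (mkB _ hv2sum) := by
        apply irreducible_of_small
        · rw [htv2]
          intro hmem
          simp only [Multiset.insert_eq_cons, Multiset.mem_cons, Multiset.mem_singleton] at hmem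
          rcases hmem with h' | h' | h'
          · exact (neg_ne_zero.2 hg0) h'.symm
          · exact (neg_ne_zero.2 hg0) h'.symm
          · exact h2 h'.symm
        · rw [htv2]; simp [Multiset.insert_eq_cons]
        · rw [htv2]; simp [Multiset.insert_eq_cons]
      refine ⟨2, hcard2.symm, ![mkB _ hv1sum, mkB _ hv2sum], ?_, ?_, ?_⟩
      · intro i
        fin_cases i
        · exact hirr1
        · exact hirr2
      · rw [Fin.prod_univ_two]
        simp only [Matrix.cons_val_zero, Matrix.cons_val_one, Matrix.head_cons]
        rw [dvd_iff_tmB_le, tmB_mul, hs2, htv1, htv2, Multiset.le_iff_count]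
        intro b
        simp only [Multiset.insert_eq_cons, Multiset.count_cons, Multiset.count_singleton,
          Multiset.count_add]
        split_ifs <;> omega
      · intro j
        have hj : j = 0 ∨ j = 1 := by
          rcases j with ⟨(_ | _ | k), hk⟩
          · exact Or.inl rfl
          · exact Or.inr rfl
          · omega
        rcases hj with rfl | rfl
        · rw [show (Finset.univ.erase (0 : Fin 2)) = {1} by decide, Finset.prod_singleton]
          simp only [Matrix.cons_val_one, Matrix.head_cons, Matrix.cons_val_zero]
          intro hdvd
          rw [dvd_iff_tmB_le, hs2, htv2] at hdvd
          have hcnt := Multiset.le_iff_count.1 hdvd g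
          have e2 : ¬ g = g + g := by
            intro h'
            exact hg0 (left_eq_add.1 h')
          simp [Multiset.insert_eq_cons, Multiset.count_cons, Multiset.count_singleton,
            hgneg, e2] at hcnt
        · rw [show (Finset.univ.erase (1 : Fin 2)) = {0} by decide, Finset.prod_singleton]
          simp only [Matrix.cons_val_zero]
          intro hdvd
          rw [dvd_iff_tmB_le, hs2, htv1] at hdvd
          have hcnt := Multiset.le_iff_count.1 hdvd (-g)
          have e1 : ¬ (-g) = g := fun h' => hgneg h'.symm
          have e2 : ¬ (-g) = -(g + g) := by
            intro h'
            have := neg_injective h'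
            exact hg0 (left_eq_add.1 this)
          simp [Multiset.insert_eq_cons, Multiset.count_cons, Multiset.count_singleton,
            e1, e2, hg0] at hcnt
  · -- Case (iii): the generic case
    push_neg at hP
    have hQ1 : ∀ g ∈ tmB u, g + g = 0 → (tmB u).count g = 1 := by
      intro g hgs h2
      have h1 := ((hP g hgs).1 h2)
      have h2' := Multiset.one_le_count_iff_mem.2 hgs
      omega
    have hQ2 : ∀ g ∈ tmB u, g + g ≠ 0 → -g ∉ tmB u := fun g hgs h2 => (hP g hgs).2 h2
    set A : G → Multiset G := fun g => if g + g = 0 then {g, g} else {g, -g} with hA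
    have sumA : ∀ g : G, (A g).sum = 0 := by
      intro g
      simp only [hA]
      split_ifs with h'
      · simpa [Multiset.insert_eq_cons] using h'
      · simp [Multiset.insert_eq_cons]
    have irrA : ∀ g : G, g ≠ 0 → Irreducible (mkB (A g) (sumA g)) := by
      intro g hg0
      apply irreducible_of_small
      · rw [tmB_mkB]
        simp only [hA]
        intro hmem
        split_ifs at hmem
        · simp only [Multiset.insert_eq_cons, Multiset.mem_cons, Multiset.mem_singleton] at hmem
          rcases hmem with h' | h' <;> exact hg0 h'.symm
        · simp only [Multiset.insert_eq_cons, Multiset.mem_cons, Multiset.mem_singleton] at hmem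
          rcases hmem with h' | h'
          · exact hg0 h'.symm
          · exact (neg_ne_zero.2 hg0) h'.symm
      · rw [tmB_mkB]; simp only [hA]; split_ifs <;> simp [Multiset.insert_eq_cons]
      · rw [tmB_mkB]; simp only [hA]; split_ifs <;> simp [Multiset.insert_eq_cons]
    have countA_ge : ∀ g b : G, (if g = b then 1 else 0) ≤ Multiset.count b (A g) := by
      intro g b
      simp only [hA]
      split_ifs with h1 h2 h2 <;>
        simp [Multiset.insert_eq_cons, Multiset.count_cons, Multiset.count_singleton] <;>
        simp [← h1]
    have countA_eq : ∀ g ∈ tmB u, ∀ b ∈ tmB u, Multiset.count b (A g) =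
        if g = b then (if b + b = 0 then 2 else 1) else 0 := by
      intro g hgs b hbs
      rcases eq_or_ne g b with rfl | hgb
      · simp only [hA, if_pos rfl]
        split_ifs with h'
        · simp [Multiset.insert_eq_cons, Multiset.count_cons, Multiset.count_singleton]
        · have : ¬ g = -g := by
            intro h''
            apply h'
            nth_rewrite 2 [h'']
            exact add_neg_cancel g
          simp [Multiset.insert_eq_cons, Multiset.count_cons, Multiset.count_singleton, this]
      · simp only [hA]
        rw [if_neg hgb]
        split_ifs with h'
        · have : ¬ b = g := fun h'' => hgb h''.symm
          simp [Multiset.insert_eq_cons, Multiset.count_cons, Multiset.count_singleton, this]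
        · have e1 : ¬ b = g := fun h'' => hgb h''.symm
          have e2 : ¬ b = -g := by
            intro h''
            apply hQ2 g hgs h'
            rw [← h'']
            exact hbs
          simp [Multiset.insert_eq_cons, Multiset.count_cons, Multiset.count_singleton, e1, e2]
    -- index by the list of elements of u
    set L := (tmB u).toList with hL
    have hlen : L.length = Multiset.card (tmB u) := Multiset.length_toList _
    have hLu : ((L : List G) : Multiset G) = tmB u := by
      rw [hL]; exact Multiset.coe_toList _
    have hgetmem : ∀ i : Fin L.length, L.get i ∈ tmB u := by
      intro i
      rw [← hLu]
      exact Multiset.mem_coe.2 (List.get_mem L i)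
    have hcount : ∀ b : G, Multiset.count b (tmB u) =
        ∑ i : Fin L.length, (if L.get i = b then 1 else 0) := by
      intro b
      conv_lhs => rw [← hLu, coe_list_eq_sum]
      rw [count_finset_sum]
      refine Finset.sum_congr rfl fun i _ => ?_
      rw [Multiset.count_singleton]
      rcases eq_or_ne b (L.get i) with h' | h'
      · simp [h']
      · simp only [List.get_eq_getElem] at h'
        have h'' : ¬ L[(i : ℕ)] = b := fun hh => h' hh.symm
        simp [h', h'']
    refine ⟨L.length, hlen, fun i => mkB (A (L.get i)) (sumA _),
      fun i => irrA _ (hne _ (hgetmem i)), ?_, ?_⟩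
    · rw [dvd_iff_tmB_le, tmB_prod, Multiset.le_iff_count]
      intro b
      rw [hcount b]
      have : ∀ i : Fin L.length, tmB (mkB (A (L.get i)) (sumA _)) = A (L.get i) :=
        fun i => tmB_mkB _ _
      rw [count_finset_sum]
      refine Finset.sum_le_sum fun i _ => ?_
      rw [this i]
      exact countA_ge _ _
    · intro j
      intro hdvd
      rw [dvd_iff_tmB_le, tmB_prod] at hdvd
      set g₀ := L.get j with hg₀
      have hg₀s : g₀ ∈ tmB u := hgetmem j
      have hcnt := Multiset.le_iff_count.1 hdvd g₀
      rw [count_finset_sum] at hcnt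
      set w : ℕ := if g₀ + g₀ = 0 then 2 else 1 with hw
      have hterm : ∀ i ∈ Finset.univ.erase j,
          Multiset.count g₀ (tmB (mkB (A (L.get i)) (sumA _))) =
            if L.get i = g₀ then w else 0 := by
        intro i _
        rw [tmB_mkB]
        exact countA_eq _ (hgetmem i) _ hg₀s
      rw [Finset.sum_congr rfl hterm] at hcnt
      have hsplit : (if L.get j = g₀ then w else 0) +
          ∑ i ∈ Finset.univ.erase j, (if L.get i = g₀ then w else 0) =
          ∑ i : Fin L.length, (if L.get i = g₀ then w else 0) := by
        exact Finset.add_sum_erase _ (fun i => if L.get i = g₀ then w else 0)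
          (Finset.mem_univ j)
      have htotal : ∑ i : Fin L.length, (if L.get i = g₀ then w else 0) =
          w * Multiset.count g₀ (tmB u) := by
        rw [hcount g₀, Finset.mul_sum]
        refine Finset.sum_congr rfl fun i _ => ?_
        split_ifs <;> simp
      rw [if_pos rfl] at hsplit
      have hmemcnt : 1 ≤ Multiset.count g₀ (tmB u) := Multiset.one_le_count_iff_mem.2 hg₀s
      by_cases h2 : g₀ + g₀ = 0
      · have hcnt1 : Multiset.count g₀ (tmB u) = 1 := hQ1 _ hg₀s h2
        rw [hcnt1, mul_one] at htotal
        rw [hcnt1] at hcnt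
        omega
      · have hw1 : w = 1 := if_neg h2
        rw [hw1] at hsplit htotal hcnt
        rw [one_mul] at htotal
        omega

end Bullet

/-- For an Abelian group `G ≇ ℤ₂`, every irreducible element
`u = g₁^{a₁} ⋯ g_k^{a_k}` of the block monoid `B(G)` satisfies
`ω(u) = a₁ + ⋯ + a_k` (the total number of terms of `u`, with multiplicity). -/
theorem omega_irreducible_block {G : Type*} [AddCommGroup G]
    (hG : ¬Nonempty (G ≃+ ZMod 2))
    (u : Multiplicative ↥(BlockMonoid G)) (hu : Irreducible u) :
    omegaVal u =
      (((Multiplicative.toAdd u : ↥(BlockMonoid G)) : G →₀ ℕ).sum (fun _ n => n) : ℕ∞) := by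
  classical
  have hRHS : (((Multiplicative.toAdd u : ↥(BlockMonoid G)) : G →₀ ℕ).sum (fun _ n => n))
      = Multiset.card (tmB u) := (Finsupp.card_toMultiset _).symm
  have hcast : (((Multiplicative.toAdd u : ↥(BlockMonoid G)) : G →₀ ℕ).sum
      (fun _ n => (n : ℕ∞)))
      = ((((Multiplicative.toAdd u : ↥(BlockMonoid G)) : G →₀ ℕ).sum (fun _ n => n) : ℕ) : ℕ∞) := by
    rw [Finsupp.sum, Finsupp.sum, Nat.cast_sum]
  rw [hcast, hRHS]
  set n := Multiset.card (tmB u) with hn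
  have hu1 : tmB u ≠ 0 := fun h => hu.not_isUnit (isUnit_iff_tmB.2 h)
  have hn1 : 1 ≤ n := by
    rw [hn]
    exact Multiset.card_pos.2 hu1
  have hmem : n ∈ OmegaSet u := by
    refine ⟨hn1, fun r q hq hr hdvd => ?_⟩
    have hle : tmB u ≤ ∑ i : Fin r, tmB (q i) := by
      rw [← tmB_prod]
      exact dvd_iff_tmB_le.1 hdvd
    obtain ⟨T, _, hTcard, hTle⟩ := cover_lemma (tmB u) Finset.univ (fun i => tmB (q i)) hle
    exact ⟨T, hTcard, dvd_iff_tmB_le.2 (by rw [tmB_prod]; exact hTle)⟩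
  refine le_antisymm (sInf_le ⟨n, hmem, rfl⟩) (le_sInf ?_)
  rintro b ⟨m, hm, rfl⟩
  rw [Nat.cast_le]
  by_contra hlt
  push_neg at hlt
  have h2n : 2 ≤ n := by
    have := hm.1
    omega
  obtain ⟨r, hr, q, hirr, hdvd, herase⟩ := exists_bullet_s9 hG u hu h2n
  obtain ⟨T, hTcard, hTdvd⟩ := hm.2 r q hirr (by omega) hdvd
  obtain ⟨j, hj⟩ : ∃ j : Fin r, j ∉ T := by
    by_contra hall
    push_neg at hall
    have hcard : (Finset.univ : Finset (Fin r)).card ≤ T.card :=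
      Finset.card_le_card fun x _ => hall x
    rw [Finset.card_univ, Fintype.card_fin] at hcard
    omega
  exact herase j (dvd_trans hTdvd (Finset.prod_dvd_prod_of_subset _ _ _
    (fun x hx => Finset.mem_erase.2 ⟨fun h' => hj (h' ▸ hx), Finset.mem_univ x⟩)))
end

section
/- Let 1 < n₁ < n₂ be relatively prime natural numbers and Γ = ⟨n₁, n₂⟩. If (a₁, a₂) ∈ ℕ² is any factorization of a nonzero element n ∈ Γ (i.e., n = a₁n₁ + a₂n₂), then ω(n) = max{ ⌈a₂/n₁⌉·n₂ + a₁, ⌈a₁/n₂⌉·n₁ + a₂ }. -/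
/-- The numerical monoid `Γ = ⟨n₁, n₂⟩`. -/
def Gam2 (n₁ n₂ : ℕ) : Set ℕ := {x | ∃ a b : ℕ, x = a * n₁ + b * n₂}

/-- `(a₁, a₂)` is a bullet for `n` in `⟨n₁, n₂⟩`: `a₁n₁ + a₂n₂ − n ∈ Γ`, but
`a₁n₁ + a₂n₂ − n_j − n ∉ Γ` whenever `a_j > 0`. -/
def IsBullet2 (n₁ n₂ n a₁ a₂ : ℕ) : Prop :=
  (∃ d ∈ Gam2 n₁ n₂, a₁ * n₁ + a₂ * n₂ = n + d) ∧
    (0 < a₁ → ¬∃ d ∈ Gam2 n₁ n₂, a₁ * n₁ + a₂ * n₂ = n + n₁ + d) ∧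
    (0 < a₂ → ¬∃ d ∈ Gam2 n₁ n₂, a₁ * n₁ + a₂ * n₂ = n + n₂ + d)

/-- The ω-primality of `n` in `⟨n₁, n₂⟩`: the supremum of `a₁ + a₂` over all
bullets `(a₁, a₂)` for `n`. -/
noncomputable def omega2 (n₁ n₂ n : ℕ) : ℕ∞ :=
  ⨆ (a : ℕ × ℕ) (_ : IsBullet2 n₁ n₂ n a.1 a.2), ((a.1 + a.2 : ℕ) : ℕ∞)

namespace Omega2Aux

lemma ceil_le_iff {a b m : ℕ} (hb : 0 < b) : (a + b - 1) / b ≤ m ↔ a ≤ m * b := by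
  rw [Nat.div_le_iff_le_mul_add_pred hb, Nat.mul_comm b m]
  omega

lemma ceil_spec {a b : ℕ} (hb : 0 < b) : a ≤ ((a + b - 1) / b) * b :=
  (ceil_le_iff hb).mp le_rfl

lemma isBullet2_comm {n₁ n₂ n a₁ a₂ : ℕ} (h : IsBullet2 n₁ n₂ n a₁ a₂) :
    IsBullet2 n₂ n₁ n a₂ a₁ := by
  obtain ⟨⟨d, ⟨x, y, hxy⟩, hd⟩, h2, h3⟩ := h
  refine ⟨⟨d, ⟨y, x, by omega⟩, by omega⟩, ?_, ?_⟩
  · intro hp hex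
    obtain ⟨e, ⟨x', y', hx'⟩, he⟩ := hex
    exact h3 hp ⟨e, ⟨y', x', by omega⟩, by omega⟩
  · intro hp hex
    obtain ⟨e, ⟨x', y', hx'⟩, he⟩ := hex
    exact h2 hp ⟨e, ⟨y', x', by omega⟩, by omega⟩

/-- `(a₁ + ⌈a₂/n₁⌉·n₂, 0)` is a bullet for `a₁n₁ + a₂n₂`. -/
lemma exists_bullet (n₁ n₂ : ℕ) (h₁ : 0 < n₁) (h₂ : 0 < n₂)
    (hcop : Nat.Coprime n₁ n₂) (a₁ a₂ : ℕ) :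
    IsBullet2 n₁ n₂ (a₁ * n₁ + a₂ * n₂) (a₁ + ((a₂ + n₁ - 1) / n₁) * n₂) 0 := by
  set c := (a₂ + n₁ - 1) / n₁ with hc
  have hca : a₂ ≤ c * n₁ := ceil_spec h₁
  obtain ⟨s, hs⟩ : ∃ s, c * n₁ = a₂ + s := ⟨c * n₁ - a₂, by omega⟩
  refine ⟨⟨s * n₂, ⟨0, s, by ring⟩, ?_⟩, ?_, fun h0 => absurd h0 (lt_irrefl 0)⟩
  · zify at hs ⊢
    linear_combination (n₂ : ℤ) * hs
  · intro _ hex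
    obtain ⟨d, ⟨c₁, c₂, rfl⟩, heq⟩ := hex
    have key : (1 + c₁ + a₁) * n₁ + (a₂ + c₂) * n₂ = (a₁ + c * n₂) * n₁ := by
      zify at heq ⊢
      linear_combination -heq
    have h2' : n₁ ∣ (1 + c₁ + a₁) * n₁ + (a₂ + c₂) * n₂ := by
      rw [key]; exact dvd_mul_left n₁ _
    have h2 : n₁ ∣ (a₂ + c₂) * n₂ :=
      (Nat.dvd_add_right (dvd_mul_left n₁ _)).mp h2'
    obtain ⟨k, hk⟩ := hcop.dvd_of_dvd_mul_right h2
    have hck : c ≤ k := (ceil_le_iff h₁).mpr (by rw [Nat.mul_comm]; omega)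
    rw [hk] at key
    nlinarith [key, Nat.mul_le_mul_right (n₁ * n₂) hck, h₁]

/-- The first coordinate of any bullet for `a₁n₁ + a₂n₂` is at most
`a₁ + ⌈a₂/n₁⌉·n₂`, provided it is positive. -/
lemma bullet_fst_le (n₁ n₂ : ℕ) (h₁ : 0 < n₁) (a₁ a₂ b₁ b₂ : ℕ)
    (hb : IsBullet2 n₁ n₂ (a₁ * n₁ + a₂ * n₂) b₁ b₂) (hb1 : 0 < b₁) :
    b₁ ≤ a₁ + ((a₂ + n₁ - 1) / n₁) * n₂ := by
  set c := (a₂ + n₁ - 1) / n₁ with hc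
  have hca : a₂ ≤ c * n₁ := ceil_spec h₁
  obtain ⟨s, hs⟩ : ∃ s, c * n₁ = a₂ + s := ⟨c * n₁ - a₂, by omega⟩
  by_contra hlt
  push_neg at hlt
  obtain ⟨r, hr⟩ : ∃ r, b₁ = a₁ + c * n₂ + 1 + r := ⟨b₁ - (a₁ + c * n₂ + 1), by omega⟩
  exact hb.2.1 hb1 ⟨r * n₁ + (s + b₂) * n₂, ⟨r, s + b₂, rfl⟩, by
    rw [hr]; zify at hs ⊢; linear_combination (n₂ : ℤ) * hs⟩

/-- A bullet with both coordinates positive is a factorization, and its length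
is at most `a₁ + ⌈a₂/n₁⌉·n₂`. -/
lemma mixed_le (n₁ n₂ : ℕ) (h₁ : 0 < n₁) (h₂ : 0 < n₂) (h₁₂ : n₁ ≤ n₂)
    (hcop : Nat.Coprime n₁ n₂) (a₁ a₂ b₁ b₂ : ℕ)
    (hb : IsBullet2 n₁ n₂ (a₁ * n₁ + a₂ * n₂) b₁ b₂) (hb1 : 0 < b₁) (hb2 : 0 < b₂) :
    b₁ + b₂ ≤ a₁ + ((a₂ + n₁ - 1) / n₁) * n₂ := by
  set c := (a₂ + n₁ - 1) / n₁ with hc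
  have hca : a₂ ≤ c * n₁ := ceil_spec h₁
  obtain ⟨⟨d, ⟨c₁, c₂, rfl⟩, heq⟩, h2, h3⟩ := hb
  rcases c₁ with _ | e
  case succ =>
    exact absurd ⟨e * n₁ + c₂ * n₂, ⟨e, c₂, rfl⟩, by
      zify at heq ⊢; linear_combination heq⟩ (h2 hb1)
  rcases c₂ with _ | e
  case succ =>
    exact absurd ⟨0 * n₁ + e * n₂, ⟨0, e, rfl⟩, by
      zify at heq ⊢; linear_combination heq⟩ (h3 hb2)
  have heq' : b₁ * n₁ + b₂ * n₂ = a₁ * n₁ + a₂ * n₂ := by omega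
  rcases le_or_gt a₁ b₁ with hle | hgt
  · have hb2a : b₂ * n₂ ≤ a₂ * n₂ := by
      have := Nat.mul_le_mul_right n₁ hle
      omega
    have hba : b₂ ≤ a₂ := Nat.le_of_mul_le_mul_right hb2a h₂
    obtain ⟨t, ht⟩ : ∃ t, b₁ = a₁ + t := ⟨b₁ - a₁, by omega⟩
    obtain ⟨u, hu⟩ : ∃ u, a₂ = b₂ + u := ⟨a₂ - b₂, by omega⟩
    subst ht hu
    have htu : t * n₁ = u * n₂ := by
      zify at heq' ⊢; linear_combination heq'
    obtain ⟨v, hv⟩ : n₂ ∣ t := hcop.symm.dvd_of_dvd_mul_right ⟨u, by rw [htu, Nat.mul_comm]⟩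
    subst hv
    have huv : u = v * n₁ := by
      have h' : n₂ * (v * n₁) = n₂ * u := by zify at htu ⊢; linear_combination htu
      exact (Nat.eq_of_mul_eq_mul_left h₂ h').symm
    subst huv
    have hvc : v ≤ c := by
      have h1 : v * n₁ ≤ c * n₁ := by omega
      exact Nat.le_of_mul_le_mul_right h1 h₁
    obtain ⟨w, hw⟩ : ∃ w, c = v + w := ⟨c - v, by omega⟩
    have hwn : w * n₁ ≤ w * n₂ := Nat.mul_le_mul le_rfl h₁₂
    have hexp : c * n₂ = n₂ * v + w * n₂ := by rw [hw]; ring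
    have hexp2 : c * n₁ = v * n₁ + w * n₁ := by rw [hw]; ring
    omega
  · have hba : a₂ * n₂ ≤ b₂ * n₂ := by
      have : b₁ * n₁ ≤ a₁ * n₁ := Nat.mul_le_mul_right n₁ (le_of_lt hgt)
      omega
    have hba' : a₂ ≤ b₂ := Nat.le_of_mul_le_mul_right hba h₂
    obtain ⟨t, ht⟩ : ∃ t, a₁ = b₁ + t := ⟨a₁ - b₁, by omega⟩
    obtain ⟨u, hu⟩ : ∃ u, b₂ = a₂ + u := ⟨b₂ - a₂, by omega⟩
    subst ht hu
    have htu : u * n₂ = t * n₁ := by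
      zify at heq' ⊢; linear_combination heq'
    have hut : u ≤ t := by
      have hA : t * n₁ ≤ t * n₂ := Nat.mul_le_mul le_rfl h₁₂
      have hB : u * n₂ ≤ t * n₂ := by omega
      exact Nat.le_of_mul_le_mul_right hB h₂
    have : c * n₁ ≤ c * n₂ := Nat.mul_le_mul le_rfl h₁₂
    omega

end Omega2Aux

open Omega2Aux in
/-- In `Γ = ⟨n₁, n₂⟩` with `1 < n₁ < n₂` coprime, if `(a₁, a₂)` is a
factorization of a nonzero `n ∈ Γ`, then
`ω(n) = max{⌈a₂/n₁⌉·n₂ + a₁, ⌈a₁/n₂⌉·n₁ + a₂}` (ceilings computed in `ℕ` as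
`⌈a/b⌉ = (a + b − 1)/b`). -/
theorem omega2_closed_form (n₁ n₂ : ℕ) (h₁ : 1 < n₁) (h₁₂ : n₁ < n₂)
    (hcop : Nat.Coprime n₁ n₂) (n a₁ a₂ : ℕ) (hn : n = a₁ * n₁ + a₂ * n₂)
    (hn0 : n ≠ 0) :
    omega2 n₁ n₂ n =
      ((max ((a₂ + n₁ - 1) / n₁ * n₂ + a₁) ((a₁ + n₂ - 1) / n₂ * n₁ + a₂) : ℕ) : ℕ∞) := by
  subst hn
  have h₁0 : 0 < n₁ := by omega
  have h₂0 : 0 < n₂ := by omega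
  have B1 : IsBullet2 n₁ n₂ (a₁ * n₁ + a₂ * n₂) (a₁ + (a₂ + n₁ - 1) / n₁ * n₂) 0 :=
    exists_bullet n₁ n₂ h₁0 h₂0 hcop a₁ a₂
  have B2 : IsBullet2 n₁ n₂ (a₁ * n₁ + a₂ * n₂) 0 (a₂ + (a₁ + n₂ - 1) / n₂ * n₁) := by
    have h := isBullet2_comm (exists_bullet n₂ n₁ h₂0 h₁0 hcop.symm a₂ a₁)
    rwa [Nat.add_comm (a₂ * n₂)] at h
  apply le_antisymm
  · refine iSup_le fun b => iSup_le fun hb => ?_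
    have hub : b.1 + b.2 ≤
        max ((a₂ + n₁ - 1) / n₁ * n₂ + a₁) ((a₁ + n₂ - 1) / n₂ * n₁ + a₂) := by
      rcases Nat.eq_zero_or_pos b.1 with e1 | p1
      · rcases Nat.eq_zero_or_pos b.2 with e2 | p2
        · obtain ⟨d, _, hd⟩ := hb.1
          rw [e1, e2] at hd
          exact absurd hd (by omega)
        · have hb' : IsBullet2 n₂ n₁ (a₂ * n₂ + a₁ * n₁) b.2 b.1 := by
            have h := isBullet2_comm hb
            rwa [Nat.add_comm (a₁ * n₁)] at h
          have := bullet_fst_le n₂ n₁ h₂0 a₂ a₁ b.2 b.1 hb' p2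
          exact le_trans (by omega) (le_max_right _ _)
      · rcases Nat.eq_zero_or_pos b.2 with e2 | p2
        · have := bullet_fst_le n₁ n₂ h₁0 a₁ a₂ b.1 b.2 hb p1
          exact le_trans (by omega) (le_max_left _ _)
        · have := mixed_le n₁ n₂ h₁0 h₂0 (le_of_lt h₁₂) hcop a₁ a₂ b.1 b.2 hb p1 p2
          exact le_trans (by omega) (le_max_left _ _)
    exact_mod_cast hub
  · have l1 : ((a₁ + (a₂ + n₁ - 1) / n₁ * n₂ + 0 : ℕ) : ℕ∞) ≤
        omega2 n₁ n₂ (a₁ * n₁ + a₂ * n₂) := by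
      have h := le_iSup (fun a : ℕ × ℕ =>
        ⨆ _ : IsBullet2 n₁ n₂ (a₁ * n₁ + a₂ * n₂) a.1 a.2, ((a.1 + a.2 : ℕ) : ℕ∞))
        (a₁ + (a₂ + n₁ - 1) / n₁ * n₂, 0)
      simpa [omega2, iSup_pos B1] using h
    have l2 : ((0 + (a₂ + (a₁ + n₂ - 1) / n₂ * n₁) : ℕ) : ℕ∞) ≤
        omega2 n₁ n₂ (a₁ * n₁ + a₂ * n₂) := by
      have h := le_iSup (fun a : ℕ × ℕ =>
        ⨆ _ : IsBullet2 n₁ n₂ (a₁ * n₁ + a₂ * n₂) a.1 a.2, ((a.1 + a.2 : ℕ) : ℕ∞))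
        (0, a₂ + (a₁ + n₂ - 1) / n₂ * n₁)
      simpa [omega2, iSup_pos B2] using h
    rcases le_total ((a₂ + n₁ - 1) / n₁ * n₂ + a₁) ((a₁ + n₂ - 1) / n₂ * n₁ + a₂) with h | h
    · rw [max_eq_right h]
      have e : (a₁ + n₂ - 1) / n₂ * n₁ + a₂ = 0 + (a₂ + (a₁ + n₂ - 1) / n₂ * n₁) := by omega
      rw [e]; exact l2
    · rw [max_eq_left h]
      have e : (a₂ + n₁ - 1) / n₁ * n₂ + a₁ = a₁ + (a₂ + n₁ - 1) / n₁ * n₂ + 0 := by omega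
      rw [e]; exact l1
end

section
/- Let 1 < n₁ < n₂ be relatively prime natural numbers and Γ = ⟨n₁, n₂⟩. For all sufficiently large n ∈ Γ, writing n = qn₁ + r with 0 ≤ r < n₁ and letting a ≥ 0 be minimal such that an₁ ≡ r (mod n₂), one has ω(n) = q + a. -/
/-- In `Γ = ⟨n₁, n₂⟩` with `1 < n₁ < n₂` coprime: for all sufficiently large
`n ∈ Gam2`, writing `n = q·n₁ + r` with `0 ≤ r < n₁`, and letting `a` be minimal
with `a·n₁ ≡ r (mod n₂)`, one has `ω(n) = q + a`. -/
theorem omega2_eventually (n₁ n₂ : ℕ) (h₁ : 1 < n₁) (h₁₂ : n₁ < n₂)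
    (hcop : Nat.Coprime n₁ n₂) :
    ∃ N : ℕ, ∀ n ∈ Gam2 n₁ n₂, N ≤ n →
      ∀ q r a : ℕ, n = q * n₁ + r → r < n₁ →
        a * n₁ ≡ r [MOD n₂] →
        (∀ a' : ℕ, a' * n₁ ≡ r [MOD n₂] → a ≤ a') →
        omega2 n₁ n₂ n = ((q + a : ℕ) : ℕ∞) := by
  refine ⟨n₁ * n₁ * n₂ + 1, ?_⟩
  intro n _hn hN q r a hqr hr hmod hmin
  have h2 : 1 < n₂ := lt_trans h₁ h₁₂
  haveI : NeZero n₂ := ⟨by omega⟩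
  -- a < n₂
  have ha_lt : a < n₂ := by
    set u := ZMod.unitOfCoprime n₁ hcop with hu
    set a₀ := ((r : ZMod n₂) * ↑u⁻¹).val with ha₀
    have h1 : ((a₀ * n₁ : ℕ) : ZMod n₂) = (r : ZMod n₂) := by
      push_cast
      rw [ha₀, ZMod.natCast_val, ZMod.cast_id]
      have hn1 : ((n₁ : ZMod n₂)) = (u : ZMod n₂) := (ZMod.coe_unitOfCoprime n₁ hcop).symm
      rw [hn1, mul_assoc, Units.inv_mul, mul_one]
    have hcong : a₀ * n₁ ≡ r [MOD n₂] :=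
      (ZMod.natCast_eq_natCast_iff _ _ _).mp h1
    exact lt_of_le_of_lt (hmin a₀ hcong) (ZMod.val_lt _)
  -- r ≤ a * n₁
  have hra : r ≤ a * n₁ := by
    by_contra h
    push_neg at h
    have h1 : a * n₁ % n₂ = a * n₁ := Nat.mod_eq_of_lt (by omega)
    have h2' : r % n₂ = r := Nat.mod_eq_of_lt (by omega)
    have hm := hmod
    unfold Nat.ModEq at hm
    omega
  -- k with a * n₁ = r + k * n₂
  obtain ⟨k, hk⟩ := (Nat.modEq_iff_dvd' hra).mp hmod.symm
  have hak : a * n₁ = r + k * n₂ := by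
    have : n₂ * k = k * n₂ := Nat.mul_comm _ _
    omega
  -- k < n₁
  have hk_lt : k < n₁ := by
    by_contra hkn
    push_neg at hkn
    have h3 : n₁ * n₂ ≤ k * n₂ := Nat.mul_le_mul_right _ hkn
    have h4 : a * n₁ < n₂ * n₁ := (Nat.mul_lt_mul_right (by omega : 0 < n₁)).mpr ha_lt
    have h5 : n₂ * n₁ = n₁ * n₂ := Nat.mul_comm _ _
    omega
  -- q is large
  have hq : n₁ * n₂ ≤ q := by
    by_contra hqs
    push_neg at hqs
    have h3 : q + 1 ≤ n₁ * n₂ := hqs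
    have h4 : (q + 1) * n₁ ≤ n₁ * n₂ * n₁ := Nat.mul_le_mul_right _ h3
    have h5 : (q + 1) * n₁ = q * n₁ + n₁ := by ring
    have h6 : n₁ * n₂ * n₁ ≤ n₁ * n₁ * n₂ := by
      have : n₁ * n₂ * n₁ = n₁ * n₁ * n₂ := by ring
      omega
    omega
  -- the maximal bullet
  have hbullet : IsBullet2 n₁ n₂ n (q + a) 0 := by
    refine ⟨⟨k * n₂, ⟨0, k, by ring⟩, ?_⟩, ?_, ?_⟩
    · have : (q + a) * n₁ = q * n₁ + a * n₁ := by ring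
      omega
    · rintro - ⟨d, ⟨x, y, rfl⟩, hdeq⟩
      have hsum : (q + a) * n₁ = q * n₁ + a * n₁ := by ring
      -- k * n₂ = (x+1) * n₁ + y * n₂
      have hkey : k * n₂ = (x + 1) * n₁ + y * n₂ := by
        have : (x + 1) * n₁ = x * n₁ + n₁ := by ring
        omega
      have hyk : y * n₂ ≤ k * n₂ := by omega
      have hdvd : n₂ ∣ (x + 1) * n₁ := by
        refine ⟨k - y, ?_⟩
        have h7 : (k - y) * n₂ = k * n₂ - y * n₂ := Nat.sub_mul _ _ _
        have h8 : n₂ * (k - y) = (k - y) * n₂ := Nat.mul_comm _ _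
        omega
      have hx1 : n₂ ∣ (x + 1) := hcop.symm.dvd_of_dvd_mul_right hdvd
      have hx2 : n₂ ≤ x + 1 := Nat.le_of_dvd (by omega) hx1
      have h9 : n₂ * n₁ ≤ (x + 1) * n₁ := Nat.mul_le_mul_right _ hx2
      have h10 : k * n₂ < n₁ * n₂ := (Nat.mul_lt_mul_right (by omega : 0 < n₂)).mpr hk_lt
      have h11 : n₂ * n₁ = n₁ * n₂ := Nat.mul_comm _ _
      omega
    · intro h
      exact absurd h (lt_irrefl 0)
  -- upper bound for all bullets
  have hub : ∀ p : ℕ × ℕ, IsBullet2 n₁ n₂ n p.1 p.2 → p.1 + p.2 ≤ q + a := by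
    rintro ⟨a₁, a₂⟩ ⟨⟨d, ⟨x, y, rfl⟩, heq⟩, hc1, hc2⟩
    simp only at heq hc1 hc2 ⊢
    have hx0 : 0 < a₁ → x = 0 := by
      intro ha₁
      by_contra hx
      refine hc1 ha₁ ⟨(x - 1) * n₁ + y * n₂, ⟨x - 1, y, rfl⟩, ?_⟩
      have hx' : (x - 1) * n₁ + n₁ = x * n₁ := by
        have : (x - 1) + 1 = x := Nat.succ_pred_eq_of_pos (Nat.pos_of_ne_zero hx)
        calc (x - 1) * n₁ + n₁ = ((x - 1) + 1) * n₁ := by ring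
          _ = x * n₁ := by rw [this]
      omega
    have hy0 : 0 < a₂ → y = 0 := by
      intro ha₂
      by_contra hy
      refine hc2 ha₂ ⟨x * n₁ + (y - 1) * n₂, ⟨x, y - 1, rfl⟩, ?_⟩
      have hy' : (y - 1) * n₂ + n₂ = y * n₂ := by
        have : (y - 1) + 1 = y := Nat.succ_pred_eq_of_pos (Nat.pos_of_ne_zero hy)
        calc (y - 1) * n₂ + n₂ = ((y - 1) + 1) * n₂ := by ring
          _ = y * n₂ := by rw [this]
      omega
    rcases Nat.eq_zero_or_pos a₁ with ha₁0 | ha₁p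
    · subst ha₁0
      rcases Nat.eq_zero_or_pos a₂ with ha₂0 | ha₂p
      · omega
      · -- a₁ = 0, a₂ > 0 : a₂ * n₂ = n + x * n₁ with x < n₂
        have hy := hy0 ha₂p
        subst hy
        simp only [Nat.mul_zero, Nat.zero_mul, Nat.add_zero, Nat.zero_add] at heq
        have hxlt : x < n₂ := by
          by_contra hxn
          push_neg at hxn
          refine hc2 ha₂p ⟨(x - n₂) * n₁ + (n₁ - 1) * n₂, ⟨x - n₂, n₁ - 1, rfl⟩, ?_⟩
          have e1 : n₂ + (n₁ - 1) * n₂ = n₁ * n₂ := by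
            have h1' : (n₁ - 1) + 1 = n₁ := by omega
            calc n₂ + (n₁ - 1) * n₂ = ((n₁ - 1) + 1) * n₂ := by ring
              _ = n₁ * n₂ := by rw [h1']
          have e2 : (x - n₂) * n₁ = x * n₁ - n₂ * n₁ := Nat.sub_mul _ _ _
          have e3 : n₂ * n₁ ≤ x * n₁ := Nat.mul_le_mul_right _ hxn
          have e4 : n₂ * n₁ = n₁ * n₂ := Nat.mul_comm _ _
          omega
        -- show a₂ ≤ q
        have ha₂q : a₂ ≤ q := by
          by_contra hgt
          push_neg at hgt
          have h3 : (q + 1) * n₂ ≤ a₂ * n₂ := Nat.mul_le_mul_right _ hgt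
          have h4 : x * n₁ ≤ (n₂ - 1) * n₁ := Nat.mul_le_mul_right _ (by omega)
          have h5 : (n₂ - 1) * n₁ = n₂ * n₁ - n₁ := by rw [Nat.sub_mul, one_mul]
          have h6 : (q + 1) * n₂ = q * n₂ + n₂ := by ring
          have h7 : q * n₁ + q ≤ q * n₂ := by
            have : q * (n₁ + 1) ≤ q * n₂ := Nat.mul_le_mul_left _ (by omega)
            have h8 : q * (n₁ + 1) = q * n₁ + q := by ring
            omega
          have h9 : n₂ * n₁ = n₁ * n₂ := Nat.mul_comm _ _
          omega
        omega
    · have hx := hx0 ha₁p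
      subst hx
      simp only [Nat.zero_mul, Nat.zero_add] at heq
      rcases Nat.eq_zero_or_pos a₂ with ha₂0 | ha₂p
      · -- a₁ > 0, a₂ = 0 : a₁ * n₁ = n + y * n₂, y < n₁, and a₁ = q + a
        subst ha₂0
        simp only [Nat.zero_mul, Nat.add_zero] at heq
        have hylt : y < n₁ := by
          by_contra hyn
          push_neg at hyn
          refine hc1 ha₁p ⟨(n₂ - 1) * n₁ + (y - n₁) * n₂, ⟨n₂ - 1, y - n₁, rfl⟩, ?_⟩
          have e1 : n₁ + (n₂ - 1) * n₁ = n₂ * n₁ := by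
            have h1' : (n₂ - 1) + 1 = n₂ := by omega
            calc n₁ + (n₂ - 1) * n₁ = ((n₂ - 1) + 1) * n₁ := by ring
              _ = n₂ * n₁ := by rw [h1']
          have e2 : (y - n₁) * n₂ = y * n₂ - n₁ * n₂ := Nat.sub_mul _ _ _
          have e3 : n₁ * n₂ ≤ y * n₂ := Nat.mul_le_mul_right _ hyn
          have e4 : n₂ * n₁ = n₁ * n₂ := Nat.mul_comm _ _
          omega
        -- a₁ ≥ q
        have ha₁q : q ≤ a₁ := by
          by_contra hlt
          push_neg at hlt
          have : a₁ * n₁ < q * n₁ := (Nat.mul_lt_mul_right (by omega : 0 < n₁)).mpr hlt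
          omega
        set b := a₁ - q with hb
        have hbn : b * n₁ = r + y * n₂ := by
          have e1 : b * n₁ = a₁ * n₁ - q * n₁ := by rw [hb]; exact Nat.sub_mul _ _ _
          have e2 : q * n₁ ≤ a₁ * n₁ := Nat.mul_le_mul_right _ ha₁q
          omega
        have hbmod : b * n₁ ≡ r [MOD n₂] := by
          unfold Nat.ModEq
          rw [hbn]
          exact (Nat.add_mul_mod_self_right r y n₂)
        have hab : a ≤ b := hmin b hbmod
        -- b ≤ a : else b ≥ a + n₂, contradiction
        have hba : b ≤ a := by
          by_contra hgt
          push_neg at hgt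
          -- n₂ ∣ b - a
          have hbk : y * n₂ ≥ k * n₂ := by
            have e2 : a * n₁ ≤ b * n₁ := Nat.mul_le_mul_right _ hab
            omega
          have hdvd : n₂ ∣ (b - a) * n₁ := by
            refine ⟨y - k, ?_⟩
            have e1 : (b - a) * n₁ = b * n₁ - a * n₁ := Nat.sub_mul _ _ _
            have e2 : (y - k) * n₂ = y * n₂ - k * n₂ := Nat.sub_mul _ _ _
            have e3 : n₂ * (y - k) = (y - k) * n₂ := Nat.mul_comm _ _
            have e4 : a * n₁ ≤ b * n₁ := Nat.mul_le_mul_right _ hab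
            omega
          have hd2 : n₂ ∣ (b - a) := hcop.symm.dvd_of_dvd_mul_right hdvd
          have hd3 : n₂ ≤ b - a := Nat.le_of_dvd (by omega) hd2
          -- so b ≥ n₂, but b * n₁ = r + y * n₂ ≤ (n₁ - 1) + (n₁ - 1) * n₂
          have e5 : n₂ * n₁ ≤ b * n₁ := Nat.mul_le_mul_right _ (by omega)
          have e6 : y * n₂ ≤ (n₁ - 1) * n₂ := Nat.mul_le_mul_right _ (by omega)
          have e7 : (n₁ - 1) * n₂ = n₁ * n₂ - n₂ := by rw [Nat.sub_mul, one_mul]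
          have e8 : n₂ * n₁ = n₁ * n₂ := Nat.mul_comm _ _
          have e9 : n₂ ≤ n₂ * n₁ := Nat.le_mul_of_pos_right _ (by omega)
          omega
        omega
      · -- a₁ > 0, a₂ > 0 : then y = 0 and a₁ n₁ + a₂ n₂ = n
        have hy := hy0 ha₂p
        subst hy
        simp only [Nat.zero_mul, Nat.add_zero] at heq
        -- (a₁ + a₂) * n₁ ≤ n < (q+1) * n₁
        have h3 : (a₁ + a₂) * n₁ ≤ a₁ * n₁ + a₂ * n₂ := by
          have : a₂ * n₁ ≤ a₂ * n₂ := Nat.mul_le_mul_left _ (le_of_lt h₁₂)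
          have e1 : (a₁ + a₂) * n₁ = a₁ * n₁ + a₂ * n₁ := by ring
          omega
        have h4 : a₁ + a₂ ≤ q := by
          by_contra hgt
          push_neg at hgt
          have h5 : (q + 1) * n₁ ≤ (a₁ + a₂) * n₁ := Nat.mul_le_mul_right _ hgt
          have h6 : (q + 1) * n₁ = q * n₁ + n₁ := by ring
          omega
        omega
  -- conclude
  unfold omega2
  apply le_antisymm
  · refine iSup₂_le fun p hp => ?_
    exact_mod_cast Nat.cast_le.mpr (hub p hp)
  · have hle := le_iSup₂ (f := fun (p : ℕ × ℕ) (_ : IsBullet2 n₁ n₂ n p.1 p.2) =>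
      ((p.1 + p.2 : ℕ) : ℕ∞)) (q + a, 0) hbullet
    simpa using hle
end

section
/- Let 1 < n₁ < n₂ be relatively prime natural numbers and Γ = ⟨n₁, n₂⟩. A nonzero element x ∈ Γ satisfies ω(x) = x if and only if x = n₁ or x = n₂. -/
/-- Frobenius: `n₁n₂ - n₁ - n₂ ∉ Γ`. -/
lemma frob2 (n₁ n₂ : ℕ) (h₁ : 1 < n₁) (hcop : Nat.Coprime n₁ n₂) :
    ∀ c d : ℕ, (c + 1) * n₁ + (d + 1) * n₂ ≠ n₁ * n₂ := by
  intro c d h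
  have h1 : n₁ ∣ (d + 1) * n₂ := by
    have hd : n₁ ∣ (c + 1) * n₁ + (d + 1) * n₂ := h ▸ Dvd.intro n₂ rfl
    exact (Nat.dvd_add_right ⟨c + 1, by ring⟩).mp hd
  have h2 : n₁ ∣ d + 1 := hcop.dvd_of_dvd_mul_right h1
  have h3 : n₁ ≤ d + 1 := Nat.le_of_dvd (Nat.succ_pos d) h2
  have h4 : n₁ * n₂ ≤ (d + 1) * n₂ := Nat.mul_le_mul_right n₂ h3
  have h5 : 0 < (c + 1) * n₁ := Nat.mul_pos (Nat.succ_pos c) (by omega)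
  omega

/-- Main bound: any bullet for `x` has `a₁ + a₂ ≤ x`, with equality only for
`x = n₁` or `x = n₂`. -/
lemma bullet_bound (n₁ n₂ : ℕ) (h₁ : 1 < n₁) (h₁₂ : n₁ < n₂)
    (hcop : Nat.Coprime n₁ n₂) (x : ℕ) (hx : x ∈ Gam2 n₁ n₂) (hx0 : x ≠ 0)
    (a₁ a₂ : ℕ) (hb : IsBullet2 n₁ n₂ x a₁ a₂) :
    a₁ + a₂ ≤ x ∧ (a₁ + a₂ = x → x = n₁ ∨ x = n₂) := by
  obtain ⟨⟨d, ⟨c₁, c₂, rfl⟩, heq⟩, hA, hB⟩ := hb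
  obtain ⟨u, v, rfl⟩ := hx
  rcases Nat.eq_zero_or_pos a₁ with ha1 | ha1
  · rcases Nat.eq_zero_or_pos a₂ with ha2 | ha2
    · -- a₁ = a₂ = 0 : impossible
      subst ha1; subst ha2
      exfalso
      have h5 : 0 ≤ u * n₁ := Nat.zero_le _
      omega
    · -- a₁ = 0, a₂ > 0
      subst ha1
      -- every representation of d has second coordinate 0
      have hc2 : c₂ = 0 := by
        rcases c₂ with _ | k
        · rfl
        · exfalso
          exact hB ha2 ⟨c₁ * n₁ + k * n₂, ⟨c₁, k, rfl⟩, by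
            have : (k + 1) * n₂ = k * n₂ + n₂ := by ring
            omega⟩
      subst hc2
      have hc1 : c₁ < n₂ := by
        by_contra hge
        push_neg at hge
        obtain ⟨e, rfl⟩ : ∃ e, c₁ = n₂ + e := ⟨c₁ - n₂, by omega⟩
        refine hB ha2 ⟨e * n₁ + (n₁ - 1) * n₂, ⟨e, n₁ - 1, rfl⟩, ?_⟩
        have h6 : (n₂ + e) * n₁ = n₂ * n₁ + e * n₁ := by ring
        have h7 : (n₁ - 1) * n₂ + n₂ = n₁ * n₂ := by
          have : (n₁ - 1) * n₂ = n₁ * n₂ - n₂ := by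
            rw [Nat.sub_mul, one_mul]
          have h8 : n₂ ≤ n₁ * n₂ := Nat.le_mul_of_pos_left n₂ (by omega)
          omega
        have h9 : n₂ * n₁ = n₁ * n₂ := Nat.mul_comm _ _
        omega
      -- heq : a₂ * n₂ = u*n₁ + v*n₂ + c₁*n₁
      have hvle : v ≤ a₂ := by
        have h5 : v * n₂ ≤ a₂ * n₂ := by omega
        exact Nat.le_of_mul_le_mul_right h5 (by omega)
      have hsub : (a₂ - v) * n₂ = (u + c₁) * n₁ := by
        have h6 : (a₂ - v) * n₂ = a₂ * n₂ - v * n₂ := by rw [Nat.sub_mul]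
        have h7 : (u + c₁) * n₁ = u * n₁ + c₁ * n₁ := by ring
        omega
      have hdvd : n₂ ∣ u + c₁ := by
        have h := dvd_mul_left n₂ (a₂ - v)
        rw [hsub] at h
        exact hcop.symm.dvd_of_dvd_mul_right h
      obtain ⟨t, ht⟩ := hdvd
      rw [Nat.mul_comm] at ht
      have ha : a₂ = v + t * n₁ := by
        have h6 : (a₂ - v) * n₂ = (t * n₁) * n₂ := by
          rw [hsub, ht]; ring
        have h7 : a₂ - v = t * n₁ := Nat.eq_of_mul_eq_mul_right (by omega) h6
        omega
      rcases Nat.eq_zero_or_pos u with hu | hu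
      · -- u = 0 : t = 0, a₂ = v, x = v*n₂, strict
        subst hu
        have ht0 : t = 0 := by
          rcases Nat.eq_zero_or_pos t with h | h
          · exact h
          · exfalso
            have : n₂ ≤ t * n₂ := Nat.le_mul_of_pos_left n₂ h
            omega
        subst ht0
        have hv1 : 1 ≤ v := by
          rcases Nat.eq_zero_or_pos v with h | h
          · exfalso; subst h; simp at hx0
          · exact h
        have hm : v * 2 ≤ v * n₂ := Nat.mul_le_mul_left v (by omega)
        constructor
        · omega
        · intro h; exfalso; omega
      · -- u ≥ 1
        have htu : t ≤ u := by
          by_contra hlt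
          push_neg at hlt
          have h5 : (u + 1) * n₂ ≤ t * n₂ := Nat.mul_le_mul_right n₂ (by omega)
          have h6 : (u + 1) * n₂ = u * n₂ + n₂ := by ring
          have h7 : u ≤ u * n₂ := Nat.le_mul_of_pos_right u (by omega)
          omega
        have h5 : t * n₁ ≤ u * n₁ := Nat.mul_le_mul_right n₁ htu
        have h6 : v ≤ v * n₂ := Nat.le_mul_of_pos_right v (by omega)
        constructor
        · omega
        · intro hEq
          -- forces v = v*n₂ (so v = 0) and t*n₁ = u*n₁ (so t = u)
          have hveq : v = v * n₂ := by omega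
          have hv0 : v = 0 := by
            have hm : v * 2 ≤ v * n₂ := Nat.mul_le_mul_left v (by omega)
            omega
          subst hv0
          have hteq : t = u := by
            have : t * n₁ = u * n₁ := by omega
            exact Nat.eq_of_mul_eq_mul_right (by omega) this
          rw [hteq] at ht
          -- ht : u + c₁ = n₂ * t, c₁ < n₂, u ≥ 1 ⟹ u = 1
          have hu1 : u = 1 := by
            by_contra hne
            have hu2 : 2 ≤ u := by omega
            have h8 : u * 2 ≤ u * n₂ := Nat.mul_le_mul_left u (by omega)
            have h9 : 2 * n₂ ≤ u * n₂ := Nat.mul_le_mul_right n₂ hu2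
            omega
          subst hu1
          left; omega
  · rcases Nat.eq_zero_or_pos a₂ with ha2 | ha2
    · -- a₂ = 0, a₁ > 0  (symmetric)
      subst ha2
      have hc1 : c₁ = 0 := by
        rcases c₁ with _ | k
        · rfl
        · exfalso
          exact hA ha1 ⟨k * n₁ + c₂ * n₂, ⟨k, c₂, rfl⟩, by
            have : (k + 1) * n₁ = k * n₁ + n₁ := by ring
            omega⟩
      subst hc1
      have hc2 : c₂ < n₁ := by
        by_contra hge
        push_neg at hge
        obtain ⟨e, rfl⟩ : ∃ e, c₂ = n₁ + e := ⟨c₂ - n₁, by omega⟩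
        refine hA ha1 ⟨(n₂ - 1) * n₁ + e * n₂, ⟨n₂ - 1, e, rfl⟩, ?_⟩
        have h6 : (n₁ + e) * n₂ = n₁ * n₂ + e * n₂ := by ring
        have h7 : (n₂ - 1) * n₁ + n₁ = n₂ * n₁ := by
          have : (n₂ - 1) * n₁ = n₂ * n₁ - n₁ := by
            rw [Nat.sub_mul, one_mul]
          have h8 : n₁ ≤ n₂ * n₁ := Nat.le_mul_of_pos_left n₁ (by omega)
          omega
        have h9 : n₂ * n₁ = n₁ * n₂ := Nat.mul_comm _ _
        omega
      -- heq : a₁ * n₁ = u*n₁ + v*n₂ + c₂*n₂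
      have hule : u ≤ a₁ := by
        have h5 : u * n₁ ≤ a₁ * n₁ := by omega
        exact Nat.le_of_mul_le_mul_right h5 (by omega)
      have hsub : (a₁ - u) * n₁ = (v + c₂) * n₂ := by
        have h6 : (a₁ - u) * n₁ = a₁ * n₁ - u * n₁ := by rw [Nat.sub_mul]
        have h7 : (v + c₂) * n₂ = v * n₂ + c₂ * n₂ := by ring
        omega
      have hdvd : n₁ ∣ v + c₂ := by
        have h := dvd_mul_left n₁ (a₁ - u)
        rw [hsub] at h
        exact hcop.dvd_of_dvd_mul_right h
      obtain ⟨t, ht⟩ := hdvd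
      rw [Nat.mul_comm] at ht
      have ha : a₁ = u + t * n₂ := by
        have h6 : (a₁ - u) * n₁ = (t * n₂) * n₁ := by
          rw [hsub, ht]; ring
        have h7 : a₁ - u = t * n₂ := Nat.eq_of_mul_eq_mul_right (by omega) h6
        omega
      rcases Nat.eq_zero_or_pos v with hv | hv
      · -- v = 0 : t = 0, a₁ = u, x = u*n₁, strict
        subst hv
        have ht0 : t = 0 := by
          rcases Nat.eq_zero_or_pos t with h | h
          · exact h
          · exfalso
            have : n₁ ≤ t * n₁ := Nat.le_mul_of_pos_left n₁ h
            omega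
        subst ht0
        have hu1 : 1 ≤ u := by
          rcases Nat.eq_zero_or_pos u with h | h
          · exfalso; subst h; simp at hx0
          · exact h
        have hm : u * 2 ≤ u * n₁ := Nat.mul_le_mul_left u (by omega)
        constructor
        · omega
        · intro h; exfalso; omega
      · -- v ≥ 1
        have htv : t ≤ v := by
          by_contra hlt
          push_neg at hlt
          have h5 : (v + 1) * n₁ ≤ t * n₁ := Nat.mul_le_mul_right n₁ (by omega)
          have h6 : (v + 1) * n₁ = v * n₁ + n₁ := by ring
          have h7 : v ≤ v * n₁ := Nat.le_mul_of_pos_right v (by omega)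
          omega
        have h5 : t * n₂ ≤ v * n₂ := Nat.mul_le_mul_right n₂ htv
        have h6 : u ≤ u * n₁ := Nat.le_mul_of_pos_right u (by omega)
        constructor
        · omega
        · intro hEq
          have hueq : u = u * n₁ := by omega
          have hu0 : u = 0 := by
            have hm : u * 2 ≤ u * n₁ := Nat.mul_le_mul_left u (by omega)
            omega
          subst hu0
          have hteq : t = v := by
            have : t * n₂ = v * n₂ := by omega
            exact Nat.eq_of_mul_eq_mul_right (by omega) this
          rw [hteq] at ht
          have hv1 : v = 1 := by
            by_contra hne
            have hv2 : 2 ≤ v := by omega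
            have h8 : v * 2 ≤ v * n₁ := Nat.mul_le_mul_left v (by omega)
            have h9 : 2 * n₁ ≤ v * n₁ := Nat.mul_le_mul_right n₁ hv2
            omega
          subst hv1
          right; omega
    · -- both positive : d = 0, x = a₁n₁ + a₂n₂
      have hc1 : c₁ = 0 := by
        rcases c₁ with _ | k
        · rfl
        · exfalso
          exact hA ha1 ⟨k * n₁ + c₂ * n₂, ⟨k, c₂, rfl⟩, by
            have : (k + 1) * n₁ = k * n₁ + n₁ := by ring
            omega⟩
      have hc2 : c₂ = 0 := by
        rcases c₂ with _ | k
        · rfl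
        · exfalso
          exact hB ha2 ⟨c₁ * n₁ + k * n₂, ⟨c₁, k, rfl⟩, by
            have : (k + 1) * n₂ = k * n₂ + n₂ := by ring
            omega⟩
      subst hc1; subst hc2
      have h5 : a₁ * 2 ≤ a₁ * n₁ := Nat.mul_le_mul_left a₁ (by omega)
      have h6 : a₂ * 2 ≤ a₂ * n₂ := Nat.mul_le_mul_left a₂ (by omega)
      constructor
      · omega
      · intro h; exfalso; omega

lemma bullet_n₁ (n₁ n₂ : ℕ) (h₁ : 1 < n₁) (h₁₂ : n₁ < n₂)
    (hcop : Nat.Coprime n₁ n₂) : IsBullet2 n₁ n₂ n₁ 0 n₁ := by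
  refine ⟨⟨(n₂ - 1) * n₁, ⟨n₂ - 1, 0, by ring⟩, ?_⟩, fun h => absurd h (by omega), ?_⟩
  · have h7 : (n₂ - 1) * n₁ + n₁ = n₂ * n₁ := by
      rw [Nat.sub_mul, one_mul]
      have : n₁ ≤ n₂ * n₁ := Nat.le_mul_of_pos_left n₁ (by omega)
      omega
    have h9 : n₁ * n₂ = n₂ * n₁ := Nat.mul_comm _ _
    omega
  · rintro - ⟨d, ⟨c, e, rfl⟩, hEq⟩
    refine frob2 n₁ n₂ h₁ hcop c e ?_
    have h6 : (c + 1) * n₁ = c * n₁ + n₁ := by ring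
    have h7 : (e + 1) * n₂ = e * n₂ + n₂ := by ring
    omega

lemma bullet_n₂ (n₁ n₂ : ℕ) (h₁ : 1 < n₁) (h₁₂ : n₁ < n₂)
    (hcop : Nat.Coprime n₁ n₂) : IsBullet2 n₁ n₂ n₂ n₂ 0 := by
  refine ⟨⟨(n₁ - 1) * n₂, ⟨0, n₁ - 1, by ring⟩, ?_⟩, ?_, fun h => absurd h (by omega)⟩
  · have h7 : (n₁ - 1) * n₂ + n₂ = n₁ * n₂ := by
      rw [Nat.sub_mul, one_mul]
      have : n₂ ≤ n₁ * n₂ := Nat.le_mul_of_pos_left n₂ (by omega)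
      omega
    have h9 : n₂ * n₁ = n₁ * n₂ := Nat.mul_comm _ _
    omega
  · rintro - ⟨d, ⟨c, e, rfl⟩, hEq⟩
    refine frob2 n₁ n₂ h₁ hcop c e ?_
    have h6 : (c + 1) * n₁ = c * n₁ + n₁ := by ring
    have h7 : (e + 1) * n₂ = e * n₂ + n₂ := by ring
    have h9 : n₂ * n₁ = n₁ * n₂ := Nat.mul_comm _ _
    omega

/-- In `Γ = ⟨n₁, n₂⟩` with `1 < n₁ < n₂` coprime, a nonzero `x ∈ Γ` satisfies
`ω(x) = x` if and only if `x = n₁` or `x = n₂`. -/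
theorem omega2_eq_self_iff (n₁ n₂ : ℕ) (h₁ : 1 < n₁) (h₁₂ : n₁ < n₂)
    (hcop : Nat.Coprime n₁ n₂) (x : ℕ) (hx : x ∈ Gam2 n₁ n₂) (hx0 : x ≠ 0) :
    omega2 n₁ n₂ x = (x : ℕ∞) ↔ (x = n₁ ∨ x = n₂) := by
  constructor
  · intro hω
    by_contra hne
    push_neg at hne
    have hub : omega2 n₁ n₂ x ≤ ((x - 1 : ℕ) : ℕ∞) := by
      refine iSup₂_le fun a ha => ?_
      have hbd := bullet_bound n₁ n₂ h₁ h₁₂ hcop x hx hx0 a.1 a.2 ha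
      have : a.1 + a.2 ≤ x - 1 := by
        rcases Nat.lt_or_ge (a.1 + a.2) x with h | h
        · omega
        · have heq : a.1 + a.2 = x := le_antisymm hbd.1 h
          rcases hbd.2 heq with h' | h' <;> [exact absurd h' hne.1; exact absurd h' hne.2]
      exact Nat.cast_le.mpr this
    rw [hω] at hub
    have : x ≤ x - 1 := Nat.cast_le.mp hub
    omega
  · rintro (rfl | rfl)
    · refine le_antisymm ?_ ?_
      · refine iSup₂_le fun a ha => ?_
        exact Nat.cast_le.mpr
          (bullet_bound x n₂ h₁ h₁₂ hcop x ⟨1, 0, by ring⟩ hx0 a.1 a.2 ha).1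
      · have h := le_iSup₂ (f := fun (a : ℕ × ℕ) (_ : IsBullet2 x n₂ x a.1 a.2) =>
          ((a.1 + a.2 : ℕ) : ℕ∞)) ((0, x) : ℕ × ℕ) (bullet_n₁ x n₂ h₁ h₁₂ hcop)
        simpa [omega2] using h
    · refine le_antisymm ?_ ?_
      · refine iSup₂_le fun a ha => ?_
        exact Nat.cast_le.mpr
          (bullet_bound n₁ x h₁ h₁₂ hcop x ⟨0, 1, by ring⟩ hx0 a.1 a.2 ha).1
      · have h := le_iSup₂ (f := fun (a : ℕ × ℕ) (_ : IsBullet2 n₁ x x a.1 a.2) =>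
          ((a.1 + a.2 : ℕ) : ℕ∞)) ((x, 0) : ℕ × ℕ) (bullet_n₂ n₁ x h₁ h₁₂ hcop)
        simpa [omega2] using h
end

section
/- Let Γ = ⟨n₁,…,n_k⟩ be a numerical monoid with smallest minimal generator n₁. Then the ω-function on Γ is eventually quasilinear: there exist N₀ > 0 and a function a₀ : ℕ → ℚ that is periodic with period dividing n₁ such that ω(n) = n/n₁ + a₀(n) for every n ∈ Γ with n > N₀. -/
open Finset

/-- The numerical monoid generated by `gen : Fin k → ℕ`. -/
def NumSG {k : ℕ} (gen : Fin k → ℕ) : Set ℕ :=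
  {x | ∃ c : Fin k → ℕ, x = ∑ i, c i * gen i}

/-- `a : Fin k → ℕ` is a bullet for `n` in the numerical monoid generated by
`gen`: `Σᵢ aᵢ·genᵢ − n ∈ Γ`, but `Σᵢ aᵢ·genᵢ − gen j − n ∉ Γ` whenever `a j > 0`. -/
def IsBulletNum {k : ℕ} (gen : Fin k → ℕ) (n : ℕ) (a : Fin k → ℕ) : Prop :=
  (∃ d ∈ NumSG gen, ∑ i, a i * gen i = n + d) ∧
    ∀ j, 0 < a j → ¬∃ d ∈ NumSG gen, ∑ i, a i * gen i = n + gen j + d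

/-- The ω-primality of `n`: the supremum of `Σᵢ aᵢ` over all bullets `a` for `n`. -/
noncomputable def omegaNum {k : ℕ} (gen : Fin k → ℕ) (n : ℕ) : ℕ∞ :=
  ⨆ (a : Fin k → ℕ) (_ : IsBulletNum gen n a), ((∑ i, a i : ℕ) : ℕ∞)

/-- `gen` is a minimal generating set: the generators are positive, relatively
prime, and no generator lies in the monoid generated by the others. -/
def MinimalGens {k : ℕ} (gen : Fin k → ℕ) : Prop :=
  (∀ i, 0 < gen i) ∧ Finset.univ.gcd gen = 1 ∧
    ∀ j, ¬∃ c : Fin k → ℕ, c j = 0 ∧ gen j = ∑ i, c i * gen i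

section Aux
variable {k : ℕ} {gen : Fin (k+1) → ℕ}

lemma numsg_zero : 0 ∈ NumSG gen := ⟨0, by simp⟩

lemma numsg_add {x y : ℕ} (hx : x ∈ NumSG gen) (hy : y ∈ NumSG gen) :
    x + y ∈ NumSG gen := by
  obtain ⟨c, rfl⟩ := hx; obtain ⟨d, rfl⟩ := hy
  exact ⟨c + d, by simp [add_mul, Finset.sum_add_distrib]⟩

lemma numsg_gen (i : Fin (k+1)) : gen i ∈ NumSG gen :=
  ⟨fun j => if j = i then 1 else 0, by simp⟩

lemma numsg_nsmul {x : ℕ} (hx : x ∈ NumSG gen) (c : ℕ) : c * x ∈ NumSG gen := by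
  induction c with
  | zero => simpa using (numsg_zero : 0 ∈ NumSG gen)
  | succ m ih => rw [Nat.succ_mul]; exact numsg_add ih hx

lemma exists_bezout (s : Finset (Fin (k+1))) :
    ∃ f : Fin (k+1) → ℤ, ((s.gcd gen : ℕ) : ℤ) = ∑ i ∈ s, (f i) * (gen i : ℤ) := by
  classical
  induction s using Finset.induction with
  | empty => exact ⟨0, by simp⟩
  | @insert a s ha ih =>
    obtain ⟨f, hf⟩ := ih
    refine ⟨fun i => if i = a then Nat.gcdA (gen a) (s.gcd gen) else f i * Nat.gcdB (gen a) (s.gcd gen), ?_⟩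
    rw [Finset.gcd_insert, Finset.sum_insert ha]
    have hb := Nat.gcd_eq_gcd_ab (gen a) (s.gcd gen)
    simp only [if_pos rfl]
    rw [Finset.sum_congr rfl (fun i hi => by rw [if_neg (by rintro rfl; exact ha hi)])]
    have h2 : ∑ i ∈ s, f i * Nat.gcdB (gen a) (s.gcd gen) * (gen i : ℤ)
        = (∑ i ∈ s, f i * (gen i : ℤ)) * Nat.gcdB (gen a) (s.gcd gen) := by
      rw [Finset.sum_mul]; exact Finset.sum_congr rfl (fun i _ => by ring)
    rw [h2, ← hf]
    push_cast
    have hg : GCDMonoid.gcd (gen a) (s.gcd gen) = Nat.gcd (gen a) (s.gcd gen) := rfl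
    rw [hg, hb]; ring

lemma exists_frob (hgcd : Finset.univ.gcd gen = 1) :
    ∃ F : ℕ, ∀ x : ℕ, F ≤ x → x ∈ NumSG gen := by
  obtain ⟨f, hf⟩ := exists_bezout (gen := gen) Finset.univ
  rw [hgcd] at hf
  set t := ∑ i, (f i).toNat * gen i with ht
  set s := ∑ i, (-(f i)).toNat * gen i with hs
  have htm : t ∈ NumSG gen := ⟨_, rfl⟩
  have hsm : s ∈ NumSG gen := ⟨_, rfl⟩
  have hts : t = s + 1 := by
    have h1 : (t : ℤ) = (s : ℤ) + 1 := by
      have hct : (t : ℤ) = ∑ i, ((f i).toNat : ℤ) * gen i := by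
        rw [ht]; push_cast; rfl
      have hcs : (s : ℤ) = ∑ i, ((-(f i)).toNat : ℤ) * gen i := by
        rw [hs]; push_cast; rfl
      rw [hct, hcs]
      calc (∑ i, ((f i).toNat : ℤ) * gen i)
          = ∑ i, (((-(f i)).toNat : ℤ) * gen i + f i * gen i) := by
            refine Finset.sum_congr rfl fun i _ => ?_
            have h2 : ((f i).toNat : ℤ) - ((-(f i)).toNat : ℤ) = f i :=
              Int.toNat_sub_toNat_neg (f i)
            linear_combination (gen i : ℤ) * h2
        _ = (∑ i, ((-(f i)).toNat : ℤ) * gen i) + ∑ i, f i * gen i :=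
            Finset.sum_add_distrib
        _ = (∑ i, ((-(f i)).toNat : ℤ) * gen i) + 1 := by rw [← hf]; norm_num
    exact_mod_cast h1
  rcases Nat.eq_zero_or_pos s with h0 | hspos
  · refine ⟨0, fun x _ => ?_⟩
    have h1 : t = 1 := by omega
    have h2 := numsg_nsmul htm x
    rwa [h1, Nat.mul_one] at h2
  · refine ⟨s * s, fun x hx => ?_⟩
    have hr : x % s < s := Nat.mod_lt _ hspos
    have hq : s ≤ x / s := (Nat.le_div_iff_mul_le hspos).mpr hx
    have h3 : s * (x / s) + x % s = x := Nat.div_add_mod x s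
    obtain ⟨u, hu⟩ : ∃ u, x / s = x % s + u := ⟨x / s - x % s, by omega⟩
    have hx2 : x = u * s + (x % s) * t := by
      rw [hts]
      calc x = s * (x % s + u) + x % s := by rw [← hu]; exact h3.symm
        _ = u * s + (x % s) * (s + 1) := by ring
    rw [hx2]
    exact numsg_add (numsg_nsmul hsm u) (numsg_nsmul htm (x % s))

lemma sum_pure (m : ℕ) :
    ∑ i : Fin (k+1), (if i = 0 then m else 0) * gen i = m * gen 0 := by
  rw [Finset.sum_eq_single 0]
  · simp
  · intro b _ hb; simp [hb]
  · simp

lemma sum_shift (a : Fin (k+1) → ℕ) :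
    ∑ i, (a i + if i = 0 then 1 else 0) * gen i = (∑ i, a i * gen i) + gen 0 := by
  simp only [add_mul, Finset.sum_add_distrib]
  rw [sum_pure]; ring

lemma sum_count_shift (a : Fin (k+1) → ℕ) :
    ∑ i, (a i + if i = 0 then 1 else 0) = (∑ i, a i) + 1 := by
  rw [Finset.sum_add_distrib]
  simp

lemma sum_count_shift_down {a : Fin (k+1) → ℕ} (h0 : 0 < a 0) :
    (∑ i, (a i - if i = 0 then 1 else 0)) + 1 = ∑ i, a i := by
  have hab : ∀ i, a i = (a i - if i = 0 then 1 else 0) + (if i = 0 then 1 else 0) := by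
    intro i
    rcases eq_or_ne i 0 with rfl | hne <;> simp [*] <;> omega
  conv_rhs => rw [Finset.sum_congr rfl fun i _ => by rw [hab i]]
  rw [sum_count_shift]

lemma sum_ge (hpos : 0 < gen 0) (hmono : StrictMono gen) (a : Fin (k+1) → ℕ) :
    ∑ i, a i ≤ ∑ i, a i * gen i := by
  refine Finset.sum_le_sum fun i _ => ?_
  have : 0 < gen i := lt_of_lt_of_le hpos (hmono.monotone (Fin.zero_le i))
  exact Nat.le_mul_of_pos_right _ this

lemma sum_ge' (hmono : StrictMono gen) {a : Fin (k+1) → ℕ} (h0 : a 0 = 0) :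
    (gen 0 + 1) * ∑ i, a i ≤ ∑ i, a i * gen i := by
  rw [Finset.mul_sum]
  refine Finset.sum_le_sum fun i _ => ?_
  rcases eq_or_ne i 0 with rfl | hne
  · simp [h0]
  · have h1 : gen 0 + 1 ≤ gen i := hmono (Fin.pos_of_ne_zero hne)
    calc (gen 0 + 1) * a i ≤ gen i * a i := Nat.mul_le_mul_right _ h1
      _ = a i * gen i := Nat.mul_comm _ _

lemma bullet_pos {n : ℕ} (hn : 0 < n) {a : Fin (k+1) → ℕ}
    (h : IsBulletNum gen n a) : ∃ j, 0 < a j := by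
  by_contra hno
  push_neg at hno
  obtain ⟨d, _, hS⟩ := h.1
  have hz : ∑ i, a i * gen i = 0 :=
    Finset.sum_eq_zero fun i _ => by rw [Nat.le_zero.mp (hno i), Nat.zero_mul]
  omega

lemma bullet_d_lt {F : ℕ} (hF : ∀ x, F ≤ x → x ∈ NumSG gen)
    {n d : ℕ} {a : Fin (k+1) → ℕ} (h : IsBulletNum gen n a) {j} (hj : 0 < a j)
    (hS : ∑ i, a i * gen i = n + d) : d < gen j + F := by
  by_contra hge
  push_neg at hge
  exact h.2 j hj ⟨d - gen j, hF _ (by omega), by omega⟩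

lemma bullet_a0_bound (hmono : StrictMono gen) {F : ℕ}
    (hF : ∀ x, F ≤ x → x ∈ NumSG gen) {n : ℕ} (hn0 : 0 < n)
    {a : Fin (k+1) → ℕ} (h : IsBulletNum gen n a) (h0 : a 0 = 0) :
    (gen 0 + 1) * (∑ i, a i) ≤ n + (gen (Fin.last k) + F) := by
  obtain ⟨j, hj⟩ := bullet_pos hn0 h
  obtain ⟨d, hd, hS⟩ := h.1
  have h1 := bullet_d_lt hF h hj hS
  have h2 : gen j ≤ gen (Fin.last k) := hmono.monotone (Fin.le_last j)
  have h3 := sum_ge' hmono h0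
  omega

lemma bullet_shift_up {n : ℕ} {a : Fin (k+1) → ℕ} (h : IsBulletNum gen n a)
    (h0 : 0 < a 0) :
    IsBulletNum gen (n + gen 0) (fun i => a i + if i = 0 then 1 else 0) := by
  obtain ⟨⟨d, hd, hS⟩, hmin⟩ := h
  constructor
  · exact ⟨d, hd, by rw [sum_shift, hS]; ring⟩
  · rintro j hj ⟨e, he, hSe⟩
    have haj : 0 < a j := by
      rcases eq_or_ne j 0 with rfl | hne
      · exact h0
      · simpa [if_neg hne] using hj
    rw [sum_shift] at hSe
    exact hmin j haj ⟨e, he, by omega⟩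

lemma bullet_shift_down {n : ℕ} {a : Fin (k+1) → ℕ}
    (h : IsBulletNum gen (n + gen 0) a) (h0 : 0 < a 0) :
    IsBulletNum gen n (fun i => a i - if i = 0 then 1 else 0) := by
  set b : Fin (k+1) → ℕ := fun i => a i - if i = 0 then 1 else 0 with hb
  have hab : ∀ i, a i = b i + if i = 0 then 1 else 0 := by
    intro i
    rcases eq_or_ne i 0 with rfl | hne <;> simp [hb, *] <;> omega
  have hsum : ∑ i, a i * gen i = (∑ i, b i * gen i) + gen 0 := by
    conv_lhs => rw [Finset.sum_congr rfl (fun i _ => by rw [hab i])]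
    exact sum_shift _
  obtain ⟨⟨d, hd, hS⟩, hmin⟩ := h
  constructor
  · exact ⟨d, hd, by omega⟩
  · rintro j hj ⟨e, he, hSe⟩
    have haj : 0 < a j := by have := hab j; omega
    exact hmin j haj ⟨e, he, by omega⟩

lemma exists_mul (hpos : 0 < gen 0) {n : ℕ} (hn : n ∈ NumSG gen) :
    ∃ m : ℕ, ∃ d ∈ NumSG gen, m * gen 0 = n + d := by
  obtain ⟨g, hg⟩ := Nat.exists_eq_succ_of_ne_zero hpos.ne'
  refine ⟨n, g * n, numsg_nsmul hn g, ?_⟩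
  rw [hg, Nat.succ_eq_add_one]; ring

lemma pure_bullet (hpos : 0 < gen 0) {n : ℕ} (hn : n ∈ NumSG gen) (hn0 : 0 < n) :
    ∃ m : ℕ, (∑ i : Fin (k+1), (if i = 0 then m else 0 : ℕ)) = m ∧
      IsBulletNum gen n (fun i => if i = 0 then m else 0) ∧ n ≤ m * gen 0 := by
  classical
  have hex := exists_mul hpos hn
  obtain ⟨d, hd, hmd⟩ := Nat.find_spec hex
  set m := Nat.find hex with hm
  have hm1 : 0 < m := by
    rcases Nat.eq_zero_or_pos m with h | h
    · rw [h] at hmd; omega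
    · exact h
  refine ⟨m, ?_, ⟨⟨d, hd, by rw [sum_pure]; exact hmd⟩, ?_⟩, by omega⟩
  · rw [Finset.sum_eq_single 0] <;> simp +contextual
  · rintro j hj ⟨e, he, hSe⟩
    have hj0 : j = 0 := by by_contra hne; simp [if_neg hne] at hj
    subst hj0
    rw [sum_pure] at hSe
    have hsub : (m - 1) * gen 0 = n + e := by
      have h1 : (m - 1) * gen 0 + gen 0 = m * gen 0 := by
        rw [Nat.sub_one_mul]; omega
      omega
    exact Nat.find_min hex (show m - 1 < m by omega) ⟨e, he, hsub⟩

lemma key_arith {g B S mv n : ℕ} (hg : 0 < g) (hS : (g+1) * S ≤ n + B)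
    (hm : n ≤ mv * g) (hn : g * (B + g + 1) < n) : S + 1 ≤ mv := by
  rcases le_or_gt (B + g) S with h | h
  · have h2 : (S + 1) * g ≤ n := by nlinarith
    exact Nat.le_of_mul_le_mul_right (h2.trans hm) hg
  · have h3 : (B + g) * g < mv * g := by nlinarith
    have h4 := Nat.lt_of_mul_lt_mul_right h3
    omega

end Aux

/-- The set of bullet lengths for `n`. -/
def VSet {k : ℕ} (gen : Fin (k+1) → ℕ) (n : ℕ) : Set ℕ :=
  {v | ∃ a, IsBulletNum gen n a ∧ ∑ i, a i = v}

/-- The (eventual) ω-value as a natural number. -/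
noncomputable def Wf {k : ℕ} (gen : Fin (k+1) → ℕ) (n : ℕ) : ℕ :=
  sSup (VSet gen n)

section W
variable {k : ℕ} {gen : Fin (k+1) → ℕ}

lemma vset_bdd (hpos : 0 < gen 0) (hmono : StrictMono gen) {F : ℕ}
    (hF : ∀ x, F ≤ x → x ∈ NumSG gen) (n : ℕ) :
    ∀ v ∈ VSet gen n, v ≤ n + (gen (Fin.last k) + F) := by
  rintro v ⟨a, ha, rfl⟩
  by_cases hz : ∃ j, 0 < a j
  · obtain ⟨j, hj⟩ := hz
    obtain ⟨d, hd, hS⟩ := ha.1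
    have h1 := bullet_d_lt hF ha hj hS
    have h2 : gen j ≤ gen (Fin.last k) := hmono.monotone (Fin.le_last j)
    have h3 := sum_ge hpos hmono a
    omega
  · push_neg at hz
    have hz2 : ∑ i, a i = 0 := Finset.sum_eq_zero fun i _ => Nat.le_zero.mp (hz i)
    omega

lemma vset_bddAbove (hpos : 0 < gen 0) (hmono : StrictMono gen) {F : ℕ}
    (hF : ∀ x, F ≤ x → x ∈ NumSG gen) (n : ℕ) : BddAbove (VSet gen n) :=
  ⟨n + (gen (Fin.last k) + F), fun v hv => vset_bdd hpos hmono hF n v hv⟩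

lemma omega_eq_W (hpos : 0 < gen 0) (hmono : StrictMono gen) {F : ℕ}
    (hF : ∀ x, F ≤ x → x ∈ NumSG gen) {n : ℕ} (hn : n ∈ NumSG gen) (hn0 : 0 < n) :
    omegaNum gen n = (Wf gen n : ℕ∞) := by
  have bdd := vset_bddAbove hpos hmono hF n
  obtain ⟨mv, hms, hmb, _⟩ := pure_bullet hpos hn hn0
  have hne : (VSet gen n).Nonempty := ⟨mv, _, hmb, hms⟩
  apply le_antisymm
  · refine iSup_le fun a => iSup_le fun ha => ?_
    exact_mod_cast Nat.cast_le.mpr (le_csSup bdd ⟨a, ha, rfl⟩)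
  · obtain ⟨a, ha, hv⟩ := Nat.sSup_mem hne bdd
    calc ((Wf gen n : ℕ) : ℕ∞) = ((∑ i, a i : ℕ) : ℕ∞) := by rw [hv]; rfl
      _ ≤ _ := le_iSup₂ (f := fun (a : Fin (k+1) → ℕ) (_ : IsBulletNum gen n a) =>
          ((∑ i, a i : ℕ) : ℕ∞)) a ha

lemma W_step (hpos : 0 < gen 0) (hmono : StrictMono gen) {F : ℕ}
    (hF : ∀ x, F ≤ x → x ∈ NumSG gen) {n : ℕ} (hn : n ∈ NumSG gen)
    (hN : gen 0 * ((gen (Fin.last k) + F) + gen 0 + 1) < n) :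
    Wf gen (n + gen 0) = Wf gen n + 1 := by
  have hW1 : Wf gen n = sSup (VSet gen n) := rfl
  have hW2 : Wf gen (n + gen 0) = sSup (VSet gen (n + gen 0)) := rfl
  have hn0 : 0 < n := Nat.lt_of_le_of_lt (Nat.zero_le _) hN
  have hng : n + gen 0 ∈ NumSG gen := numsg_add hn (numsg_gen 0)
  have bdd1 := vset_bddAbove hpos hmono hF n
  have bdd2 := vset_bddAbove hpos hmono hF (n + gen 0)
  obtain ⟨mv, hmsum, hmb, hmle⟩ := pure_bullet hpos hn hn0
  obtain ⟨mv', hmsum', hmb', hmle'⟩ := pure_bullet hpos hng (by omega)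
  have hmv_mem : mv ∈ VSet gen n := ⟨_, hmb, hmsum⟩
  have hmv'_mem : mv' ∈ VSet gen (n + gen 0) := ⟨_, hmb', hmsum'⟩
  have hne1 : (VSet gen n).Nonempty := ⟨mv, hmv_mem⟩
  have hne2 : (VSet gen (n + gen 0)).Nonempty := ⟨mv', hmv'_mem⟩
  have hmv0 : 0 < mv := by
    rcases Nat.eq_zero_or_pos mv with rfl | h
    · simp at hmle; omega
    · exact h
  have hpure0 : (0 : ℕ) < (fun i => if i = 0 then mv else 0 : Fin (k+1) → ℕ) 0 := by
    simpa using hmv0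
  have hsh := bullet_shift_up hmb hpure0
  have hmem1 : mv + 1 ∈ VSet gen (n + gen 0) :=
    ⟨_, hsh, by rw [sum_count_shift, hmsum]⟩
  have hge : Wf gen n + 1 ≤ Wf gen (n + gen 0) := by
    obtain ⟨a, ha, hv⟩ := Nat.sSup_mem hne1 bdd1
    rcases Nat.eq_zero_or_pos (a 0) with h0 | h0
    · have hb := bullet_a0_bound hmono hF hn0 ha h0
      have hk := key_arith hpos hb hmle hN
      have h2 : mv + 1 ≤ Wf gen (n + gen 0) := le_csSup bdd2 hmem1
      omega
    · have hb2 := bullet_shift_up ha h0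
      have hmem2 : Wf gen n + 1 ∈ VSet gen (n + gen 0) :=
        ⟨_, hb2, by rw [sum_count_shift, hv, hW1]⟩
      exact le_csSup bdd2 hmem2
  have hle : Wf gen (n + gen 0) ≤ Wf gen n + 1 := by
    obtain ⟨a, ha, hv⟩ := Nat.sSup_mem hne2 bdd2
    rcases Nat.eq_zero_or_pos (a 0) with h0 | h0
    · exfalso
      have hb := bullet_a0_bound hmono hF (by omega) ha h0
      have hk := key_arith hpos hb hmle' (by omega)
      have h2 : mv' ≤ Wf gen (n + gen 0) := le_csSup bdd2 hmv'_mem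
      omega
    · have hb2 := bullet_shift_down ha h0
      have hvn := sum_count_shift_down h0
      have hmem2 : (∑ i, (a i - if i = 0 then 1 else 0)) ∈ VSet gen n :=
        ⟨_, hb2, rfl⟩
      have h3 := le_csSup bdd1 hmem2
      omega
  omega

lemma W_iter (hpos : 0 < gen 0) (hmono : StrictMono gen) {F : ℕ}
    (hF : ∀ x, F ≤ x → x ∈ NumSG gen) {n : ℕ} (hn : n ∈ NumSG gen)
    (hN : gen 0 * ((gen (Fin.last k) + F) + gen 0 + 1) < n) :
    ∀ t : ℕ, Wf gen (n + t * gen 0) = Wf gen n + t := by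
  intro t
  induction t with
  | zero => simp
  | succ m ih =>
    have h1 : n + m * gen 0 ∈ NumSG gen :=
      numsg_add hn (numsg_nsmul (numsg_gen 0) m)
    have h2 : gen 0 * ((gen (Fin.last k) + F) + gen 0 + 1) < n + m * gen 0 := by omega
    have h3 := W_step hpos hmono hF h1 h2
    have heq : n + (m + 1) * gen 0 = (n + m * gen 0) + gen 0 := by ring
    rw [heq, h3, ih]; omega

end W

/-- The ω-function of a numerical monoid `Γ = ⟨n₁, …, n_k⟩` (with smallest
minimal generator `n₁ = gen 0`) is eventually quasilinear: there are `N₀ > 0`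
and `a₀ : ℕ → ℚ` periodic with period dividing `n₁` such that
`ω(n) = n/n₁ + a₀(n)` for all `n ∈ Γ` with `n > N₀`. -/
theorem omega_eventually_quasilinear {k : ℕ} (gen : Fin (k + 1) → ℕ)
    (hmono : StrictMono gen) (hgen : MinimalGens gen) :
    ∃ N₀ : ℕ, 0 < N₀ ∧ ∃ a₀ : ℕ → ℚ,
      (∀ n : ℕ, a₀ (n + gen 0) = a₀ n) ∧
      ∀ n ∈ NumSG gen, N₀ < n →
        ∃ w : ℕ, omegaNum gen n = (w : ℕ∞) ∧
          (w : ℚ) = (n : ℚ) / (gen 0 : ℚ) + a₀ n := by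
  obtain ⟨hpos, hgcd, -⟩ := hgen
  have hg0 : 0 < gen 0 := hpos 0
  obtain ⟨F, hF⟩ := exists_frob hgcd
  set N₀ := gen 0 * ((gen (Fin.last k) + F) + gen 0 + 1) with hN₀
  have hN₀pos : 0 < N₀ := by
    rw [hN₀]; exact Nat.mul_pos hg0 (by omega)
  set M := gen 0 * (N₀ + F + 1) with hM
  have hMge : N₀ + F + 1 ≤ M := Nat.le_mul_of_pos_left _ hg0
  set a₀ : ℕ → ℚ := fun n =>
    (Wf gen (M + n % gen 0) : ℚ) - ((M + n % gen 0 : ℕ) : ℚ) / (gen 0 : ℚ) with ha₀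
  refine ⟨N₀, hN₀pos, a₀, ?_, ?_⟩
  · intro n
    simp only [ha₀, Nat.add_mod_right]
  · intro n hn hNn
    have hn0 : 0 < n := by omega
    set r := n % gen 0 with hr
    set ρ := M + r with hρ
    have hρΓ : ρ ∈ NumSG gen := hF ρ (by omega)
    have hρN : N₀ < ρ := by omega
    have hρmod : ρ % gen 0 = r := by
      rw [hρ, hM, Nat.mul_add_mod]
      exact Nat.mod_eq_of_lt (by rw [hr]; exact Nat.mod_lt _ hg0)
    have hmodeq : ρ % gen 0 = n % gen 0 := by rw [hρmod]
    have hgQ : (gen 0 : ℚ) ≠ 0 := Nat.cast_ne_zero.mpr hg0.ne'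
    have homega : omegaNum gen n = (Wf gen n : ℕ∞) :=
      omega_eq_W hg0 hmono hF hn hn0
    refine ⟨Wf gen n, homega, ?_⟩
    have ha₀n : a₀ n = (Wf gen ρ : ℚ) - (ρ : ℚ) / (gen 0 : ℚ) := rfl
    rcases le_total ρ n with hle | hle
    · have hdvd : gen 0 ∣ n - ρ := (Nat.modEq_iff_dvd' hle).mp hmodeq
      obtain ⟨t, ht⟩ := hdvd
      have hnt : n = ρ + t * gen 0 := by rw [Nat.mul_comm] at ht; omega
      have hW := W_iter hg0 hmono hF hρΓ (by omega) t
      rw [← hnt] at hW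
      have hWQ : (Wf gen n : ℚ) = (Wf gen ρ : ℚ) + (t : ℚ) := by exact_mod_cast hW
      have hnQ : (n : ℚ) = (ρ : ℚ) + (t : ℚ) * (gen 0 : ℚ) := by exact_mod_cast hnt
      rw [ha₀n, hWQ, hnQ]
      field_simp
      ring
    · have hdvd : gen 0 ∣ ρ - n := (Nat.modEq_iff_dvd' hle).mp hmodeq.symm
      obtain ⟨t, ht⟩ := hdvd
      have hnt : ρ = n + t * gen 0 := by rw [Nat.mul_comm] at ht; omega
      have hW := W_iter hg0 hmono hF hn (by omega) t
      rw [← hnt] at hW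
      have hWQ : (Wf gen ρ : ℚ) = (Wf gen n : ℚ) + (t : ℚ) := by exact_mod_cast hW
      have hnQ : (ρ : ℚ) = (n : ℚ) + (t : ℚ) * (gen 0 : ℚ) := by exact_mod_cast hnt
      rw [ha₀n, hWQ, hnQ]
      field_simp
      ring
end

section
/- Let Γ = ⟨n₁,…,n_k⟩ be a numerical monoid with smallest minimal generator n₁. Then lim_{n→∞, n∈Γ} ω(n)/n = 1/n₁. -/
open Finset

lemma numSG_zero {k : ℕ} (gen : Fin k → ℕ) : 0 ∈ NumSG gen :=
  ⟨0, by simp⟩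

lemma numSG_add {k : ℕ} {gen : Fin k → ℕ} {a b : ℕ}
    (ha : a ∈ NumSG gen) (hb : b ∈ NumSG gen) : a + b ∈ NumSG gen := by
  obtain ⟨c, rfl⟩ := ha; obtain ⟨d, rfl⟩ := hb
  exact ⟨c + d, by rw [← Finset.sum_add_distrib]; exact Finset.sum_congr rfl fun i _ => by simp [add_mul]⟩

lemma numSG_gen {k : ℕ} (gen : Fin k → ℕ) (j : Fin k) : gen j ∈ NumSG gen := by
  refine ⟨Pi.single j 1, ?_⟩
  simp [Pi.single_apply, ite_mul]

lemma numSG_mul {k : ℕ} {gen : Fin k → ℕ} {a : ℕ} (ha : a ∈ NumSG gen) (t : ℕ) :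
    t * a ∈ NumSG gen := by
  obtain ⟨c, rfl⟩ := ha
  exact ⟨fun i => t * c i, by rw [Finset.mul_sum]; congr 1; ext i; ring⟩

lemma numSG_consec {k : ℕ} (gen : Fin k → ℕ) (h : Finset.univ.gcd gen = 1) :
    ∃ B : ℕ, B ∈ NumSG gen ∧ B + 1 ∈ NumSG gen := by
  set S : AddSubgroup ℤ :=
    { carrier := {z | ∃ a b : ℕ, a ∈ NumSG gen ∧ b ∈ NumSG gen ∧ z = (a : ℤ) - b}
      zero_mem' := ⟨0, 0, numSG_zero gen, numSG_zero gen, by simp⟩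
      add_mem' := by
        rintro x y ⟨a, b, ha, hb, rfl⟩ ⟨c, d, hc, hd, rfl⟩
        exact ⟨a + c, b + d, numSG_add ha hc, numSG_add hb hd, by push_cast; ring⟩
      neg_mem' := by
        rintro x ⟨a, b, ha, hb, rfl⟩
        exact ⟨b, a, hb, ha, by ring⟩ } with hS
  obtain ⟨a, haS⟩ := Int.subgroup_cyclic S
  have hgenS : ∀ j, ((gen j : ℤ)) ∈ S := fun j =>
    ⟨gen j, 0, numSG_gen gen j, numSG_zero gen, by simp⟩
  have hdvd : ∀ j, a.natAbs ∣ gen j := by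
    intro j
    have := hgenS j
    rw [haS, AddSubgroup.mem_closure_singleton] at this
    obtain ⟨n, hn⟩ := this
    have : a ∣ (gen j : ℤ) := ⟨n, by rw [← hn, smul_eq_mul]; ring⟩
    exact Int.ofNat_dvd.mp (by rwa [Int.natAbs_dvd])
  have habs : a.natAbs = 1 := by
    have : a.natAbs ∣ Finset.univ.gcd gen := Finset.dvd_gcd fun j _ => hdvd j
    rw [h] at this
    exact Nat.dvd_one.mp this
  have h1S : (1 : ℤ) ∈ S := by
    rw [haS, AddSubgroup.mem_closure_singleton]
    refine ⟨a, ?_⟩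
    rw [smul_eq_mul, ← Int.natAbs_mul_self, habs]
    norm_num
  obtain ⟨p, q, hp, hq, hpq⟩ := h1S
  have : p = q + 1 := by omega
  exact ⟨q, hq, this ▸ hp⟩


lemma numSG_large {k : ℕ} (gen : Fin k → ℕ) (h : Finset.univ.gcd gen = 1) :
    ∃ F : ℕ, ∀ m, F ≤ m → m ∈ NumSG gen := by
  obtain ⟨B, hB, hA⟩ := numSG_consec gen h
  refine ⟨B * B, fun m hm => ?_⟩
  set q := (m - B * B) / (B + 1) with hq
  set r := (m - B * B) % (B + 1) with hr
  have hrB : r ≤ B := Nat.lt_succ_iff.mp (Nat.mod_lt _ (Nat.succ_pos B))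
  have hdm : (B + 1) * q + r = m - B * B := Nat.div_add_mod _ _
  obtain ⟨s, hs⟩ : ∃ s, B = r + s := ⟨B - r, by omega⟩
  have key : m = (r + q) * (B + 1) + s * B := by
    have expand : (r + q) * (B + 1) + s * B = B * B + ((B + 1) * q + r) := by
      rw [hs]; ring
    omega
  rw [key]
  exact numSG_add (numSG_mul hA (r + q)) (numSG_mul hB s)

lemma bullet_sum_le {k : ℕ} (gen : Fin (k + 1) → ℕ) (hmono : Monotone gen)
    (F : ℕ) (hF : ∀ m, F ≤ m → m ∈ NumSG gen) (n : ℕ) (a : Fin (k + 1) → ℕ)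
    (ha : IsBulletNum gen n a) :
    gen 0 * (∑ i, a i) ≤ n + F + gen (Fin.last k) := by
  obtain ⟨⟨d, hd, hsum⟩, hmin⟩ := ha
  by_cases h0 : ∑ i, a i = 0
  · simp [h0]
  obtain ⟨j, _, hj⟩ := Finset.exists_ne_zero_of_sum_ne_zero h0
  have hdlt : d < F + gen j := by
    by_contra hge
    push_neg at hge
    exact hmin j (Nat.pos_of_ne_zero hj) ⟨d - gen j, hF _ (by omega), by omega⟩
  have h1 : gen 0 * (∑ i, a i) ≤ ∑ i, a i * gen i := by
    rw [Finset.mul_sum]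
    exact Finset.sum_le_sum fun i _ => by
      rw [mul_comm]; exact Nat.mul_le_mul_left _ (hmono (Fin.zero_le i))
  have h2 : gen j ≤ gen (Fin.last k) := hmono (Fin.le_last j)
  omega

lemma exists_bullet_s17 {k : ℕ} (gen : Fin (k + 1) → ℕ) (hpos : 0 < gen 0) (n : ℕ)
    (hn : n ∈ NumSG gen) :
    ∃ a, IsBulletNum gen n a ∧ n ≤ gen 0 * ∑ i, a i := by
  have hPn : ∃ m, ∃ d ∈ NumSG gen, m * gen 0 = n + d := by
    obtain ⟨g', hg'⟩ : ∃ g', gen 0 = g' + 1 := ⟨gen 0 - 1, by omega⟩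
    exact ⟨n, g' * n, numSG_mul hn g', by rw [hg']; ring⟩
  classical
  obtain ⟨d, hd, hmd⟩ := Nat.find_spec hPn
  set m := Nat.find hPn with hm
  set a : Fin (k + 1) → ℕ := Pi.single 0 m with haa
  have hsum1 : ∑ i, a i * gen i = m * gen 0 := by
    simp [haa, Pi.single_apply, ite_mul]
  have hsum2 : ∑ i, a i = m := by simp [haa, Pi.single_apply]
  refine ⟨a, ⟨⟨d, hd, by rw [hsum1, hmd]⟩, ?_⟩, by rw [hsum2, mul_comm]; omega⟩
  intro j hj
  rintro ⟨d', hd', heq⟩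
  have hj0 : j = 0 := by
    by_contra hne
    simp [haa, Pi.single_apply, hne] at hj
  subst hj0
  have hmpos : 0 < m := by
    rcases Nat.eq_zero_or_pos m with h | h
    · rw [haa, h] at hj; simp at hj
    · exact h
  rw [hsum1] at heq
  have hstep : (m - 1) * gen 0 = n + d' := by
    obtain ⟨m', hm'⟩ : ∃ m', m = m' + 1 := ⟨m - 1, by omega⟩
    rw [hm', add_mul, one_mul] at heq
    rw [hm']
    simp only [Nat.add_sub_cancel]
    omega
  exact Nat.find_min hPn (by omega : m - 1 < m) ⟨d', hd', hstep⟩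

/-- For a numerical monoid `Γ = ⟨n₁, …, n_k⟩` with smallest minimal generator
`n₁ = gen 0`, one has `lim_{n → ∞, n ∈ Γ} ω(n)/n = 1/n₁`. -/
theorem omega_div_tendsto {k : ℕ} (gen : Fin (k + 1) → ℕ)
    (hmono : StrictMono gen) (hgen : MinimalGens gen) :
    ∀ ε : ℝ, 0 < ε → ∃ N : ℕ, ∀ n ∈ NumSG gen, N ≤ n →
      ∃ w : ℕ, omegaNum gen n = (w : ℕ∞) ∧
        |(w : ℝ) / (n : ℝ) - 1 / (gen 0 : ℝ)| < ε := by
  obtain ⟨hpos, hgcd, -⟩ := hgen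
  obtain ⟨F, hF⟩ := numSG_large gen hgcd
  set C : ℕ := F + gen (Fin.last k) with hC
  intro ε hε
  refine ⟨max 1 (⌈(C : ℝ) / ε⌉₊ + 1), fun n hn hNn => ?_⟩
  have hg0 : 0 < gen 0 := hpos 0
  set Sset : Set ℕ := {s | ∃ a, IsBulletNum gen n a ∧ ∑ i, a i = s} with hSset
  obtain ⟨a0, ha0, ha0n⟩ := exists_bullet_s17 gen hg0 n hn
  have hne : Sset.Nonempty := ⟨∑ i, a0 i, a0, ha0, rfl⟩
  have hbdd : BddAbove Sset := by
    refine ⟨n + C, fun s hs => ?_⟩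
    obtain ⟨a, ha, rfl⟩ := hs
    have h1 := bullet_sum_le gen hmono.monotone F hF n a ha
    have h2 : (∑ i, a i) ≤ gen 0 * ∑ i, a i := Nat.le_mul_of_pos_left _ hg0
    omega
  set w := sSup Sset with hw
  have hwmem : w ∈ Sset := Nat.sSup_mem hne hbdd
  obtain ⟨aw, haw, hws⟩ := hwmem
  have hub : gen 0 * w ≤ n + C := by
    rw [← hws]
    have := bullet_sum_le gen hmono.monotone F hF n aw haw
    omega
  have hlb : n ≤ gen 0 * w := by
    have h1 : ∑ i, a0 i ≤ w := le_csSup hbdd ⟨a0, ha0, rfl⟩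
    calc n ≤ gen 0 * ∑ i, a0 i := ha0n
    _ ≤ gen 0 * w := Nat.mul_le_mul_left _ h1
  refine ⟨w, ?_, ?_⟩
  · apply le_antisymm
    · refine iSup_le fun a => iSup_le fun ha => ?_
      exact Nat.cast_le.mpr (le_csSup hbdd ⟨a, ha, rfl⟩)
    · calc (w : ℕ∞) = ((∑ i, aw i : ℕ) : ℕ∞) := by rw [hws]
      _ ≤ omegaNum gen n := le_iSup₂ (f := fun a (_ : IsBulletNum gen n a) =>
          ((∑ i, a i : ℕ) : ℕ∞)) aw haw
  · have hN1 : 1 ≤ n := le_trans (le_max_left _ _) hNn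
    have hNC : (⌈(C : ℝ) / ε⌉₊ + 1 : ℕ) ≤ n := le_trans (le_max_right _ _) hNn
    have hnR : (0 : ℝ) < n := by exact_mod_cast hN1
    have hgR : (0 : ℝ) < gen 0 := by exact_mod_cast hg0
    have hg1 : (1 : ℝ) ≤ gen 0 := by exact_mod_cast hg0
    have hl : (n : ℝ) ≤ gen 0 * w := by exact_mod_cast hlb
    have hu : (gen 0 : ℝ) * w ≤ n + C := by exact_mod_cast hub
    have hCn : (C : ℝ) / n < ε := by
      rw [div_lt_iff₀ hnR]
      have h2 : ((⌈(C : ℝ) / ε⌉₊ + 1 : ℕ) : ℝ) ≤ n := by exact_mod_cast hNC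
      have h1 : (C : ℝ) / ε < n := by
        refine lt_of_lt_of_le ?_ h2
        push_cast
        exact lt_of_le_of_lt (Nat.le_ceil _) (by linarith)
      calc (C : ℝ) = ((C : ℝ) / ε) * ε := by field_simp
      _ < n * ε := mul_lt_mul_of_pos_right h1 hε
      _ = ε * n := mul_comm _ _
    have key : |(w : ℝ) / n - 1 / (gen 0)| ≤ (C : ℝ) / n := by
      rw [abs_le]
      constructor
      · have hnn : (1 : ℝ) / (gen 0) ≤ w / n := by
          rw [div_le_div_iff₀ hgR hnR]
          nlinarith
        have : (0 : ℝ) ≤ (C : ℝ) / n := by positivity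
        linarith
      · rw [div_sub_div _ _ hnR.ne' hgR.ne', div_le_div_iff₀ (by positivity) hnR]
        have ha : ((w : ℝ) * (gen 0) - n * 1) * n ≤ C * n := by
          have : (w : ℝ) * (gen 0) - n * 1 ≤ C := by nlinarith
          exact mul_le_mul_of_nonneg_right this hnR.le
        have hb : (C : ℝ) * n * 1 ≤ C * n * gen 0 :=
          mul_le_mul_of_nonneg_left hg1 (mul_nonneg (Nat.cast_nonneg C) hnR.le)
        nlinarith
    exact lt_of_le_of_lt key hCn
end

section
/- Fix an integer n ≥ 2. In the numerical monoid Γ = ⟨2n−1, 2n, 2n+1⟩ one has ω(2n−1) = n and ω(2n) = ω(2n+1) = n+1; and in the numerical monoid Γ = ⟨2n, 2n+1, 2n+2⟩ one has ω(2n) = n, ω(2n+1) = n+2, and ω(2n+2) = n+1. -/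
open Finset

lemma sum3 (b : Fin 3 → ℕ) (g : ℕ) :
    ∑ i, b i * ![g, g+1, g+2] i = b 0 * g + b 1 * (g+1) + b 2 * (g+2) := by
  simp [Fin.sum_univ_three]

lemma block_mem (g k r : ℕ) (hr : r ≤ 2*k) : k*g + r ∈ NumSG ![g, g+1, g+2] := by
  rcases le_or_gt r k with h | h
  · obtain ⟨s, hs⟩ := Nat.exists_eq_add_of_le h
    exact ⟨![s, r, 0], by rw [sum3]; simp [hs]; ring⟩
  · obtain ⟨e, he⟩ := Nat.exists_eq_add_of_le h.le
    have he2 : e ≤ k := by omega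
    obtain ⟨f, hf⟩ := Nat.exists_eq_add_of_le he2
    exact ⟨![0, f, e], by rw [sum3]; simp [he, hf]; ring⟩

lemma mem_bound {g x : ℕ} (h : x ∈ NumSG ![g, g+1, g+2]) :
    ∃ k, k*g ≤ x ∧ x ≤ k*g + 2*k := by
  obtain ⟨c, hc⟩ := h
  rw [sum3] at hc
  refine ⟨c 0 + c 1 + c 2, by nlinarith, by nlinarith⟩

lemma bullet_contra (g mv : ℕ) (b : Fin 3 → ℕ)
    (hb : IsBulletNum ![g, g+1, g+2] mv b) (j : Fin 3) (hj : 0 < b j) (gj k : ℕ)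
    (hgj : (![g, g+1, g+2] : Fin 3 → ℕ) j = gj)
    (hlo : k*g + (mv + gj) ≤ b 0 * g + b 1 * (g+1) + b 2 * (g+2))
    (hhi : b 0 * g + b 1 * (g+1) + b 2 * (g+2) ≤ k*g + 2*k + (mv + gj)) : False := by
  obtain ⟨r, hr⟩ := Nat.exists_eq_add_of_le hlo
  exact hb.2 j hj ⟨k*g + r, block_mem g k r (by linarith), by rw [sum3, hgj]; linarith⟩

lemma omega_eq (gen : Fin 3 → ℕ) (mv N : ℕ) (a : Fin 3 → ℕ)
    (ha : IsBulletNum gen mv a) (hs : a 0 + a 1 + a 2 = N)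
    (hub : ∀ b, IsBulletNum gen mv b → b 0 + b 1 + b 2 ≤ N) :
    omegaNum gen mv = (N : ℕ∞) := by
  apply le_antisymm
  · refine iSup_le fun b => iSup_le fun hb => ?_
    rw [Fin.sum_univ_three]
    exact_mod_cast hub b hb
  · have : (N : ℕ∞) = ((∑ i, a i : ℕ) : ℕ∞) := by rw [Fin.sum_univ_three, hs]
    rw [this]
    exact le_iSup₂ (f := fun a (_ : IsBulletNum gen mv a) => ((∑ i, a i : ℕ) : ℕ∞)) a ha

lemma nonmem1 (m k : ℕ) (h1 : k*(2*m+3) ≤ 2*m^2+5*m+2)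
    (h2 : 2*m^2+5*m+2 ≤ k*(2*m+3)+2*k) : False := by
  rcases le_or_gt k m with h | h
  · have := mul_le_mul_left h (2*m+5); nlinarith
  · have := mul_le_mul_left (show m+1 ≤ k from h) (2*m+3); nlinarith

lemma nonmem2 (m k : ℕ) (h1 : k*(2*m+3) ≤ 2*m^2+5*m+1)
    (h2 : 2*m^2+5*m+1 ≤ k*(2*m+3)+2*k) : False := by
  rcases le_or_gt k m with h | h
  · have := mul_le_mul_left h (2*m+5); nlinarith
  · have := mul_le_mul_left (show m+1 ≤ k from h) (2*m+3); nlinarith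

lemma nonmem3 (m k : ℕ) (h1 : k*(2*m+4) ≤ 2*m^2+6*m+2)
    (h2 : 2*m^2+6*m+2 ≤ k*(2*m+4)+2*k) : False := by
  rcases le_or_gt k m with h | h
  · have := mul_le_mul_left h (2*m+6); nlinarith
  · have := mul_le_mul_left (show m+1 ≤ k from h) (2*m+4); nlinarith

lemma nonmem4 (m k : ℕ) (h1 : k*(2*m+4) ≤ 2*m^2+8*m+7)
    (h2 : 2*m^2+8*m+7 ≤ k*(2*m+4)+2*k) : False := by
  rcases le_or_gt k (m+1) with h | h
  · have := mul_le_mul_left h (2*m+6); nlinarith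
  · have := mul_le_mul_left (show m+2 ≤ k from h) (2*m+4); nlinarith

/- ---- bullets ---- -/

lemma bulletA (m : ℕ) :
    IsBulletNum ![2*m+3, 2*m+3+1, 2*m+3+2] (2*m+3) ![0, 0, m+2] := by
  constructor
  · refine ⟨(m+2)*(2*m+3) + 1, block_mem (2*m+3) (m+2) 1 (by omega), ?_⟩
    rw [sum3]; simp; ring
  · intro j hj
    fin_cases j
    · simp at hj
    · simp at hj
    · rintro ⟨d, hd, heq⟩
      obtain ⟨k, hk1, hk2⟩ := mem_bound hd
      rw [sum3] at heq; simp at heq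
      have hdv : d = 2*m^2+5*m+2 := by nlinarith [heq]
      rw [hdv] at hk1 hk2
      exact nonmem1 m k hk1 hk2

lemma bulletB (m : ℕ) :
    IsBulletNum ![2*m+3, 2*m+3+1, 2*m+3+2] (2*m+4) ![m+3, 0, 0] := by
  constructor
  · refine ⟨(m+1)*(2*m+3) + (2*m+2), block_mem (2*m+3) (m+1) (2*m+2) (by omega), ?_⟩
    rw [sum3]; simp; ring
  · intro j hj
    fin_cases j
    · rintro ⟨d, hd, heq⟩
      obtain ⟨k, hk1, hk2⟩ := mem_bound hd
      rw [sum3] at heq; simp at heq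
      have hdv : d = 2*m^2+5*m+2 := by nlinarith [heq]
      rw [hdv] at hk1 hk2
      exact nonmem1 m k hk1 hk2
    · simp at hj
    · simp at hj

lemma bulletC (m : ℕ) :
    IsBulletNum ![2*m+3, 2*m+3+1, 2*m+3+2] (2*m+5) ![m+3, 0, 0] := by
  constructor
  · refine ⟨(m+1)*(2*m+3) + (2*m+1), block_mem (2*m+3) (m+1) (2*m+1) (by omega), ?_⟩
    rw [sum3]; simp; ring
  · intro j hj
    fin_cases j
    · rintro ⟨d, hd, heq⟩
      obtain ⟨k, hk1, hk2⟩ := mem_bound hd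
      rw [sum3] at heq; simp at heq
      have hdv : d = 2*m^2+5*m+1 := by nlinarith [heq]
      rw [hdv] at hk1 hk2
      exact nonmem2 m k hk1 hk2
    · simp at hj
    · simp at hj

lemma bulletD (m : ℕ) :
    IsBulletNum ![2*m+4, 2*m+4+1, 2*m+4+2] (2*m+4) ![0, 0, m+2] := by
  constructor
  · refine ⟨(m+2)*(2*m+4) + 0, block_mem (2*m+4) (m+2) 0 (by omega), ?_⟩
    rw [sum3]; simp; ring
  · intro j hj
    fin_cases j
    · simp at hj
    · simp at hj
    · rintro ⟨d, hd, heq⟩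
      obtain ⟨k, hk1, hk2⟩ := mem_bound hd
      rw [sum3] at heq; simp at heq
      have hdv : d = 2*m^2+6*m+2 := by nlinarith [heq]
      rw [hdv] at hk1 hk2
      exact nonmem3 m k hk1 hk2

lemma bulletE (m : ℕ) :
    IsBulletNum ![2*m+4, 2*m+4+1, 2*m+4+2] (2*m+5) ![m+4, 0, 0] := by
  constructor
  · refine ⟨(m+2)*(2*m+4) + (2*m+3), block_mem (2*m+4) (m+2) (2*m+3) (by omega), ?_⟩
    rw [sum3]; simp; ring
  · intro j hj
    fin_cases j
    · rintro ⟨d, hd, heq⟩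
      obtain ⟨k, hk1, hk2⟩ := mem_bound hd
      rw [sum3] at heq; simp at heq
      have hdv : d = 2*m^2+8*m+7 := by nlinarith [heq]
      rw [hdv] at hk1 hk2
      exact nonmem4 m k hk1 hk2
    · simp at hj
    · simp at hj

lemma bulletF (m : ℕ) :
    IsBulletNum ![2*m+4, 2*m+4+1, 2*m+4+2] (2*m+6) ![m+3, 0, 0] := by
  constructor
  · refine ⟨(m+1)*(2*m+4) + (2*m+2), block_mem (2*m+4) (m+1) (2*m+2) (by omega), ?_⟩
    rw [sum3]; simp; ring
  · intro j hj
    fin_cases j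
    · rintro ⟨d, hd, heq⟩
      obtain ⟨k, hk1, hk2⟩ := mem_bound hd
      rw [sum3] at heq; simp at heq
      have hdv : d = 2*m^2+6*m+2 := by nlinarith [heq]
      rw [hdv] at hk1 hk2
      exact nonmem3 m k hk1 hk2
    · simp at hj
    · simp at hj

/- ---- upper bounds ---- -/

lemma ubA (m : ℕ) (b : Fin 3 → ℕ)
    (hb : IsBulletNum ![2*m+3, 2*m+3+1, 2*m+3+2] (2*m+3) b) :
    b 0 + b 1 + b 2 ≤ m + 2 := by
  by_contra hc
  have ht : m + 3 ≤ b 0 + b 1 + b 2 := by omega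
  rcases Nat.eq_zero_or_pos (b 2) with h2z | h2p
  · rcases Nat.eq_zero_or_pos (b 1) with h1z | h1p
    · obtain ⟨u, hu⟩ : ∃ u, b 0 + b 1 + b 2 = u + 2 := ⟨b 0 + b 1 + b 2 - 2, by omega⟩
      have key : (b 0 + b 1 + b 2) * (2*m+3) = u*(2*m+3) + 2*(2*m+3) := by rw [hu]; ring
      exact bullet_contra _ _ b hb 0 (by omega) (2*m+3) u rfl (by linarith) (by linarith)
    · obtain ⟨u, hu⟩ : ∃ u, b 0 + b 1 + b 2 = u + 2 := ⟨b 0 + b 1 + b 2 - 2, by omega⟩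
      have key : (b 0 + b 1 + b 2) * (2*m+3) = u*(2*m+3) + 2*(2*m+3) := by rw [hu]; ring
      exact bullet_contra _ _ b hb 1 h1p (2*m+3+1) u rfl (by linarith) (by linarith)
  · rcases le_or_gt 2 (2 * b 0 + b 1) with hcase | hcase
    · obtain ⟨u, hu⟩ : ∃ u, b 0 + b 1 + b 2 = u + 2 := ⟨b 0 + b 1 + b 2 - 2, by omega⟩
      have key : (b 0 + b 1 + b 2) * (2*m+3) = u*(2*m+3) + 2*(2*m+3) := by rw [hu]; ring
      exact bullet_contra _ _ b hb 2 h2p (2*m+3+2) u rfl (by linarith) (by linarith)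
    · obtain ⟨u, hu⟩ : ∃ u, b 0 + b 1 + b 2 = u + 1 := ⟨b 0 + b 1 + b 2 - 1, by omega⟩
      have key : (b 0 + b 1 + b 2) * (2*m+3) = u*(2*m+3) + 1*(2*m+3) := by rw [hu]; ring
      exact bullet_contra _ _ b hb 2 h2p (2*m+3+2) u rfl (by linarith) (by linarith)

lemma ubB (m : ℕ) (b : Fin 3 → ℕ)
    (hb : IsBulletNum ![2*m+3, 2*m+3+1, 2*m+3+2] (2*m+4) b) :
    b 0 + b 1 + b 2 ≤ m + 3 := by
  by_contra hc
  have ht : m + 4 ≤ b 0 + b 1 + b 2 := by omega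
  rcases Nat.eq_zero_or_pos (b 2) with h2z | h2p
  · rcases Nat.lt_or_ge (b 1) 1 with h1 | h1
    · obtain ⟨u, hu⟩ : ∃ u, b 0 + b 1 + b 2 = u + 3 := ⟨b 0 + b 1 + b 2 - 3, by omega⟩
      have key : (b 0 + b 1 + b 2) * (2*m+3) = u*(2*m+3) + 3*(2*m+3) := by rw [hu]; ring
      exact bullet_contra _ _ b hb 0 (by omega) (2*m+3) u rfl (by linarith) (by linarith)
    · rcases Nat.lt_or_ge (b 1) 2 with h1b | h1b
      · obtain ⟨u, hu⟩ : ∃ u, b 0 + b 1 + b 2 = u + 3 := ⟨b 0 + b 1 + b 2 - 3, by omega⟩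
        have key : (b 0 + b 1 + b 2) * (2*m+3) = u*(2*m+3) + 3*(2*m+3) := by rw [hu]; ring
        exact bullet_contra _ _ b hb 1 h1 (2*m+3+1) u rfl (by linarith) (by linarith)
      · obtain ⟨u, hu⟩ : ∃ u, b 0 + b 1 + b 2 = u + 2 := ⟨b 0 + b 1 + b 2 - 2, by omega⟩
        have key : (b 0 + b 1 + b 2) * (2*m+3) = u*(2*m+3) + 2*(2*m+3) := by rw [hu]; ring
        exact bullet_contra _ _ b hb 1 h1 (2*m+3+1) u rfl (by linarith) (by linarith)
  · rcases Nat.eq_zero_or_pos (b 1 + 2 * b 2 - 2) with hr | hr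
    · -- r = 2 : b1 = 0, b2 = 1
      have hb1 : b 1 = 0 := by omega
      have hb2 : b 2 = 1 := by omega
      obtain ⟨u, hu⟩ : ∃ u, b 0 + b 1 + b 2 = u + 3 := ⟨b 0 + b 1 + b 2 - 3, by omega⟩
      have key : (b 0 + b 1 + b 2) * (2*m+3) = u*(2*m+3) + 3*(2*m+3) := by rw [hu]; ring
      exact bullet_contra _ _ b hb 2 h2p (2*m+3+2) u rfl (by linarith) (by linarith)
    · rcases le_or_gt 1 (2 * b 0 + b 1) with hcase | hcase
      · have hr3 : 3 ≤ b 1 + 2 * b 2 := by omega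
        obtain ⟨u, hu⟩ : ∃ u, b 0 + b 1 + b 2 = u + 2 := ⟨b 0 + b 1 + b 2 - 2, by omega⟩
        have key : (b 0 + b 1 + b 2) * (2*m+3) = u*(2*m+3) + 2*(2*m+3) := by rw [hu]; ring
        exact bullet_contra _ _ b hb 2 h2p (2*m+3+2) u rfl (by linarith) (by linarith)
      · obtain ⟨u, hu⟩ : ∃ u, b 0 + b 1 + b 2 = u + 1 := ⟨b 0 + b 1 + b 2 - 1, by omega⟩
        have key : (b 0 + b 1 + b 2) * (2*m+3) = u*(2*m+3) + 1*(2*m+3) := by rw [hu]; ring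
        have hb0 : b 0 = 0 := by omega
        have hb1 : b 1 = 0 := by omega
        exact bullet_contra _ _ b hb 2 h2p (2*m+3+2) u rfl (by linarith) (by linarith)

lemma ubC (m : ℕ) (b : Fin 3 → ℕ)
    (hb : IsBulletNum ![2*m+3, 2*m+3+1, 2*m+3+2] (2*m+5) b) :
    b 0 + b 1 + b 2 ≤ m + 3 := by
  by_contra hc
  have ht : m + 4 ≤ b 0 + b 1 + b 2 := by omega
  rcases Nat.eq_zero_or_pos (b 2) with h2z | h2p
  · rcases Nat.lt_or_ge (b 1) 1 with h1 | h1
    · obtain ⟨u, hu⟩ : ∃ u, b 0 + b 1 + b 2 = u + 3 := ⟨b 0 + b 1 + b 2 - 3, by omega⟩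
      have key : (b 0 + b 1 + b 2) * (2*m+3) = u*(2*m+3) + 3*(2*m+3) := by rw [hu]; ring
      exact bullet_contra _ _ b hb 0 (by omega) (2*m+3) u rfl (by linarith) (by linarith)
    · rcases Nat.lt_or_ge (b 1) 3 with h1b | h1b
      · obtain ⟨u, hu⟩ : ∃ u, b 0 + b 1 + b 2 = u + 3 := ⟨b 0 + b 1 + b 2 - 3, by omega⟩
        have key : (b 0 + b 1 + b 2) * (2*m+3) = u*(2*m+3) + 3*(2*m+3) := by rw [hu]; ring
        exact bullet_contra _ _ b hb 1 h1 (2*m+3+1) u rfl (by linarith) (by linarith)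
      · obtain ⟨u, hu⟩ : ∃ u, b 0 + b 1 + b 2 = u + 2 := ⟨b 0 + b 1 + b 2 - 2, by omega⟩
        have key : (b 0 + b 1 + b 2) * (2*m+3) = u*(2*m+3) + 2*(2*m+3) := by rw [hu]; ring
        exact bullet_contra _ _ b hb 1 h1 (2*m+3+1) u rfl (by linarith) (by linarith)
  · rcases Nat.lt_or_ge (b 1 + 2 * b 2) 4 with hr | hr
    · obtain ⟨u, hu⟩ : ∃ u, b 0 + b 1 + b 2 = u + 3 := ⟨b 0 + b 1 + b 2 - 3, by omega⟩
      have key : (b 0 + b 1 + b 2) * (2*m+3) = u*(2*m+3) + 3*(2*m+3) := by rw [hu]; ring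
      exact bullet_contra _ _ b hb 2 h2p (2*m+3+2) u rfl (by linarith) (by linarith)
    · obtain ⟨u, hu⟩ : ∃ u, b 0 + b 1 + b 2 = u + 2 := ⟨b 0 + b 1 + b 2 - 2, by omega⟩
      have key : (b 0 + b 1 + b 2) * (2*m+3) = u*(2*m+3) + 2*(2*m+3) := by rw [hu]; ring
      exact bullet_contra _ _ b hb 2 h2p (2*m+3+2) u rfl (by linarith) (by linarith)

lemma ubD (m : ℕ) (b : Fin 3 → ℕ)
    (hb : IsBulletNum ![2*m+4, 2*m+4+1, 2*m+4+2] (2*m+4) b) :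
    b 0 + b 1 + b 2 ≤ m + 2 := by
  by_contra hc
  have ht : m + 3 ≤ b 0 + b 1 + b 2 := by omega
  rcases Nat.eq_zero_or_pos (b 2) with h2z | h2p
  · rcases Nat.eq_zero_or_pos (b 1) with h1z | h1p
    · obtain ⟨u, hu⟩ : ∃ u, b 0 + b 1 + b 2 = u + 2 := ⟨b 0 + b 1 + b 2 - 2, by omega⟩
      have key : (b 0 + b 1 + b 2) * (2*m+4) = u*(2*m+4) + 2*(2*m+4) := by rw [hu]; ring
      exact bullet_contra _ _ b hb 0 (by omega) (2*m+4) u rfl (by linarith) (by linarith)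
    · obtain ⟨u, hu⟩ : ∃ u, b 0 + b 1 + b 2 = u + 2 := ⟨b 0 + b 1 + b 2 - 2, by omega⟩
      have key : (b 0 + b 1 + b 2) * (2*m+4) = u*(2*m+4) + 2*(2*m+4) := by rw [hu]; ring
      exact bullet_contra _ _ b hb 1 h1p (2*m+4+1) u rfl (by linarith) (by linarith)
  · rcases le_or_gt 2 (2 * b 0 + b 1) with hcase | hcase
    · obtain ⟨u, hu⟩ : ∃ u, b 0 + b 1 + b 2 = u + 2 := ⟨b 0 + b 1 + b 2 - 2, by omega⟩
      have key : (b 0 + b 1 + b 2) * (2*m+4) = u*(2*m+4) + 2*(2*m+4) := by rw [hu]; ring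
      exact bullet_contra _ _ b hb 2 h2p (2*m+4+2) u rfl (by linarith) (by linarith)
    · rcases Nat.eq_zero_or_pos (b 1) with h1z | h1p
      · have hb0 : b 0 = 0 := by omega
        obtain ⟨u, hu⟩ : ∃ u, b 0 + b 1 + b 2 = u + 1 := ⟨b 0 + b 1 + b 2 - 1, by omega⟩
        have key : (b 0 + b 1 + b 2) * (2*m+4) = u*(2*m+4) + 1*(2*m+4) := by rw [hu]; ring
        exact bullet_contra _ _ b hb 2 h2p (2*m+4+2) u rfl (by linarith) (by linarith)
      · have hb0 : b 0 = 0 := by omega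
        have hb1 : b 1 = 1 := by omega
        obtain ⟨u, hu⟩ : ∃ u, b 0 + b 1 + b 2 = u + 1 := ⟨b 0 + b 1 + b 2 - 1, by omega⟩
        have key : (b 0 + b 1 + b 2) * (2*m+4) = u*(2*m+4) + 1*(2*m+4) := by rw [hu]; ring
        have hrval : b 1 + 2 * b 2 = 2 * (b 0 + b 1 + b 2) - 1 := by omega
        exact bullet_contra _ _ b hb 1 h1p (2*m+4+1) u rfl
          (by have : b 1 + 2 * b 2 + 1 = 2 * (b 0 + b 1 + b 2) := by omega
              linarith)
          (by linarith)

lemma ubE (m : ℕ) (b : Fin 3 → ℕ)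
    (hb : IsBulletNum ![2*m+4, 2*m+4+1, 2*m+4+2] (2*m+5) b) :
    b 0 + b 1 + b 2 ≤ m + 4 := by
  by_contra hc
  have ht : m + 5 ≤ b 0 + b 1 + b 2 := by omega
  rcases Nat.eq_zero_or_pos (b 2) with h2z | h2p
  · rcases Nat.lt_or_ge (b 1) 1 with h1 | h1
    · obtain ⟨u, hu⟩ : ∃ u, b 0 + b 1 + b 2 = u + 3 := ⟨b 0 + b 1 + b 2 - 3, by omega⟩
      have key : (b 0 + b 1 + b 2) * (2*m+4) = u*(2*m+4) + 3*(2*m+4) := by rw [hu]; ring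
      exact bullet_contra _ _ b hb 0 (by omega) (2*m+4) u rfl (by linarith) (by linarith)
    · rcases Nat.lt_or_ge (b 1) 2 with h1b | h1b
      · obtain ⟨u, hu⟩ : ∃ u, b 0 + b 1 + b 2 = u + 3 := ⟨b 0 + b 1 + b 2 - 3, by omega⟩
        have key : (b 0 + b 1 + b 2) * (2*m+4) = u*(2*m+4) + 3*(2*m+4) := by rw [hu]; ring
        exact bullet_contra _ _ b hb 1 h1 (2*m+4+1) u rfl (by linarith) (by linarith)
      · obtain ⟨u, hu⟩ : ∃ u, b 0 + b 1 + b 2 = u + 2 := ⟨b 0 + b 1 + b 2 - 2, by omega⟩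
        have key : (b 0 + b 1 + b 2) * (2*m+4) = u*(2*m+4) + 2*(2*m+4) := by rw [hu]; ring
        exact bullet_contra _ _ b hb 1 h1 (2*m+4+1) u rfl (by linarith) (by linarith)
  · rcases Nat.lt_or_ge (b 1 + 2 * b 2) 3 with hr | hr
    · -- r = 2 : b1 = 0, b2 = 1
      have hb1 : b 1 = 0 := by omega
      have hb2 : b 2 = 1 := by omega
      obtain ⟨u, hu⟩ : ∃ u, b 0 + b 1 + b 2 = u + 3 := ⟨b 0 + b 1 + b 2 - 3, by omega⟩
      have key : (b 0 + b 1 + b 2) * (2*m+4) = u*(2*m+4) + 3*(2*m+4) := by rw [hu]; ring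
      exact bullet_contra _ _ b hb 2 h2p (2*m+4+2) u rfl (by linarith) (by linarith)
    · rcases le_or_gt 1 (2 * b 0 + b 1) with hcase | hcase
      · obtain ⟨u, hu⟩ : ∃ u, b 0 + b 1 + b 2 = u + 2 := ⟨b 0 + b 1 + b 2 - 2, by omega⟩
        have key : (b 0 + b 1 + b 2) * (2*m+4) = u*(2*m+4) + 2*(2*m+4) := by rw [hu]; ring
        exact bullet_contra _ _ b hb 2 h2p (2*m+4+2) u rfl (by linarith) (by linarith)
      · have hb0 : b 0 = 0 := by omega
        have hb1 : b 1 = 0 := by omega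
        obtain ⟨u, hu⟩ : ∃ u, b 0 + b 1 + b 2 = u + 1 := ⟨b 0 + b 1 + b 2 - 1, by omega⟩
        have key : (b 0 + b 1 + b 2) * (2*m+4) = u*(2*m+4) + 1*(2*m+4) := by rw [hu]; ring
        exact bullet_contra _ _ b hb 2 h2p (2*m+4+2) u rfl (by linarith) (by linarith)

lemma ubF (m : ℕ) (b : Fin 3 → ℕ)
    (hb : IsBulletNum ![2*m+4, 2*m+4+1, 2*m+4+2] (2*m+6) b) :
    b 0 + b 1 + b 2 ≤ m + 3 := by
  by_contra hc
  have ht : m + 4 ≤ b 0 + b 1 + b 2 := by omega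
  rcases Nat.eq_zero_or_pos (b 2) with h2z | h2p
  · rcases Nat.lt_or_ge (b 1) 1 with h1 | h1
    · -- b1 = 0 : j=0, k=t-3
      obtain ⟨u, hu⟩ : ∃ u, b 0 + b 1 + b 2 = u + 3 := ⟨b 0 + b 1 + b 2 - 3, by omega⟩
      have key : (b 0 + b 1 + b 2) * (2*m+4) = u*(2*m+4) + 3*(2*m+4) := by rw [hu]; ring
      exact bullet_contra _ _ b hb 0 (by omega) (2*m+4) u rfl (by linarith) (by linarith)
    · rcases Nat.lt_or_ge (b 1) 2 with h1b | h1b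
      · -- b1 = 1 : j=1, k=t-3
        obtain ⟨u, hu⟩ : ∃ u, b 0 + b 1 + b 2 = u + 3 := ⟨b 0 + b 1 + b 2 - 3, by omega⟩
        have key : (b 0 + b 1 + b 2) * (2*m+4) = u*(2*m+4) + 3*(2*m+4) := by rw [hu]; ring
        exact bullet_contra _ _ b hb 1 h1 (2*m+4+1) u rfl (by linarith) (by linarith)
      · rcases Nat.lt_or_ge (b 1) 3 with h1c | h1c
        · -- b1 = 2 : j=0, k=t-2
          obtain ⟨u, hu⟩ : ∃ u, b 0 + b 1 + b 2 = u + 2 := ⟨b 0 + b 1 + b 2 - 2, by omega⟩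
          have key : (b 0 + b 1 + b 2) * (2*m+4) = u*(2*m+4) + 2*(2*m+4) := by rw [hu]; ring
          exact bullet_contra _ _ b hb 0 (by omega) (2*m+4) u rfl (by linarith) (by linarith)
        · -- b1 ≥ 3 : j=1, k=t-2
          obtain ⟨u, hu⟩ : ∃ u, b 0 + b 1 + b 2 = u + 2 := ⟨b 0 + b 1 + b 2 - 2, by omega⟩
          have key : (b 0 + b 1 + b 2) * (2*m+4) = u*(2*m+4) + 2*(2*m+4) := by rw [hu]; ring
          exact bullet_contra _ _ b hb 1 h1 (2*m+4+1) u rfl (by linarith) (by linarith)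
  · rcases Nat.lt_or_ge (b 1 + 2 * b 2) 3 with hr | hr
    · -- r = 2 : b1 = 0, b2 = 1 : j=2, k=t-3
      have hb1 : b 1 = 0 := by omega
      have hb2 : b 2 = 1 := by omega
      obtain ⟨u, hu⟩ : ∃ u, b 0 + b 1 + b 2 = u + 3 := ⟨b 0 + b 1 + b 2 - 3, by omega⟩
      have key : (b 0 + b 1 + b 2) * (2*m+4) = u*(2*m+4) + 3*(2*m+4) := by rw [hu]; ring
      exact bullet_contra _ _ b hb 2 h2p (2*m+4+2) u rfl (by linarith) (by linarith)
    · rcases Nat.lt_or_ge (b 1 + 2 * b 2) 4 with hr4 | hr4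
      · -- r = 3 : b1 = 1, b2 = 1, b0 = t-2 > 0 : j=0, k=t-2
        have hb1 : b 1 = 1 := by omega
        have hb2 : b 2 = 1 := by omega
        obtain ⟨u, hu⟩ : ∃ u, b 0 + b 1 + b 2 = u + 2 := ⟨b 0 + b 1 + b 2 - 2, by omega⟩
        have key : (b 0 + b 1 + b 2) * (2*m+4) = u*(2*m+4) + 2*(2*m+4) := by rw [hu]; ring
        exact bullet_contra _ _ b hb 0 (by omega) (2*m+4) u rfl (by linarith) (by linarith)
      · -- r ≥ 4 : j=2, k=t-2
        obtain ⟨u, hu⟩ : ∃ u, b 0 + b 1 + b 2 = u + 2 := ⟨b 0 + b 1 + b 2 - 2, by omega⟩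
        have key : (b 0 + b 1 + b 2) * (2*m+4) = u*(2*m+4) + 2*(2*m+4) := by rw [hu]; ring
        exact bullet_contra _ _ b hb 2 h2p (2*m+4+2) u rfl (by linarith) (by linarith)

/-- For `n ≥ 2`: in `Γ = ⟨2n−1, 2n, 2n+1⟩` one has `ω(2n−1) = n` and
`ω(2n) = ω(2n+1) = n+1`; in `Γ = ⟨2n, 2n+1, 2n+2⟩` one has `ω(2n) = n`,
`ω(2n+1) = n+2` and `ω(2n+2) = n+1`. -/
theorem omega_of_interval_generators (n : ℕ) (hn : 2 ≤ n) :
    (omegaNum ![2 * n - 1, 2 * n, 2 * n + 1] (2 * n - 1) = (n : ℕ∞) ∧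
      omegaNum ![2 * n - 1, 2 * n, 2 * n + 1] (2 * n) = ((n + 1 : ℕ) : ℕ∞) ∧
      omegaNum ![2 * n - 1, 2 * n, 2 * n + 1] (2 * n + 1) = ((n + 1 : ℕ) : ℕ∞)) ∧
    (omegaNum ![2 * n, 2 * n + 1, 2 * n + 2] (2 * n) = (n : ℕ∞) ∧
      omegaNum ![2 * n, 2 * n + 1, 2 * n + 2] (2 * n + 1) = ((n + 2 : ℕ) : ℕ∞) ∧
      omegaNum ![2 * n, 2 * n + 1, 2 * n + 2] (2 * n + 2) = ((n + 1 : ℕ) : ℕ∞)) := by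
  obtain ⟨m, rfl⟩ : ∃ m, n = m + 2 := ⟨n - 2, by omega⟩
  have e1 : (![2 * (m+2) - 1, 2 * (m+2), 2 * (m+2) + 1] : Fin 3 → ℕ)
      = ![2*m+3, 2*m+3+1, 2*m+3+2] := by
    funext i; fin_cases i <;> simp <;> omega
  have e2 : (![2 * (m+2), 2 * (m+2) + 1, 2 * (m+2) + 2] : Fin 3 → ℕ)
      = ![2*m+4, 2*m+4+1, 2*m+4+2] := by
    funext i; fin_cases i <;> simp <;> omega
  have v1 : 2 * (m+2) - 1 = 2*m+3 := by omega
  have v4 : 2 * (m+2) + 2 = 2*m+6 := by omega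
  have v3 : 2 * (m+2) + 1 = 2*m+5 := by omega
  have v2 : 2 * (m+2) = 2*m+4 := by omega
  rw [e1, e2, v1, v4, v3, v2]
  refine ⟨⟨?_, ?_, ?_⟩, ?_, ?_, ?_⟩
  · exact omega_eq _ _ _ _ (bulletA m) (by simp) (fun b hb => by have := ubA m b hb; omega)
  · exact omega_eq _ _ _ _ (bulletB m) (by simp) (fun b hb => by have := ubB m b hb; omega)
  · exact omega_eq _ _ _ _ (bulletC m) (by simp) (fun b hb => by have := ubC m b hb; omega)
  · exact omega_eq _ _ _ _ (bulletD m) (by simp) (fun b hb => by have := ubD m b hb; omega)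
  · exact omega_eq _ _ _ _ (bulletE m) (by simp) (fun b hb => by have := ubE m b hb; omega)
  · exact omega_eq _ _ _ _ (bulletF m) (by simp) (fun b hb => by have := ubF m b hb; omega)
end

section
/- In the numerical monoid Γ = ⟨3, 7⟩, for every n ∈ Γ with n ≥ 7, writing n = 3q + r with 0 ≤ r < 3, one has ω(n) = q if r = 0, ω(n) = q + 5 if r = 1, and ω(n) = q + 3 if r = 2. -/
lemma mem_gam2_iff (x : ℕ) :
    x ∈ Gam2 3 7 ↔
      (x % 3 = 0 ∨ (x % 3 = 1 ∧ 7 ≤ x) ∨ (x % 3 = 2 ∧ 14 ≤ x)) := by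
  constructor
  · rintro ⟨a, b, rfl⟩
    obtain ⟨k, hk⟩ : ∃ k, b = 3 * k ∨ b = 3 * k + 1 ∨ b = 3 * k + 2 := ⟨b / 3, by omega⟩
    omega
  · intro h
    rcases h with h | ⟨h, h7⟩ | ⟨h, h14⟩
    · exact ⟨x / 3, 0, by omega⟩
    · exact ⟨(x - 7) / 3, 1, by omega⟩
    · exact ⟨(x - 14) / 3, 2, by omega⟩

lemma omega2_eq_of (n m : ℕ)
    (hex : ∃ a₁ a₂ : ℕ, IsBullet2 3 7 n a₁ a₂ ∧ a₁ + a₂ = m)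
    (hub : ∀ a₁ a₂ : ℕ, IsBullet2 3 7 n a₁ a₂ → a₁ + a₂ ≤ m) :
    omega2 3 7 n = (m : ℕ∞) := by
  apply le_antisymm
  · refine iSup_le fun a => iSup_le fun hb => ?_
    exact_mod_cast hub a.1 a.2 hb
  · obtain ⟨a₁, a₂, hb, hs⟩ := hex
    have h1 : ((a₁ + a₂ : ℕ) : ℕ∞) ≤ omega2 3 7 n := by
      exact le_iSup_of_le (a₁, a₂) (le_iSup_of_le hb le_rfl)
    rw [hs] at h1
    exact h1

lemma bullet_le (n a₁ a₂ : ℕ) (h : IsBullet2 3 7 n a₁ a₂) (hn7 : 7 ≤ n) :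
    a₁ + a₂ ≤ (if n % 3 = 0 then n / 3 else if n % 3 = 1 then n / 3 + 5 else n / 3 + 3) := by
  obtain ⟨⟨d, hd, heq⟩, h1, h2⟩ := h
  rw [mem_gam2_iff] at hd
  have hq1 : a₁ = 0 ∨ d < 3 ∨
      ¬((d - 3) % 3 = 0 ∨ ((d - 3) % 3 = 1 ∧ 7 ≤ d - 3) ∨ ((d - 3) % 3 = 2 ∧ 14 ≤ d - 3)) := by
    rcases Nat.eq_zero_or_pos a₁ with h | h
    · exact Or.inl h
    rcases Nat.lt_or_ge d 3 with h3 | h3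
    · exact Or.inr (Or.inl h3)
    refine Or.inr (Or.inr fun hmem => h1 h ⟨d - 3, (mem_gam2_iff _).2 hmem, by omega⟩)
  have hq2 : a₂ = 0 ∨ d < 7 ∨
      ¬((d - 7) % 3 = 0 ∨ ((d - 7) % 3 = 1 ∧ 7 ≤ d - 7) ∨ ((d - 7) % 3 = 2 ∧ 14 ≤ d - 7)) := by
    rcases Nat.eq_zero_or_pos a₂ with h | h
    · exact Or.inl h
    rcases Nat.lt_or_ge d 7 with h7 | h7
    · exact Or.inr (Or.inl h7)
    refine Or.inr (Or.inr fun hmem => h2 h ⟨d - 7, (mem_gam2_iff _).2 hmem, by omega⟩)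
  split_ifs <;> omega

/-- In `Γ = ⟨3, 7⟩`, for every `n ∈ Γ` with `n ≥ 7`, writing `n = 3q + r` with
`0 ≤ r < 3`: `ω(n) = q` if `r = 0`, `ω(n) = q + 5` if `r = 1`, and
`ω(n) = q + 3` if `r = 2`. -/
theorem omega2_three_seven (n : ℕ) (hn : n ∈ Gam2 3 7) (hn7 : 7 ≤ n)
    (q r : ℕ) (hqr : n = 3 * q + r) (hr : r < 3) :
    omega2 3 7 n =
      if r = 0 then ((q : ℕ) : ℕ∞)
      else if r = 1 then ((q + 5 : ℕ) : ℕ∞)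
      else ((q + 3 : ℕ) : ℕ∞) := by
  interval_cases r
  · simp only [if_pos rfl]
    refine omega2_eq_of n q ⟨q, 0, ⟨⟨0, ⟨0, 0, rfl⟩, by omega⟩, ?_, ?_⟩, by omega⟩ ?_
    · rintro _ ⟨d, hd, heq⟩
      omega
    · intro h; exact absurd h (lt_irrefl 0)
    · intro a₁ a₂ hb
      have := bullet_le n a₁ a₂ hb hn7
      rw [if_pos (by omega : n % 3 = 0)] at this
      omega
  · simp only [if_neg one_ne_zero, if_pos rfl]
    refine omega2_eq_of n (q + 5) ⟨q + 5, 0, ⟨⟨14, ⟨0, 2, by norm_num⟩, by omega⟩, ?_, ?_⟩, by omega⟩ ?_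
    · rintro _ ⟨d, hd, heq⟩
      rw [mem_gam2_iff] at hd
      omega
    · intro h; exact absurd h (lt_irrefl 0)
    · intro a₁ a₂ hb
      have := bullet_le n a₁ a₂ hb hn7
      rw [if_neg (by omega), if_pos (by omega : n % 3 = 1)] at this
      omega
  · simp only [if_neg (by norm_num : (2:ℕ) ≠ 0), if_neg (by norm_num : (2:ℕ) ≠ 1)]
    refine omega2_eq_of n (q + 3) ⟨q + 3, 0, ⟨⟨7, ⟨0, 1, by norm_num⟩, by omega⟩, ?_, ?_⟩, by omega⟩ ?_
    · rintro _ ⟨d, hd, heq⟩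
      rw [mem_gam2_iff] at hd
      omega
    · intro h; exact absurd h (lt_irrefl 0)
    · intro a₁ a₂ hb
      have := bullet_le n a₁ a₂ hb hn7
      rw [if_neg (by omega), if_neg (by omega)] at this
      omega
end
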